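/- arXiv:2205.01856 — 6 statements merged into one kernel-verified Lean document; each statement's English description precedes it below -/
import Mathlib

section
/- Every monomial operator on L²[0,1] is vanishing preserving; that is, if T is a bounded linear operator on L²[0,1] for which there exist a complex number m with nonnegative real part and scalars c₀, c₁, c₂, … such that T xᵏ = c_k x^{k+m} for every nonnegative integer k, then T(L²[s,1]) ⊆ L²[s,1] for every s ∈ [0,1). -/
open MeasureTheory Filter Topology

/-- The measure on `[0,1]` underlying the Hilbert space `L²[0,1]`. -/
noncomputable def mu01 : Measure ℝ := volume.restrict (Set.Icc 0 1)

open scoped ENNReal NNReal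

namespace VanishAux

lemma mu01_univ : mu01 Set.univ = 1 := by
  simp [mu01, Real.volume_Icc]

instance : IsFiniteMeasure mu01 := ⟨by rw [mu01_univ]; exact ENNReal.one_lt_top⟩

instance : mu01.WeaklyRegular := by
  unfold mu01
  exact Measure.WeaklyRegular.restrict_of_measure_ne_top (by simp [Real.volume_Icc])

lemma mu01_apply (A : Set ℝ) : mu01 A = volume (A ∩ Set.Icc 0 1) := by
  rw [mu01, Measure.restrict_apply' measurableSet_Icc]

lemma ae_mem01 : ∀ᵐ x ∂mu01, x ∈ Set.Icc (0:ℝ) 1 := by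
  rw [mu01]; exact ae_restrict_mem measurableSet_Icc

variable {s : ℝ}

lemma map_mu01 (hs : 0 < s) (hs1 : s ≤ 1) :
    Measure.map (fun x => s * x) mu01
      = ENNReal.ofReal s⁻¹ • volume.restrict (Set.Icc 0 s) := by
  have hpre : (fun x : ℝ => s * x) ⁻¹' Set.Icc 0 s = Set.Icc 0 1 := by
    ext x
    simp only [Set.mem_preimage, Set.mem_Icc]
    rw [mul_nonneg_iff_of_pos_left hs, mul_le_iff_le_one_right hs]
  rw [mu01, ← hpre, ← Measure.restrict_map (measurable_const_mul s) measurableSet_Icc,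
    Real.map_volume_mul_left hs.ne', abs_inv, abs_of_pos hs, Measure.restrict_smul]

lemma qmp (hs : 0 < s) (hs1 : s ≤ 1) :
    Measure.QuasiMeasurePreserving (fun x : ℝ => s * x) mu01 mu01 := by
  refine ⟨measurable_const_mul s, ?_⟩
  rw [map_mu01 hs hs1]
  refine Measure.AbsolutelyContinuous.smul_left ?_ _
  rw [mu01]
  exact (Measure.restrict_mono (Set.Icc_subset_Icc_right hs1) le_rfl).absolutelyContinuous

lemma eLpNorm_comp_le (hs : 0 < s) (hs1 : s ≤ 1) {f : ℝ → ℂ}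
    (hasm : AEStronglyMeasurable f (Measure.map (fun x : ℝ => s * x) mu01)) :
    eLpNorm (fun x => f (s * x)) 2 mu01
      ≤ ENNReal.ofReal s⁻¹ ^ ((1:ℝ≥0∞)/2).toReal * eLpNorm f 2 mu01 := by
  have h1 : eLpNorm (fun x => f (s * x)) 2 mu01
      = eLpNorm f 2 (Measure.map (fun x : ℝ => s * x) mu01) :=
    (eLpNorm_map_measure hasm (qmp hs hs1).aemeasurable).symm
  rw [h1, map_mu01 hs hs1,
    eLpNorm_smul_measure_of_ne_zero (by simp [hs, inv_pos.mpr hs]) f 2 _, smul_eq_mul]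
  gcongr
  rw [mu01]
  exact Measure.restrict_mono (Set.Icc_subset_Icc_right hs1) le_rfl

lemma memLp_comp (hs : 0 < s) (hs1 : s ≤ 1) (f : Lp ℂ 2 mu01) :
    MemLp (fun x => (f : ℝ → ℂ) (s * x)) 2 mu01 := by
  have hasm : AEStronglyMeasurable (f : ℝ → ℂ) (Measure.map (fun x : ℝ => s * x) mu01) :=
    (Lp.aestronglyMeasurable f).mono_ac (qmp hs hs1).absolutelyContinuous
  refine ⟨(Lp.aestronglyMeasurable f).comp_quasiMeasurePreserving (qmp hs hs1), ?_⟩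
  refine lt_of_le_of_lt (eLpNorm_comp_le hs hs1 hasm) ?_
  exact ENNReal.mul_lt_top
    (ENNReal.rpow_lt_top_of_nonneg (by positivity) ENNReal.ofReal_ne_top)
    (Lp.eLpNorm_lt_top f)

end VanishAux

namespace VanishAux

variable {s : ℝ}

/-- The dilation (composition) operator `f ↦ f (s ·)` as a linear map on `L²[0,1]`. -/
noncomputable def RsL (hs : 0 < s) (hs1 : s ≤ 1) : Lp ℂ 2 mu01 →ₗ[ℂ] Lp ℂ 2 mu01 where
  toFun f := (memLp_comp hs hs1 f).toLp _
  map_add' f g := by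
    apply Lp.ext
    filter_upwards [MemLp.coeFn_toLp (memLp_comp hs hs1 (f + g)),
      Lp.coeFn_add ((memLp_comp hs hs1 f).toLp _) ((memLp_comp hs hs1 g).toLp _),
      MemLp.coeFn_toLp (memLp_comp hs hs1 f), MemLp.coeFn_toLp (memLp_comp hs hs1 g),
      (qmp hs hs1).ae_eq (Lp.coeFn_add f g)] with x h1 h2 h3 h4 h5
    rw [h1, h2, Pi.add_apply, h3, h4]
    exact h5
  map_smul' a f := by
    apply Lp.ext
    filter_upwards [MemLp.coeFn_toLp (memLp_comp hs hs1 (a • f)),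
      Lp.coeFn_smul a ((memLp_comp hs hs1 f).toLp _),
      MemLp.coeFn_toLp (memLp_comp hs hs1 f),
      (qmp hs hs1).ae_eq (Lp.coeFn_smul a f)] with x h1 h2 h3 h5
    simp only [RingHom.id_apply]
    rw [h1, h2, Pi.smul_apply, h3]
    exact h5

/-- The dilation operator as a continuous linear map. -/
noncomputable def Rs (hs : 0 < s) (hs1 : s ≤ 1) : Lp ℂ 2 mu01 →L[ℂ] Lp ℂ 2 mu01 :=
  (RsL hs hs1).mkContinuousOfExistsBound <| by
    refine ⟨(ENNReal.ofReal s⁻¹ ^ ((1:ℝ≥0∞)/2).toReal).toReal, fun f => ?_⟩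
    have hasm : AEStronglyMeasurable (f : ℝ → ℂ) (Measure.map (fun x : ℝ => s * x) mu01) :=
      (Lp.aestronglyMeasurable f).mono_ac (qmp hs hs1).absolutelyContinuous
    have hb := eLpNorm_comp_le hs hs1 hasm
    have hfin : ENNReal.ofReal s⁻¹ ^ ((1:ℝ≥0∞)/2).toReal * eLpNorm (f : ℝ → ℂ) 2 mu01 ≠ ⊤ :=
      ENNReal.mul_ne_top
        (ENNReal.rpow_lt_top_of_nonneg (by positivity) ENNReal.ofReal_ne_top).ne
        (Lp.eLpNorm_ne_top f)
    show ‖(memLp_comp hs hs1 f).toLp _‖ ≤ _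
    rw [Lp.norm_toLp, Lp.norm_def, ← ENNReal.toReal_mul]
    exact ENNReal.toReal_mono hfin hb

lemma Rs_coeFn (hs : 0 < s) (hs1 : s ≤ 1) (f : Lp ℂ 2 mu01) :
    (Rs hs hs1 f : ℝ → ℂ) =ᵐ[mu01] fun x => (f : ℝ → ℂ) (s * x) :=
  MemLp.coeFn_toLp (memLp_comp hs hs1 f)

end VanishAux

namespace VanishAux

lemma coeFn_sum_smul (mono : ℕ → Lp ℂ 2 mu01)
    (hmono : ∀ k : ℕ, (mono k : ℝ → ℂ) =ᵐ[mu01] fun x => (x : ℂ) ^ k)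
    (F : Finset ℕ) (a : ℕ → ℂ) :
    ((∑ k ∈ F, a k • mono k : Lp ℂ 2 mu01) : ℝ → ℂ)
      =ᵐ[mu01] fun x => ∑ k ∈ F, a k * (x : ℂ) ^ k := by
  classical
  induction F using Finset.induction_on with
  | empty => simp only [Finset.sum_empty]; exact Lp.coeFn_zero ℂ 2 mu01
  | @insert k F hk ih =>
    rw [Finset.sum_insert hk]
    filter_upwards [Lp.coeFn_add (a k • mono k) (∑ j ∈ F, a j • mono j),
      Lp.coeFn_smul (a k) (mono k), ih, hmono k] with x h1 h2 h3 h4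
    rw [h1, Pi.add_apply, h2, Pi.smul_apply, h4, h3, Finset.sum_insert hk, smul_eq_mul]

lemma dense_span_mono (mono : ℕ → Lp ℂ 2 mu01)
    (hmono : ∀ k : ℕ, (mono k : ℝ → ℂ) =ᵐ[mu01] fun x => (x : ℂ) ^ k) :
    Dense ((Submodule.span ℂ (Set.range mono) : Submodule ℂ (Lp ℂ 2 mu01))
      : Set (Lp ℂ 2 mu01)) := by
  intro f
  rw [Metric.mem_closure_iff]
  intro ε hε
  -- Step 1: approximate by a bounded continuous function
  have hd := Lp.boundedContinuousFunction_dense ℂ mu01 (by norm_num : (2:ℝ≥0∞) ≠ ∞)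
  obtain ⟨G, hGmem, hGd⟩ := Metric.mem_closure_iff.mp (hd f) (ε/2) (by positivity)
  obtain ⟨g, hg⟩ := Lp.mem_boundedContinuousFunction_iff.mp hGmem
  have hGg : (G : ℝ → ℂ) =ᵐ[mu01] g := by
    have h := g.toContinuousMap.coeFn_toAEEqFun mu01
    rw [hg] at h
    exact h
  -- Step 2: Weierstrass approximation of real and imaginary parts
  set δ := ε/8 with hδdef
  have hδ0 : 0 < δ := by positivity
  set gre : C(Set.Icc (0:ℝ) 1, ℝ) :=
    ⟨fun x => (g x).re, Complex.continuous_re.comp (g.continuous.comp continuous_subtype_val)⟩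
  set gim : C(Set.Icc (0:ℝ) 1, ℝ) :=
    ⟨fun x => (g x).im, Complex.continuous_im.comp (g.continuous.comp continuous_subtype_val)⟩
  have hcl : closure (polynomialFunctions (Set.Icc (0:ℝ) 1)
      : Set C(Set.Icc (0:ℝ) 1, ℝ)) = Set.univ := by
    rw [← Subalgebra.topologicalClosure_coe, polynomialFunctions_closure_eq_top]
    rfl
  obtain ⟨P1c, hP1mem, hP1d⟩ := Metric.mem_closure_iff.mp
    (by rw [hcl]; trivial : gre ∈ closure (polynomialFunctions (Set.Icc (0:ℝ) 1)
      : Set C(Set.Icc (0:ℝ) 1, ℝ))) δ hδ0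
  obtain ⟨P2c, hP2mem, hP2d⟩ := Metric.mem_closure_iff.mp
    (by rw [hcl]; trivial : gim ∈ closure (polynomialFunctions (Set.Icc (0:ℝ) 1)
      : Set C(Set.Icc (0:ℝ) 1, ℝ))) δ hδ0
  rw [show (polynomialFunctions (Set.Icc (0:ℝ) 1) : Set C(Set.Icc (0:ℝ) 1, ℝ))
      = Set.range (Polynomial.toContinuousMapOnAlgHom (Set.Icc (0:ℝ) 1)) from
      polynomialFunctions_coe _] at hP1mem hP2mem
  obtain ⟨p1, rfl⟩ := hP1mem
  obtain ⟨p2, rfl⟩ := hP2mem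
  -- Step 3: the complex polynomial combination, as an element of the span
  set N := max (p1.natDegree + 1) (p2.natDegree + 1) with hN
  set a : ℕ → ℂ := fun k => (p1.coeff k : ℂ) + Complex.I * (p2.coeff k : ℂ) with ha
  set P : Lp ℂ 2 mu01 := ∑ k ∈ Finset.range N, a k • mono k with hP
  have hPmem : P ∈ Submodule.span ℂ (Set.range mono) :=
    Submodule.sum_mem _ fun k _ =>
      Submodule.smul_mem _ _ (Submodule.subset_span ⟨k, rfl⟩)
  -- Step 4: pointwise bound on [0,1]
  have hb : ∀ x ∈ Set.Icc (0:ℝ) 1,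
      ‖g x - ∑ k ∈ Finset.range N, a k * (x : ℂ) ^ k‖ ≤ 2 * δ := by
    intro x hx
    have h1 : ((p1.eval x : ℝ) : ℂ) = ∑ k ∈ Finset.range N, (p1.coeff k : ℂ) * (x:ℂ)^k := by
      rw [Polynomial.eval_eq_sum_range' (lt_of_lt_of_le (Nat.lt_succ_self _)
        (le_max_left _ _)) x]
      push_cast
      rfl
    have h2 : ((p2.eval x : ℝ) : ℂ) = ∑ k ∈ Finset.range N, (p2.coeff k : ℂ) * (x:ℂ)^k := by
      rw [Polynomial.eval_eq_sum_range' (lt_of_lt_of_le (Nat.lt_succ_self _)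
        (le_max_right _ _)) x]
      push_cast
      rfl
    have hsum : (∑ k ∈ Finset.range N, a k * (x : ℂ) ^ k)
        = ((p1.eval x : ℝ) : ℂ) + Complex.I * ((p2.eval x : ℝ) : ℂ) := by
      rw [h1, h2, Finset.mul_sum, ← Finset.sum_add_distrib]
      apply Finset.sum_congr rfl
      intro k _
      rw [ha]
      ring
    rw [hsum]
    set z : ℂ := g x - (((p1.eval x : ℝ) : ℂ) + Complex.I * ((p2.eval x : ℝ) : ℂ)) with hz
    have hzre : z.re = gre ⟨x, hx⟩ - (Polynomial.toContinuousMapOnAlgHom _ p1) ⟨x, hx⟩ := by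
      simp [hz, gre, Complex.add_re, Complex.sub_re]
    have hzim : z.im = gim ⟨x, hx⟩ - (Polynomial.toContinuousMapOnAlgHom _ p2) ⟨x, hx⟩ := by
      simp [hz, gim, Complex.add_im, Complex.sub_im]
    calc ‖z‖ ≤ |z.re| + |z.im| := Complex.norm_le_abs_re_add_abs_im z
      _ ≤ δ + δ := by
          refine add_le_add ?_ ?_
          · rw [hzre, ← Real.dist_eq]
            exact le_of_lt (lt_of_le_of_lt (ContinuousMap.dist_apply_le_dist _) hP1d)
          · rw [hzim, ← Real.dist_eq]
            exact le_of_lt (lt_of_le_of_lt (ContinuousMap.dist_apply_le_dist _) hP2d)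
      _ = 2 * δ := by ring
  -- Step 5: L² estimate
  have hdiff : ((G - P : Lp ℂ 2 mu01) : ℝ → ℂ)
      =ᵐ[mu01] fun x => g x - ∑ k ∈ Finset.range N, a k * (x : ℂ) ^ k := by
    filter_upwards [Lp.coeFn_sub G P, hGg, coeFn_sum_smul mono hmono (Finset.range N) a]
      with x h1 h2 h3
    rw [h1, Pi.sub_apply, h2, h3]
  have hbound : eLpNorm (fun x => g x - ∑ k ∈ Finset.range N, a k * (x : ℂ) ^ k) 2 mu01
      ≤ mu01 Set.univ ^ (2:ℝ≥0∞).toReal⁻¹ * ENNReal.ofReal (2 * δ) :=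
    eLpNorm_le_of_ae_bound (by filter_upwards [ae_mem01] with x hx using hb x hx)
  have hnorm : ‖G - P‖ ≤ 2 * δ := by
    rw [Lp.norm_def, eLpNorm_congr_ae hdiff]
    calc (eLpNorm _ 2 mu01).toReal
        ≤ (mu01 Set.univ ^ (2:ℝ≥0∞).toReal⁻¹ * ENNReal.ofReal (2 * δ)).toReal := by
          refine ENNReal.toReal_mono ?_ hbound
          rw [mu01_univ, ENNReal.one_rpow, one_mul]
          exact ENNReal.ofReal_ne_top
      _ = 2 * δ := by
          rw [mu01_univ, ENNReal.one_rpow, one_mul, ENNReal.toReal_ofReal (by positivity)]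
  refine ⟨P, hPmem, ?_⟩
  calc dist f P ≤ dist f G + dist G P := dist_triangle f G P
    _ ≤ ε/2 + 2 * δ := by
        refine add_le_add (le_of_lt hGd) ?_
        rw [dist_eq_norm]
        exact hnorm
    _ < ε := by rw [hδdef]; linarith

end VanishAux

/-- **Every monomial operator is vanishing preserving.**
`T` is a bounded operator on `L²[0,1]`, `m` is a complex number with nonnegative
real part, and `c k` are scalars such that `T xᵏ = c k • x^(k+m)` for all `k`
(the monomial `xᵏ`, as an element of `L²[0,1]`, is represented by `mono k`).
Then for every `s ∈ [0,1)`, `T` maps `L²[s,1]` (the functions vanishing a.e. on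
`[0,s]`) into `L²[s,1]`. -/
theorem monomial_operator_vanishing_preserving
    (T : Lp ℂ 2 mu01 →L[ℂ] Lp ℂ 2 mu01)
    (m : ℂ) (hm : 0 ≤ m.re) (c : ℕ → ℂ)
    (mono : ℕ → Lp ℂ 2 mu01)
    (hmono : ∀ k : ℕ, (mono k : ℝ → ℂ) =ᵐ[mu01] fun x => (x : ℂ) ^ k)
    (hT : ∀ k : ℕ, (T (mono k) : ℝ → ℂ) =ᵐ[mu01]
      fun x => c k * (x : ℂ) ^ ((k : ℂ) + m)) :
    ∀ s ∈ Set.Ico (0 : ℝ) 1, ∀ f : Lp ℂ 2 mu01,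
      (∀ᵐ x ∂mu01, x ∈ Set.Icc 0 s → f x = 0) →
      (∀ᵐ x ∂mu01, x ∈ Set.Icc 0 s → T f x = 0) := by
  open VanishAux in
  rintro s ⟨hs0, hs1'⟩ f hf
  rcases eq_or_lt_of_le hs0 with rfl | hs
  · -- trivial case s = 0
    have h0 : mu01 ({0} : Set ℝ) = 0 := by
      rw [mu01_apply]
      exact measure_mono_null Set.inter_subset_left (by simp)
    have : ∀ᵐ x ∂mu01, x ∉ ({0} : Set ℝ) := by
      rw [ae_iff]
      simpa using h0
    filter_upwards [this] with x hx hmem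
    exact absurd (by simpa using hmem) (by simpa using hx)
  · have hs1 : s ≤ 1 := le_of_lt hs1'
    have hsC : (s : ℂ) ≠ 0 := Complex.ofReal_ne_zero.mpr hs.ne'
    -- action of Rs on monomials
    have hRmono : ∀ k : ℕ, Rs hs hs1 (mono k) = ((s:ℂ) ^ k) • mono k := by
      intro k
      apply Lp.ext
      filter_upwards [Rs_coeFn hs hs1 (mono k), (qmp hs hs1).ae_eq (hmono k),
        Lp.coeFn_smul ((s:ℂ) ^ k) (mono k), hmono k] with x h1 h2 h3 h4
      rw [h1, h3, Pi.smul_apply, h4, smul_eq_mul]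
      have h2' : (mono k : ℝ → ℂ) (s * x) = ((s * x : ℝ) : ℂ) ^ k := h2
      rw [h2']
      push_cast
      ring
    -- action of Rs on the images of monomials
    have hRT : ∀ k : ℕ, Rs hs hs1 (T (mono k)) = ((s:ℂ) ^ ((k:ℂ) + m)) • T (mono k) := by
      intro k
      apply Lp.ext
      filter_upwards [Rs_coeFn hs hs1 (T (mono k)), (qmp hs hs1).ae_eq (hT k),
        Lp.coeFn_smul ((s:ℂ) ^ ((k:ℂ) + m)) (T (mono k)), hT k, ae_mem01]
        with x h1 h2 h3 h4 hx
      rw [h1, h3, Pi.smul_apply, h4, smul_eq_mul]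
      have h2' : (T (mono k) : ℝ → ℂ) (s * x) = c k * ((s * x : ℝ) : ℂ) ^ ((k:ℂ) + m) := h2
      rw [h2', Complex.ofReal_mul, Complex.mul_cpow_ofReal_nonneg hs.le hx.1]
      ring
    -- the intertwining identity
    have key : ((s:ℂ) ^ m) • (T.comp (Rs hs hs1)) = (Rs hs hs1).comp T := by
      apply ContinuousLinearMap.ext_on (dense_span_mono mono hmono)
      rintro _ ⟨k, rfl⟩
      simp only [ContinuousLinearMap.smul_apply, ContinuousLinearMap.comp_apply]
      rw [hRmono k, T.map_smul, hRT k, smul_smul]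
      congr 1
      rw [← Complex.cpow_natCast, ← Complex.cpow_add _ _ hsC, add_comm]
    -- f vanishes on [0,s] implies Rs f = 0
    have hRf : Rs hs hs1 f = 0 := by
      apply Lp.ext
      filter_upwards [Rs_coeFn hs hs1 f, (qmp hs hs1).ae hf, ae_mem01,
        Lp.coeFn_zero ℂ 2 mu01] with x h1 h2 hx h0
      rw [h1, h0]
      show (f : ℝ → ℂ) (s * x) = 0
      exact h2 ⟨mul_nonneg hs.le hx.1, mul_le_of_le_one_right hs.le hx.2⟩
    -- hence Rs (T f) = 0
    have h0 : Rs hs hs1 (T f) = 0 := by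
      have hkey := congrArg (fun L : Lp ℂ 2 mu01 →L[ℂ] Lp ℂ 2 mu01 => L f) key
      simp only [ContinuousLinearMap.smul_apply, ContinuousLinearMap.comp_apply] at hkey
      rw [hRf, map_zero, smul_zero] at hkey
      exact hkey.symm
    -- translate back: T f vanishes a.e. on [0,s]
    have hae : ∀ᵐ x ∂mu01, (T f : ℝ → ℂ) (s * x) = 0 := by
      have h1 := Rs_coeFn hs hs1 (T f)
      rw [h0] at h1
      filter_upwards [h1, Lp.coeFn_zero ℂ 2 mu01] with x hx1 hx2
      have : (fun x => (T f : ℝ → ℂ) (s * x)) x = (0 : ℝ → ℂ) x := (hx1.symm.trans hx2 : _)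
      simpa using this
    -- measure transfer
    have hmeasu : MeasurableSet {x : ℝ | (T f : ℝ → ℂ) x ≠ 0} := by
      have hsm : StronglyMeasurable (T f : ℝ → ℂ) := Lp.stronglyMeasurable (T f)
      exact (hsm.measurable (measurableSet_singleton 0)).compl
    set S : Set ℝ := Set.Icc 0 s ∩ {x : ℝ | (T f : ℝ → ℂ) x ≠ 0} with hSdef
    have hSmeas : MeasurableSet S := measurableSet_Icc.inter hmeasu
    have hprenull : volume ((fun x : ℝ => s * x) ⁻¹' S) = 0 := by
      have h2 : mu01 {x : ℝ | ¬ (T f : ℝ → ℂ) (s * x) = 0} = 0 := ae_iff.mp hae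
      rw [mu01_apply] at h2
      refine measure_mono_null ?_ h2
      rintro x ⟨hxs, hxne⟩
      exact ⟨hxne, (mul_nonneg_iff_of_pos_left hs).mp hxs.1,
        (mul_le_iff_le_one_right hs).mp hxs.2⟩
    have hSnull : volume S = 0 := by
      have hmapS : Measure.map (fun x : ℝ => s * x) volume S
          = volume ((fun x : ℝ => s * x) ⁻¹' S) :=
        Measure.map_apply (measurable_const_mul s) hSmeas
      rw [Real.map_volume_mul_left hs.ne', hprenull, Measure.smul_apply,
        smul_eq_mul] at hmapS
      have hne : ENNReal.ofReal |s⁻¹| ≠ 0 := by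
        rw [abs_of_pos (inv_pos.mpr hs)]
        exact (ENNReal.ofReal_pos.mpr (inv_pos.mpr hs)).ne'
      rcases mul_eq_zero.mp hmapS with h | h
      · exact absurd h hne
      · exact h
    rw [ae_iff, mu01_apply]
    refine measure_mono_null ?_ hSnull
    rintro x ⟨hx, _⟩
    rw [Set.mem_setOf_eq, _root_.not_imp] at hx
    exact ⟨hx.1, hx.2⟩
end

section
/- (Hardy's inequality in L²[0,1]) If f is a square-integrable measurable function on [0,1], then the function Hf(x) = (1/x)∫₀ˣ f(t) dt is measurable and ∫₀¹ |Hf(x)|² dx ≤ 4 ∫₀¹ |f(x)|² dx; equivalently, the Hardy operator H is bounded on L²[0,1] with ‖H‖ ≤ 2. -/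
open MeasureTheory Filter Topology
open ENNReal NNReal



lemma hardy_aux_rpow {r a b : ℝ} (hab : a ≤ b)
    (h : -1 < r ∨ r ≠ -1 ∧ (0:ℝ) ∉ Set.uIcc a b) (ha : 0 ≤ a) :
    ∫⁻ t in Set.Ioc a b, ENNReal.ofReal (t ^ r) =
      ENNReal.ofReal ((b ^ (r + 1) - a ^ (r + 1)) / (r + 1)) := by
  have hint : IntervalIntegrable (fun t : ℝ => t ^ r) volume a b := by
    rcases h with h | h
    · exact intervalIntegral.intervalIntegrable_rpow' h
    · exact intervalIntegral.intervalIntegrable_rpow (Or.inr h.2)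
  have hio : IntegrableOn (fun t : ℝ => t ^ r) (Set.Ioc a b) volume :=
    (intervalIntegrable_iff_integrableOn_Ioc_of_le hab).1 hint
  have hnn : 0 ≤ᵐ[volume.restrict (Set.Ioc a b)] fun t : ℝ => t ^ r :=
    (ae_restrict_iff' measurableSet_Ioc).2 (ae_of_all _ fun t ht =>
      Real.rpow_nonneg (le_trans ha ht.1.le) r)
  rw [← ofReal_integral_eq_lintegral_ofReal hio hnn]
  congr 1
  rw [← intervalIntegral.integral_of_le hab, integral_rpow h]

lemma hardy_aux_tonelli (φ : ℝ → ℝ≥0∞)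
    (hφ : AEMeasurable φ (volume.restrict (Set.Ioc (0:ℝ) 1))) :
    (∫⁻ x in Set.Ioc (0:ℝ) 1, ENNReal.ofReal (2 * x ^ (-(3:ℝ)/2)) *
        ∫⁻ t in Set.Ioc 0 x, φ t * ENNReal.ofReal (t ^ ((1:ℝ)/2))) ≤
      4 * ∫⁻ t in Set.Ioc (0:ℝ) 1, φ t := by
  set μ := volume.restrict (Set.Ioc (0:ℝ) 1) with hμ
  set c : ℝ → ℝ≥0∞ := fun x => ENNReal.ofReal (2 * x ^ (-(3:ℝ)/2)) with hc
  set ψ : ℝ → ℝ≥0∞ := fun t => φ t * ENNReal.ofReal (t ^ ((1:ℝ)/2)) with hψ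
  set S : Set (ℝ × ℝ) := {p : ℝ × ℝ | p.2 ∈ Set.Ioc 0 p.1} with hS
  have hSm : MeasurableSet S := by
    have : S = {p : ℝ × ℝ | 0 < p.2} ∩ {p : ℝ × ℝ | p.2 ≤ p.1} := rfl
    rw [this]
    exact (measurableSet_lt measurable_const measurable_snd).inter
      (measurableSet_le measurable_snd measurable_fst)
  set G : ℝ → ℝ → ℝ≥0∞ := fun x t => c x * ψ t * S.indicator 1 (x, t) with hG
  have hcm : Measurable c := by fun_prop
  have hψm : AEMeasurable ψ μ := by
    apply hφ.mul
    fun_prop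
  have hmG : AEMeasurable (Function.uncurry G) (μ.prod μ) := by
    refine AEMeasurable.mul (AEMeasurable.mul ?_ ?_) ?_
    · exact (hcm.comp measurable_fst).aemeasurable
    · exact hψm.comp_quasiMeasurePreserving Measure.quasiMeasurePreserving_snd
    · exact ((measurable_const.indicator hSm).comp measurable_id).aemeasurable
  have step1 : (∫⁻ x in Set.Ioc (0:ℝ) 1, c x *
      ∫⁻ t in Set.Ioc 0 x, ψ t) = ∫⁻ x, ∫⁻ t, G x t ∂μ ∂μ := by
    refine setLIntegral_congr_fun measurableSet_Ioc (fun x hx => ?_)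
    have hsub : Set.Ioc (0:ℝ) x ⊆ Set.Ioc (0:ℝ) 1 := Set.Ioc_subset_Ioc_right hx.2
    have hres : volume.restrict (Set.Ioc (0:ℝ) x) = μ.restrict (Set.Ioc (0:ℝ) x) := by
      rw [hμ, Measure.restrict_restrict measurableSet_Ioc, Set.inter_eq_left.2 hsub]
    have hind : ∀ t : ℝ, G x t = c x * (Set.Ioc (0:ℝ) x).indicator ψ t := by
      intro t
      by_cases ht : t ∈ Set.Ioc (0:ℝ) x
      · have h2 : (x, t) ∈ S := ht
        simp [hG, Set.indicator_of_mem ht, Set.indicator_of_mem h2]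
      · have h2 : (x, t) ∉ S := ht
        simp [hG, Set.indicator_of_notMem ht, Set.indicator_of_notMem h2]
    calc c x * ∫⁻ t in Set.Ioc 0 x, ψ t
        = c x * ∫⁻ t in Set.Ioc 0 x, ψ t ∂μ := by rw [hres]
      _ = c x * ∫⁻ t, (Set.Ioc (0:ℝ) x).indicator ψ t ∂μ := by
          rw [lintegral_indicator measurableSet_Ioc]
      _ = ∫⁻ t, c x * (Set.Ioc (0:ℝ) x).indicator ψ t ∂μ := by
          rw [lintegral_const_mul' _ _ ENNReal.ofReal_ne_top]
      _ = ∫⁻ t, G x t ∂μ := lintegral_congr fun t => (hind t).symm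
  rw [step1, lintegral_lintegral_swap hmG]
  have step2 : ∀ᵐ t ∂μ, (∫⁻ x, G x t ∂μ) ≤ 4 * φ t := by
    rw [hμ]
    refine (ae_restrict_iff' measurableSet_Ioc).2 (ae_of_all _ fun t ht => ?_)
    have ht0 : 0 < t := ht.1
    have hind : ∀ x : ℝ, G x t = ψ t * (Set.Ici t).indicator c x := by
      intro x
      by_cases hx : t ≤ x
      · have h2 : (x, t) ∈ S := ⟨ht0, hx⟩
        simp only [hG, Set.indicator_of_mem (Set.mem_Ici.2 hx),
          Set.indicator_of_mem h2, Pi.one_apply, mul_one]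
        ring
      · have h2 : (x, t) ∉ S := fun h => hx h.2
        simp [hG, Set.indicator_of_notMem (fun h => hx (Set.mem_Ici.1 h)),
          Set.indicator_of_notMem h2]
    have hIcc : Set.Ici t ∩ Set.Ioc (0:ℝ) 1 = Set.Icc t 1 := by
      ext y
      constructor
      · rintro ⟨h1, _, h3⟩; exact ⟨h1, h3⟩
      · rintro ⟨h1, h2⟩; exact ⟨h1, lt_of_lt_of_le ht0 h1, h2⟩
    have hval : (∫⁻ x in Set.Ioc t 1, c x) =
        ENNReal.ofReal 2 * ENNReal.ofReal (2 * t ^ (-(1:ℝ)/2) - 2) := by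
      have hc2 : ∀ x : ℝ, c x = ENNReal.ofReal 2 * ENNReal.ofReal (x ^ (-(3:ℝ)/2)) := by
        intro x; rw [hc]; rw [← ENNReal.ofReal_mul (by norm_num : (0:ℝ) ≤ 2)]
      simp only [hc2]
      rw [lintegral_const_mul' _ _ ENNReal.ofReal_ne_top]
      congr 1
      have h0 : (0:ℝ) ∉ Set.uIcc t 1 := by
        rw [Set.uIcc_of_le ht.2]
        rintro ⟨h1, -⟩
        exact absurd (lt_of_lt_of_le ht0 h1) (lt_irrefl 0)
      rw [hardy_aux_rpow ht.2 (Or.inr ⟨by norm_num, h0⟩) ht0.le]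
      congr 1
      have hexp : (-(3:ℝ)/2 + 1) = -(1:ℝ)/2 := by norm_num
      rw [hexp, Real.one_rpow]
      ring
    calc (∫⁻ x, G x t ∂μ) = ψ t * ∫⁻ x, (Set.Ici t).indicator c x ∂μ := by
          rw [← lintegral_const_mul _ (hcm.indicator measurableSet_Ici)]
          exact lintegral_congr fun x => hind x
      _ = ψ t * ∫⁻ x in Set.Ici t, c x ∂μ := by rw [lintegral_indicator measurableSet_Ici]
      _ = ψ t * ∫⁻ x in Set.Ioc t 1, c x := by
          rw [hμ, Measure.restrict_restrict measurableSet_Ici, hIcc,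
            ← Measure.restrict_congr_set Ioc_ae_eq_Icc]
      _ ≤ ψ t * (ENNReal.ofReal 2 * ENNReal.ofReal (2 * t ^ (-(1:ℝ)/2))) := by
          rw [hval]
          gcongr
          linarith
      _ = 4 * φ t := by
          have h1 : ENNReal.ofReal (t ^ ((1:ℝ)/2)) *
              (ENNReal.ofReal 2 * ENNReal.ofReal (2 * t ^ (-(1:ℝ)/2))) = 4 := by
            rw [← ENNReal.ofReal_mul (by norm_num : (0:ℝ) ≤ 2),
              ← ENNReal.ofReal_mul (Real.rpow_nonneg ht0.le _)]
            have h2 : t ^ ((1:ℝ)/2) * (2 * (2 * t ^ (-(1:ℝ)/2))) = 4 := by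
              have h3 : t ^ ((1:ℝ)/2) * t ^ (-(1:ℝ)/2) = 1 := by
                rw [← Real.rpow_add ht0]; norm_num
              nlinarith [h3]
            rw [h2, show (4:ℝ) = ((4:ℕ):ℝ) by norm_num, ENNReal.ofReal_natCast]
            norm_num
          simp only [hψ]
          rw [mul_assoc, h1, mul_comm]
  calc (∫⁻ t, ∫⁻ x, G x t ∂μ ∂μ) ≤ ∫⁻ t, 4 * φ t ∂μ := lintegral_mono_ae step2
    _ = 4 * ∫⁻ t, φ t ∂μ := lintegral_const_mul' _ _ (by norm_num)

lemma hardy_aux_pointwise (f : ℝ → ℂ) {x : ℝ} (hx : x ∈ Set.Ioc (0:ℝ) 1)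
    (hfm : AEMeasurable (fun t => (‖f t‖₊ : ℝ≥0∞)) (volume.restrict (Set.Ioc 0 x))) :
    (‖(x:ℂ)⁻¹ * ∫ t in (0:ℝ)..x, f t‖₊ : ℝ≥0∞) ^ 2 ≤
      ENNReal.ofReal (2 * x ^ (-(3:ℝ)/2)) *
        ∫⁻ t in Set.Ioc 0 x, (‖f t‖₊ : ℝ≥0∞)^2 * ENNReal.ofReal (t ^ ((1:ℝ)/2)) := by
  have hx0 : 0 < x := hx.1
  set A : ℝ≥0∞ := ∫⁻ t in Set.Ioc 0 x, (‖f t‖₊ : ℝ≥0∞)^2 * ENNReal.ofReal (t ^ ((1:ℝ)/2))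
    with hA
  set g1 : ℝ → ℝ≥0∞ := fun t => (‖f t‖₊ : ℝ≥0∞) * ENNReal.ofReal (t ^ ((1:ℝ)/4)) with hg1
  set g2 : ℝ → ℝ≥0∞ := fun t => ENNReal.ofReal (t ^ (-(1:ℝ)/4)) with hg2
  have hpq : Real.HolderConjugate 2 2 := Real.HolderConjugate.two_two
  have hg1m : AEMeasurable g1 (volume.restrict (Set.Ioc 0 x)) := by
    apply hfm.mul; fun_prop
  have hg2m : AEMeasurable g2 (volume.restrict (Set.Ioc 0 x)) := by fun_prop
  -- Step 1: norm of integral ≤ lintegral of norm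
  have step1 : (‖∫ t in (0:ℝ)..x, f t‖₊ : ℝ≥0∞) ≤
      ∫⁻ t in Set.Ioc 0 x, (‖f t‖₊ : ℝ≥0∞) := by
    rw [intervalIntegral.integral_of_le hx0.le]
    exact enorm_integral_le_lintegral_enorm _
  -- factorization a.e.
  have e1 : (∫⁻ t in Set.Ioc 0 x, (‖f t‖₊ : ℝ≥0∞)) =
      ∫⁻ t in Set.Ioc 0 x, g1 t * g2 t := by
    refine lintegral_congr_ae ((ae_restrict_iff' measurableSet_Ioc).2
      (ae_of_all _ fun t ht => ?_))
    simp only [hg1, hg2]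
    rw [mul_assoc, ← ENNReal.ofReal_mul (Real.rpow_nonneg ht.1.le _),
      ← Real.rpow_add ht.1]
    norm_num
  have e2 : (∫⁻ t in Set.Ioc 0 x, g1 t ^ (2:ℝ)) = A := by
    refine lintegral_congr_ae ((ae_restrict_iff' measurableSet_Ioc).2
      (ae_of_all _ fun t ht => ?_))
    simp only [hg1]
    rw [ENNReal.mul_rpow_of_nonneg _ _ (by norm_num : (0:ℝ) ≤ 2),
      ENNReal.ofReal_rpow_of_nonneg (Real.rpow_nonneg ht.1.le _) (by norm_num : (0:ℝ) ≤ 2),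
      ← Real.rpow_mul ht.1.le,
      show ((1:ℝ)/4 * 2) = (1:ℝ)/2 by norm_num]
    congr 1
    rw [← ENNReal.rpow_natCast (‖f t‖₊ : ℝ≥0∞) 2]
    norm_num
  have e3 : (∫⁻ t in Set.Ioc 0 x, g2 t ^ (2:ℝ)) = ENNReal.ofReal (2 * x ^ ((1:ℝ)/2)) := by
    have : (∫⁻ t in Set.Ioc 0 x, g2 t ^ (2:ℝ)) =
        ∫⁻ t in Set.Ioc 0 x, ENNReal.ofReal (t ^ (-(1:ℝ)/2)) := by
      refine lintegral_congr_ae ((ae_restrict_iff' measurableSet_Ioc).2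
        (ae_of_all _ fun t ht => ?_))
      simp only [hg2]
      rw [ENNReal.ofReal_rpow_of_nonneg (Real.rpow_nonneg ht.1.le _)
        (by norm_num : (0:ℝ) ≤ 2), ← Real.rpow_mul ht.1.le]
      norm_num
    rw [this, hardy_aux_rpow hx0.le (Or.inl (by norm_num)) le_rfl]
    congr 1
    rw [show (-(1:ℝ)/2 + 1) = (1:ℝ)/2 by norm_num, Real.zero_rpow (by norm_num : (1:ℝ)/2 ≠ 0)]
    ring
  have step2 := ENNReal.lintegral_mul_le_Lp_mul_Lq (volume.restrict (Set.Ioc 0 x)) hpq hg1m hg2m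
  rw [e2, e3] at step2
  have step3 : (‖∫ t in (0:ℝ)..x, f t‖₊ : ℝ≥0∞) ≤
      A ^ ((1:ℝ)/2) * ENNReal.ofReal (2 * x ^ ((1:ℝ)/2)) ^ ((1:ℝ)/2) := by
    calc (‖∫ t in (0:ℝ)..x, f t‖₊ : ℝ≥0∞) ≤ ∫⁻ t in Set.Ioc 0 x, (‖f t‖₊ : ℝ≥0∞) := step1
      _ = ∫⁻ t in Set.Ioc 0 x, g1 t * g2 t := e1
      _ ≤ _ := step2
  have step4 : (‖∫ t in (0:ℝ)..x, f t‖₊ : ℝ≥0∞) ^ 2 ≤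
      A * ENNReal.ofReal (2 * x ^ ((1:ℝ)/2)) := by
    calc (‖∫ t in (0:ℝ)..x, f t‖₊ : ℝ≥0∞) ^ 2
        ≤ (A ^ ((1:ℝ)/2) * ENNReal.ofReal (2 * x ^ ((1:ℝ)/2)) ^ ((1:ℝ)/2)) ^ 2 :=
          pow_le_pow_left₀ (by positivity) step3 2
      _ = A * ENNReal.ofReal (2 * x ^ ((1:ℝ)/2)) := by
          rw [mul_pow, ← ENNReal.rpow_natCast (A ^ ((1:ℝ)/2)) 2,
            ← ENNReal.rpow_natCast (ENNReal.ofReal (2 * x ^ ((1:ℝ)/2)) ^ ((1:ℝ)/2)) 2,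
            ← ENNReal.rpow_mul, ← ENNReal.rpow_mul]
          norm_num
  -- now multiply by the norm of x⁻¹
  have hnorm : (‖(x:ℂ)⁻¹‖₊ : ℝ≥0∞) = ENNReal.ofReal x⁻¹ := by
    have : ‖(x:ℂ)⁻¹‖ = x⁻¹ := by
      rw [norm_inv, Complex.norm_real, Real.norm_eq_abs, abs_of_pos hx0]
    rw [← enorm_eq_nnnorm, ← ofReal_norm_eq_enorm, this]
  calc (‖(x:ℂ)⁻¹ * ∫ t in (0:ℝ)..x, f t‖₊ : ℝ≥0∞) ^ 2
      = (ENNReal.ofReal x⁻¹) ^ 2 * (‖∫ t in (0:ℝ)..x, f t‖₊ : ℝ≥0∞) ^ 2 := by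
        rw [nnnorm_mul, ENNReal.coe_mul, mul_pow, hnorm]
    _ ≤ (ENNReal.ofReal x⁻¹) ^ 2 * (A * ENNReal.ofReal (2 * x ^ ((1:ℝ)/2))) := by
        gcongr
    _ = ENNReal.ofReal (2 * x ^ (-(3:ℝ)/2)) * A := by
        rw [← ENNReal.ofReal_pow (inv_nonneg.2 hx0.le)]
        rw [mul_comm A _, ← mul_assoc, ← ENNReal.ofReal_mul (by positivity)]
        congr 2
        have h1 : (x⁻¹)^2 = x ^ (-(2:ℝ)) := by
          rw [Real.rpow_neg hx0.le, inv_pow, ← Real.rpow_natCast x 2]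
          norm_num
        rw [h1, mul_comm (2:ℝ) _, ← mul_assoc, ← Real.rpow_add hx0]
        norm_num [mul_comm]


/-- **Hardy's inequality in `L²[0,1]`.** If `f` is a square-integrable measurable
function on `[0,1]`, then `Hf x = (1/x) ∫₀ˣ f(t) dt` is measurable and
`∫₀¹ ‖Hf‖² ≤ 4 ∫₀¹ ‖f‖²`; i.e. the Hardy operator is bounded with norm at most `2`. -/
theorem hardy_inequality_L2 (f : ℝ → ℂ)
    (hmeas : AEStronglyMeasurable f mu01)
    (hf : ∫⁻ x, (‖f x‖₊ : ENNReal) ^ 2 ∂mu01 < ⊤) :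
    AEStronglyMeasurable (fun x : ℝ => (x : ℂ)⁻¹ * ∫ t in (0 : ℝ)..x, f t) mu01 ∧
      ∫⁻ x, (‖(x : ℂ)⁻¹ * ∫ t in (0 : ℝ)..x, f t‖₊ : ENNReal) ^ 2 ∂mu01 ≤
        4 * ∫⁻ x, (‖f x‖₊ : ENNReal) ^ 2 ∂mu01 := by
  haveI : IsFiniteMeasure mu01 := by
    constructor
    rw [mu01, Measure.restrict_apply_univ]
    simp
  have hmem : MemLp f 2 mu01 := by
    refine ⟨hmeas, ?_⟩
    rw [eLpNorm_eq_lintegral_rpow_enorm_toReal (by norm_num) (by norm_num)]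
    refine ENNReal.rpow_lt_top_of_nonneg (by norm_num) ?_
    have heq : ∀ x : ℝ, (‖f x‖₊ : ENNReal) ^ ((2:ENNReal).toReal) = (‖f x‖₊ : ENNReal) ^ (2:ℕ) := by
      intro x
      rw [show ((2:ENNReal).toReal) = ((2:ℕ):ℝ) by norm_num, ENNReal.rpow_natCast]
    simp only [enorm_eq_nnnorm, heq]
    exact hf.ne
  have hint : Integrable f mu01 := hmem.integrable (by norm_num)
  have hio : IntegrableOn f (Set.Icc 0 1) volume := hint
  have hF : ContinuousOn (fun x => ∫ t in Set.Ioc 0 x, f t) (Set.Icc 0 1) :=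
    intervalIntegral.continuousOn_primitive hio
  have hmeasH : AEStronglyMeasurable (fun x : ℝ => (x : ℂ)⁻¹ * ∫ t in (0 : ℝ)..x, f t) mu01 := by
    have h1 : AEStronglyMeasurable (fun x : ℝ => (x : ℂ)⁻¹) mu01 :=
      (Complex.measurable_ofReal.inv).aestronglyMeasurable
    have h2 : AEStronglyMeasurable (fun x => ∫ t in (0 : ℝ)..x, f t) mu01 := by
      have heq : Set.EqOn (fun x => ∫ t in (0 : ℝ)..x, f t)
          (fun x => ∫ t in Set.Ioc 0 x, f t) (Set.Icc 0 1) := fun x hx => by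
        simp [intervalIntegral.integral_of_le hx.1]
      exact (hF.congr heq).aestronglyMeasurable measurableSet_Icc
    exact h1.mul h2
  refine ⟨hmeasH, ?_⟩
  have hmu : mu01 = volume.restrict (Set.Ioc (0:ℝ) 1) := by
    rw [mu01, ← Measure.restrict_congr_set Ioc_ae_eq_Icc]
  have hφm : AEMeasurable (fun t => (‖f t‖₊ : ℝ≥0∞) ^ 2)
      (volume.restrict (Set.Ioc (0:ℝ) 1)) := by
    rw [← hmu]
    exact hmeas.enorm.pow_const 2
  rw [hmu]
  calc (∫⁻ x in Set.Ioc (0:ℝ) 1, (‖(x:ℂ)⁻¹ * ∫ t in (0:ℝ)..x, f t‖₊ : ℝ≥0∞) ^ 2)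
      ≤ ∫⁻ x in Set.Ioc (0:ℝ) 1, ENNReal.ofReal (2 * x ^ (-(3:ℝ)/2)) *
          ∫⁻ t in Set.Ioc 0 x, (‖f t‖₊ : ℝ≥0∞) ^ 2 * ENNReal.ofReal (t ^ ((1:ℝ)/2)) := by
        refine lintegral_mono_ae ((ae_restrict_iff' measurableSet_Ioc).2
          (ae_of_all _ fun x hx => ?_))
        refine hardy_aux_pointwise f hx ?_
        have hres : volume.restrict (Set.Ioc (0:ℝ) x) = mu01.restrict (Set.Ioc 0 x) := by
          rw [mu01, Measure.restrict_restrict measurableSet_Ioc,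
            Set.inter_eq_left.2 ((Set.Ioc_subset_Ioc_right hx.2).trans Set.Ioc_subset_Icc_self)]
        rw [hres]
        exact (hmeas.restrict).enorm
    _ ≤ 4 * ∫⁻ t in Set.Ioc (0:ℝ) 1, (‖f t‖₊ : ℝ≥0∞) ^ 2 :=
        hardy_aux_tonelli _ hφm
end

section
/- (An identity for H) For every f ∈ L²[0,1], ‖f‖² = ‖(I − H)f‖² + |∫₀¹ f(x) dx|², where H is the Hardy operator and I is the identity operator. -/
open MeasureTheory Set intervalIntegral ComplexConjugate
open scoped ENNReal NNReal


private lemma invsq_integral {t : ℝ} (ht : 0 < t) (ht1 : t ≤ 1) :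
    ∫ x in Set.Ioc t 1, (x ^ 2)⁻¹ = t⁻¹ - 1 := by
  rw [← intervalIntegral.integral_of_le ht1]
  have h0 : (0:ℝ) ∉ Set.uIcc t 1 := by
    rw [Set.uIcc_of_le ht1]; rintro ⟨h1, h2⟩; linarith
  have hrw : ∀ x : ℝ, (x ^ 2)⁻¹ = x ^ (-2 : ℤ) := fun x => by
    rw [zpow_neg]; norm_cast
  simp_rw [hrw]
  rw [integral_zpow (Or.inr ⟨by norm_num, h0⟩)]
  norm_num
  ring


private lemma stepA {φ : ℝ → ℂ} (hInt : IntegrableOn φ (Set.Icc 0 1) volume)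
    {x : ℝ} (hx : x ∈ Set.Ioc 0 1) :
    ‖(∫ t in (0:ℝ)..x, φ t)‖ ^ 2
      = 2 * ∫ t in Set.Ioc 0 x, (φ t * conj (∫ s in (0:ℝ)..t, φ s)).re := by
  set F : ℝ → ℂ := fun y => ∫ s in (0:ℝ)..y, φ s with hFdef
  set ν : Measure ℝ := volume.restrict (Set.Ioc 0 x) with hνdef
  have hsub : Set.Ioc 0 x ⊆ Set.Icc 0 1 := fun y hy => ⟨hy.1.le, hy.2.trans hx.2⟩
  have hνle : ν ≤ volume.restrict (Set.Icc 0 1) := Measure.restrict_mono hsub le_rfl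
  have hii : ∀ {a b : ℝ}, a ∈ Set.Icc (0:ℝ) 1 → b ∈ Set.Icc (0:ℝ) 1 →
      IntervalIntegrable φ volume a b := by
    intro a b ha hb
    have hss : Set.uIcc a b ⊆ Set.Icc 0 1 := by
      rw [← Set.uIcc_of_le (zero_le_one' ℝ)]
      exact Set.uIcc_subset_uIcc (by rwa [Set.uIcc_of_le (zero_le_one' ℝ)]) (by rwa [Set.uIcc_of_le (zero_le_one' ℝ)])
    exact (hInt.mono_set hss).intervalIntegrable
  have hIν : Integrable φ ν := hInt.mono_set hsub
  have hFcont : ContinuousOn F (Set.Icc 0 1) := by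
    have h1 : IntegrableOn φ (Set.uIcc 0 1) volume := by
      rwa [Set.uIcc_of_le (zero_le_one' ℝ)]
    have := intervalIntegral.continuousOn_primitive_interval (a := 0) (b := 1) h1
    rwa [Set.uIcc_of_le (zero_le_one' ℝ)] at this
  obtain ⟨C, hC⟩ : ∃ C, ∀ y ∈ Set.Icc (0:ℝ) 1, ‖F y‖ ≤ C :=
    isCompact_Icc.exists_bound_of_continuousOn hFcont
  have hFm : AEStronglyMeasurable F ν :=
    (hFcont.aestronglyMeasurable measurableSet_Icc).mono_measure hνle
  have hFbdd : ∀ᵐ t ∂ν, ‖(conj (F t) : ℂ)‖ ≤ C := by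
    filter_upwards [ae_restrict_mem measurableSet_Ioc] with t ht
    rw [RCLike.norm_conj]
    exact hC t (hsub ht)
  have hφF : Integrable (fun t => φ t * conj (F t)) ν := by
    have := Integrable.bdd_mul (c := C) hIν (RCLike.continuous_conj.comp_aestronglyMeasurable hFm) hFbdd
    exact this.congr (Filter.Eventually.of_forall fun t => mul_comm _ _)
  -- the kernel
  set W : ℝ × ℝ → ℂ := Set.indicator {p : ℝ × ℝ | p.1 < p.2} (fun p => φ p.1 * conj (φ p.2))
    with hWdef
  have hWint : Integrable W (ν.prod ν) := by
    have hbase : Integrable (fun p : ℝ × ℝ => φ p.1 * conj (φ p.2)) (ν.prod ν) := by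
      have hconj : Integrable (fun t => conj (φ t) : ℝ → ℂ) ν :=
        Integrable.mono' hIν.norm (RCLike.continuous_conj.comp_aestronglyMeasurable hIν.1)
          (Filter.Eventually.of_forall fun t => le_of_eq (RCLike.norm_conj _))
      exact hIν.mul_prod hconj
    exact hbase.indicator (measurableSet_lt measurable_fst measurable_snd)
  have key := MeasureTheory.integral_integral_swap (μ := ν) (ν := ν)
      (f := fun s t => W (s, t)) hWint
  -- evaluate LHS inner integral
  have hL : ∀ s ∈ Set.Ioc 0 x, (∫ t, W (s, t) ∂ν) = φ s * conj (F x) - φ s * conj (F s) := by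
    intro s hs
    have h1 : (fun t => W (s, t)) = Set.indicator (Set.Ioi s) (fun t => φ s * conj (φ t)) := by
      ext t
      by_cases h : s < t
      · simp [hWdef, Set.indicator_apply, h]
      · simp [hWdef, Set.indicator_apply, h]
    rw [h1, MeasureTheory.integral_indicator measurableSet_Ioi, hνdef,
      Measure.restrict_restrict measurableSet_Ioi]
    have h2 : Set.Ioi s ∩ Set.Ioc 0 x = Set.Ioc s x := by
      ext t; simp only [Set.mem_inter_iff, Set.mem_Ioi, Set.mem_Ioc]
      constructor
      · rintro ⟨h3, h4, h5⟩; exact ⟨h3, h5⟩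
      · rintro ⟨h3, h4⟩; exact ⟨h3, hs.1.trans h3, h4⟩
    rw [h2, MeasureTheory.integral_const_mul, integral_conj, ← intervalIntegral.integral_of_le hs.2,
      ← intervalIntegral.integral_interval_sub_left (hii (Set.left_mem_Icc.mpr zero_le_one) ⟨hx.1.le, hx.2⟩) (hii (Set.left_mem_Icc.mpr zero_le_one) (hsub hs))]
    rw [map_sub, mul_sub]
  -- evaluate RHS inner integral
  have hR : ∀ t ∈ Set.Ioc 0 x, (∫ s, W (s, t) ∂ν) = conj (φ t * conj (F t)) := by
    intro t ht
    have h1 : (fun s => W (s, t)) = Set.indicator (Set.Iio t) (fun s => φ s * conj (φ t)) := by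
      ext s
      by_cases h : s < t
      · simp [hWdef, Set.indicator_apply, h]
      · simp [hWdef, Set.indicator_apply, h]
    rw [h1, MeasureTheory.integral_indicator measurableSet_Iio, hνdef,
      Measure.restrict_restrict measurableSet_Iio]
    have h2 : Set.Iio t ∩ Set.Ioc 0 x = Set.Ioo 0 t := by
      ext s; simp only [Set.mem_inter_iff, Set.mem_Iio, Set.mem_Ioc, Set.mem_Ioo]
      constructor
      · rintro ⟨h3, h4, h5⟩; exact ⟨h4, h3⟩
      · rintro ⟨h3, h4⟩; exact ⟨h4, h3, (le_of_lt h4).trans ht.2⟩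
    rw [h2, Measure.restrict_congr_set Ioo_ae_eq_Ioc, MeasureTheory.integral_mul_const,
      ← intervalIntegral.integral_of_le ht.1.le]
    simp only [map_mul, Complex.conj_conj]
    ring
  set A : ℂ := ∫ t in Set.Ioc 0 x, φ t * conj (F t) with hAdef
  have hLHS : (∫ s, (∫ t, W (s, t) ∂ν) ∂ν) = F x * conj (F x) - A := by
    rw [hνdef, setIntegral_congr_fun measurableSet_Ioc hL,
      integral_sub (hIν.mul_const _) hφF, MeasureTheory.integral_mul_const,
      ← intervalIntegral.integral_of_le hx.1.le]
  have hRHS : (∫ t, (∫ s, W (s, t) ∂ν) ∂ν) = conj A := by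
    rw [hνdef, setIntegral_congr_fun measurableSet_Ioc hR, integral_conj]
  rw [hLHS, hRHS] at key
  have hsum : F x * conj (F x) = conj A + A := sub_eq_iff_eq_add.mp key
  have hre : ∫ t in Set.Ioc 0 x, (φ t * conj (F t)).re = A.re := by
    have := integral_re hφF
    simpa [hνdef] using this
  rw [hre]
  have h2 : ‖F x‖ ^ 2 = (F x * conj (F x)).re := by
    rw [Complex.mul_conj]
    simp [Complex.normSq_eq_norm_sq, ← Complex.ofReal_pow]
  rw [h2, hsum]
  simp [Complex.add_re, Complex.conj_re]
  ring


private lemma stepB {h : ℝ → ℝ}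
    (hm : AEStronglyMeasurable h (volume.restrict (Set.Ioc 0 1)))
    (h1 : Integrable (fun t => t⁻¹ * h t) (volume.restrict (Set.Ioc 0 1))) :
    ∫ x in Set.Ioc (0:ℝ) 1, (x ^ 2)⁻¹ * ∫ t in Set.Ioc 0 x, h t
      = ∫ t in Set.Ioc (0:ℝ) 1, (t⁻¹ - 1) * h t := by
  set ν : Measure ℝ := volume.restrict (Set.Ioc 0 1) with hνdef
  have hh : Integrable h ν := by
    refine h1.norm.mono' hm ?_
    filter_upwards [ae_restrict_mem measurableSet_Ioc] with t ht
    rw [Real.norm_eq_abs, Real.norm_eq_abs, abs_mul, abs_inv, abs_of_pos ht.1]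
    nth_rewrite 1 [show |h t| = 1 * |h t| by ring]
    apply mul_le_mul_of_nonneg_right _ (abs_nonneg _)
    rw [le_inv_comm₀]
    · simpa using ht.2
    · norm_num
    · exact ht.1
  set V : ℝ × ℝ → ℝ :=
    Set.indicator {p : ℝ × ℝ | p.2 ≤ p.1} (fun p => (p.1 ^ 2)⁻¹ * h p.2) with hVdef
  have hSm : MeasurableSet {p : ℝ × ℝ | p.2 ≤ p.1} :=
    measurableSet_le measurable_snd measurable_fst
  have hVm : AEStronglyMeasurable V (ν.prod ν) := by
    refine AEStronglyMeasurable.indicator ?_ hSm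
    exact (((measurable_fst.pow_const 2).inv).aestronglyMeasurable).mul hm.comp_snd
  have hVnorm : ∀ t ∈ Set.Ioc (0:ℝ) 1, (∫ x, ‖V (x, t)‖ ∂ν) = (t⁻¹ - 1) * |h t| := by
    intro t ht
    have h1' : (fun x => ‖V (x, t)‖)
        = Set.indicator (Set.Ici t) (fun x => (x ^ 2)⁻¹ * |h t|) := by
      ext y
      by_cases hy : t ≤ y
      · simp [hVdef, Set.indicator_apply, hy, abs_mul, abs_of_nonneg (inv_nonneg.mpr (sq_nonneg y))]
      · simp [hVdef, Set.indicator_apply, hy]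
    rw [h1', MeasureTheory.integral_indicator measurableSet_Ici, hνdef,
      Measure.restrict_restrict measurableSet_Ici]
    have h2 : Set.Ici t ∩ Set.Ioc 0 1 = Set.Ioc t 1 ∪ {t} := by
      ext y; simp only [Set.mem_inter_iff, Set.mem_Ici, Set.mem_Ioc, Set.union_singleton,
        Set.mem_insert_iff]
      constructor
      · rintro ⟨hy1, hy2, hy3⟩
        rcases eq_or_lt_of_le hy1 with hE | hE
        · exact Or.inl hE.symm
        · exact Or.inr ⟨hE, hy3⟩
      · rintro (rfl | ⟨hy1, hy2⟩)
        · exact ⟨le_refl _, ht.1, ht.2⟩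
        · exact ⟨hy1.le, ht.1.trans hy1, hy2⟩
    rw [h2]
    rw [MeasureTheory.integral_union_eq_left_of_ae (by simp)]
    rw [MeasureTheory.integral_mul_const, invsq_integral ht.1 ht.2]
  have hVint : Integrable V (ν.prod ν) := by
    rw [integrable_prod_iff' hVm]
    constructor
    · filter_upwards [ae_restrict_mem measurableSet_Ioc] with t ht
      refine Integrable.mono' (integrable_const ((t ^ 2)⁻¹ * |h t|)) ?_ ?_
      · refine AEStronglyMeasurable.indicator ?_ measurableSet_Ici
        have hmeas : Measurable fun y : ℝ => (y ^ 2)⁻¹ * h t :=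
          ((measurable_id.pow_const 2).inv).mul_const _
        exact hmeas.aestronglyMeasurable
      · filter_upwards [ae_restrict_mem measurableSet_Ioc] with y hy
        by_cases hty : t ≤ y
        · have : ‖V (y, t)‖ = (y ^ 2)⁻¹ * |h t| := by
            simp [hVdef, Set.indicator_apply, hty, abs_mul,
              abs_of_nonneg (inv_nonneg.mpr (sq_nonneg y))]
          rw [this]
          apply mul_le_mul_of_nonneg_right _ (abs_nonneg _)
          apply inv_anti₀ (pow_pos ht.1 2)
          exact pow_le_pow_left₀ ht.1.le hty 2
        · simp [hVdef, Set.indicator_apply, hty, mul_nonneg (inv_nonneg.mpr (sq_nonneg t)) (abs_nonneg _)]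
    · refine Integrable.mono' h1.norm ?_ ?_
      · exact (hVm.norm.prod_swap).integral_prod_right'
      · filter_upwards [ae_restrict_mem measurableSet_Ioc] with t ht
        rw [Real.norm_eq_abs, abs_of_nonneg (integral_nonneg fun y => norm_nonneg _), hVnorm t ht,
          Real.norm_eq_abs, abs_mul, abs_inv, abs_of_pos ht.1]
        apply mul_le_mul_of_nonneg_right _ (abs_nonneg _)
        have := ht.1
        simp only [sub_le_iff_le_add]
        linarith [inv_pos.mpr ht.1]
  have key := MeasureTheory.integral_integral_swap (μ := ν) (ν := ν)
      (f := fun s t => V (s, t)) hVint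
  have hL : ∀ x ∈ Set.Ioc (0:ℝ) 1, (∫ t, V (x, t) ∂ν)
      = (x ^ 2)⁻¹ * ∫ t in Set.Ioc 0 x, h t := by
    intro x hx
    have h1' : (fun t => V (x, t)) = Set.indicator (Set.Iic x) (fun t => (x ^ 2)⁻¹ * h t) := by
      ext t
      by_cases h : t ≤ x
      · simp [hVdef, Set.indicator_apply, h]
      · simp [hVdef, Set.indicator_apply, h]
    rw [h1', MeasureTheory.integral_indicator measurableSet_Iic, hνdef,
      Measure.restrict_restrict measurableSet_Iic]
    have h2 : Set.Iic x ∩ Set.Ioc 0 1 = Set.Ioc 0 x := by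
      ext y; simp only [Set.mem_inter_iff, Set.mem_Iic, Set.mem_Ioc]
      constructor
      · rintro ⟨hy1, hy2, hy3⟩; exact ⟨hy2, hy1⟩
      · rintro ⟨hy1, hy2⟩; exact ⟨hy2, hy1, hy2.trans hx.2⟩
    rw [h2, MeasureTheory.integral_const_mul]
  have hR : ∀ t ∈ Set.Ioc (0:ℝ) 1, (∫ x, V (x, t) ∂ν) = (t⁻¹ - 1) * h t := by
    intro t ht
    have h1' : (fun x => V (x, t)) = Set.indicator (Set.Ici t) (fun x => (x ^ 2)⁻¹ * h t) := by
      ext y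
      by_cases h : t ≤ y
      · simp [hVdef, Set.indicator_apply, h]
      · simp [hVdef, Set.indicator_apply, h]
    rw [h1', MeasureTheory.integral_indicator measurableSet_Ici, hνdef,
      Measure.restrict_restrict measurableSet_Ici]
    have h2 : Set.Ici t ∩ Set.Ioc 0 1 = Set.Ioc t 1 ∪ {t} := by
      ext y; simp only [Set.mem_inter_iff, Set.mem_Ici, Set.mem_Ioc, Set.union_singleton,
        Set.mem_insert_iff]
      constructor
      · rintro ⟨hy1, hy2, hy3⟩
        rcases eq_or_lt_of_le hy1 with hE | hE
        · exact Or.inl hE.symm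
        · exact Or.inr ⟨hE, hy3⟩
      · rintro (rfl | ⟨hy1, hy2⟩)
        · exact ⟨le_refl _, ht.1, ht.2⟩
        · exact ⟨hy1.le, ht.1.trans hy1, hy2⟩
    rw [h2, MeasureTheory.integral_union_eq_left_of_ae (by simp),
      MeasureTheory.integral_mul_const, invsq_integral ht.1 ht.2]
  calc ∫ x in Set.Ioc (0:ℝ) 1, (x ^ 2)⁻¹ * ∫ t in Set.Ioc 0 x, h t
      = ∫ x, (∫ t, V (x, t) ∂ν) ∂ν := by
        rw [hνdef, setIntegral_congr_fun measurableSet_Ioc hL]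
    _ = ∫ t, (∫ x, V (x, t) ∂ν) ∂ν := key
    _ = ∫ t in Set.Ioc (0:ℝ) 1, (t⁻¹ - 1) * h t := by
        rw [hνdef, setIntegral_congr_fun measurableSet_Ioc hR]


open MeasureTheory Filter Topology

instance : IsFiniteMeasure mu01 := by
  constructor
  rw [show mu01 = volume.restrict (Set.Icc 0 1) from rfl, Measure.restrict_apply_univ]
  simp [Real.volume_Icc]

open Set intervalIntegral ComplexConjugate in
/-- **An identity for the Hardy operator.** For every `f ∈ L²[0,1]`,
`‖f‖² = ‖(I − H)f‖² + |∫₀¹ f|²`, where `(I − H)f` is the element `g` of `L²[0,1]`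
represented by the function `x ↦ f x − (1/x) ∫₀ˣ f(t) dt`. -/
theorem hardy_operator_identity (f g : Lp ℂ 2 mu01)
    (hg : (g : ℝ → ℂ) =ᵐ[mu01]
      fun x => f x - (x : ℂ)⁻¹ * ∫ t in (0 : ℝ)..x, f t) :
    ‖f‖ ^ 2 = ‖g‖ ^ 2 + ‖∫ x, f x ∂mu01‖ ^ 2 := by
  classical
  set fc : ℝ → ℂ := (f : ℝ → ℂ) with hfcdef
  set gc : ℝ → ℂ := (g : ℝ → ℂ) with hgcdef
  have hf2 : MemLp fc 2 mu01 := Lp.memLp f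
  have hg2 : MemLp gc 2 mu01 := Lp.memLp g
  set F : ℝ → ℂ := fun y => ∫ s in (0:ℝ)..y, fc s with hFdef
  set b : ℝ → ℂ := fun y => (y : ℂ)⁻¹ * F y with hbdef
  have hb_eq : (fun y => fc y - gc y) =ᵐ[mu01] b := by
    filter_upwards [hg] with y hy
    rw [hy]; ring
  have hb2 : MemLp b 2 mu01 := (hf2.sub hg2).ae_eq hb_eq
  have hInt : IntegrableOn fc (Set.Icc 0 1) volume := hf2.integrable one_le_two
  have hmul : ∀ {u v : ℝ → ℂ}, MemLp u 2 mu01 → MemLp v 2 mu01 →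
      Integrable (fun y => u y * v y) mu01 := by
    intro u v hu hv
    have h12 : (1 : ℝ≥0∞) / 1 = 1 / 2 + 1 / 2 := by
      rw [ENNReal.div_add_div_same, div_one, one_add_one_eq_two,
        ENNReal.div_self two_ne_zero ENNReal.ofNat_ne_top]
    exact (MemLp.smul (p := 2) (q := 2) (r := 1) hv hu).integrable le_rfl
  have hmulR : ∀ {u v : ℝ → ℝ}, MemLp u 2 mu01 → MemLp v 2 mu01 →
      Integrable (fun y => u y * v y) mu01 := by
    intro u v hu hv
    have h12 : (1 : ℝ≥0∞) / 1 = 1 / 2 + 1 / 2 := by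
      rw [ENNReal.div_add_div_same, div_one, one_add_one_eq_two,
        ENNReal.div_self two_ne_zero ENNReal.ofNat_ne_top]
    exact (MemLp.smul (p := 2) (q := 2) (r := 1) hv hu).integrable le_rfl
  have hconj : ∀ {u : ℝ → ℂ}, MemLp u 2 mu01 → MemLp (fun y => conj (u y)) 2 mu01 := by
    intro u hu
    refine MemLp.of_le_mul (c := 1) hu
      (RCLike.continuous_conj.comp_aestronglyMeasurable hu.1) ?_
    filter_upwards with y
    rw [RCLike.norm_conj, one_mul]
  -- norms as integrals
  have hnorm : ∀ u : Lp ℂ 2 mu01, ‖u‖ ^ 2 = ∫ y, ‖(u : ℝ → ℂ) y‖ ^ 2 ∂mu01 := by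
    intro u
    rw [norm_sq_eq_re_inner (𝕜 := ℂ) u, L2.inner_def, ← integral_re (L2.integrable_inner u u)]
    refine integral_congr_ae (Filter.Eventually.of_forall fun y => ?_)
    exact (norm_sq_eq_re_inner (𝕜 := ℂ) ((u : ℝ → ℂ) y)).symm
  -- the mean of f
  have hint1 : ∫ y, fc y ∂mu01 = F 1 := by
    rw [show mu01 = volume.restrict (Set.Icc 0 1) from rfl]
    rw [show (∫ y, fc y ∂volume.restrict (Set.Icc 0 1)) = ∫ y in Set.Icc (0:ℝ) 1, fc y from rfl,
      MeasureTheory.integral_Icc_eq_integral_Ioc, ← intervalIntegral.integral_of_le zero_le_one]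
  -- the auxiliary real function
  set h : ℝ → ℝ := fun t => (fc t * conj (F t)).re with hhdef
  have hA : ∀ x ∈ Set.Ioc (0:ℝ) 1, ‖F x‖ ^ 2 = 2 * ∫ t in Set.Ioc 0 x, h t :=
    fun x hx => stepA hInt hx
  have hA1 : ‖F 1‖ ^ 2 = 2 * ∫ t in Set.Ioc (0:ℝ) 1, h t := hA 1 ⟨zero_lt_one, le_rfl⟩
  -- integrability over mu01
  have icross' : Integrable (fun y => fc y * conj (b y)) mu01 := hmul hf2 (hconj hb2)
  have icross : Integrable (fun y => (fc y * conj (b y)).re) mu01 := icross'.re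
  have i1 : Integrable (fun y => ‖fc y‖ ^ 2) mu01 := by
    have := hmulR hf2.norm hf2.norm
    exact this.congr (Filter.Eventually.of_forall fun y => (pow_two ‖fc y‖).symm)
  have ib2 : Integrable (fun y => ‖b y‖ ^ 2) mu01 := by
    have := hmulR hb2.norm hb2.norm
    exact this.congr (Filter.Eventually.of_forall fun y => (pow_two ‖b y‖).symm)
  -- restrictions to (0,1]
  set ν1 : Measure ℝ := volume.restrict (Set.Ioc 0 1) with hν1def
  have hle1 : ν1 ≤ mu01 := Measure.restrict_mono Set.Ioc_subset_Icc_self le_rfl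
  have hFcont : ContinuousOn F (Set.Icc 0 1) := by
    have h1 : IntegrableOn fc (Set.uIcc 0 1) volume := by
      rwa [Set.uIcc_of_le (zero_le_one' ℝ)]
    have := intervalIntegral.continuousOn_primitive_interval (a := 0) (b := 1) h1
    rwa [Set.uIcc_of_le (zero_le_one' ℝ)] at this
  have hFm1 : AEStronglyMeasurable F ν1 :=
    (hFcont.aestronglyMeasurable measurableSet_Icc).mono_measure hle1
  have hfc1 : AEStronglyMeasurable fc ν1 := hf2.1.mono_measure hle1
  have hhm : AEStronglyMeasurable h ν1 :=
    Complex.continuous_re.comp_aestronglyMeasurable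
      (hfc1.mul (RCLike.continuous_conj.comp_aestronglyMeasurable hFm1))
  -- pointwise identity t⁻¹ * h t = re (fc t * conj (b t))
  have heq : ∀ t : ℝ, t⁻¹ * h t = (fc t * conj (b t)).re := by
    intro t
    have h1 : fc t * conj (b t) = ((t⁻¹ : ℝ) : ℂ) * (fc t * conj (F t)) := by
      rw [hbdef]
      simp only [map_mul, map_inv₀, Complex.conj_ofReal]
      push_cast
      ring
    rw [h1, Complex.re_ofReal_mul]
  have hit : Integrable (fun t => t⁻¹ * h t) ν1 :=
    (icross.mono_measure hle1).congr (Filter.Eventually.of_forall fun t => (heq t).symm)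
  have ihh : Integrable h ν1 := by
    obtain ⟨C, hC⟩ : ∃ C, ∀ y ∈ Set.Icc (0:ℝ) 1, ‖F y‖ ≤ C :=
      isCompact_Icc.exists_bound_of_continuousOn hFcont
    have hfcint : Integrable fc ν1 := (hf2.integrable one_le_two).mono_measure hle1
    have : Integrable (fun t => fc t * conj (F t)) ν1 := by
      have := Integrable.bdd_mul (c := C) hfcint
        (RCLike.continuous_conj.comp_aestronglyMeasurable hFm1) ?_
      · exact this.congr (Filter.Eventually.of_forall fun t => mul_comm _ _)
      · filter_upwards [ae_restrict_mem measurableSet_Ioc] with t ht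
        rw [RCLike.norm_conj]
        exact hC t (Set.Ioc_subset_Icc_self ht)
    exact this.re
  have hB : ∫ x in Set.Ioc (0:ℝ) 1, (x ^ 2)⁻¹ * ∫ t in Set.Ioc 0 x, h t
      = ∫ t in Set.Ioc (0:ℝ) 1, (t⁻¹ - 1) * h t := stepB hhm hit
  -- translate the mu01 integrals to (0,1]
  have hIcr : ∫ y, (fc y * conj (b y)).re ∂mu01 = ∫ t in Set.Ioc (0:ℝ) 1, t⁻¹ * h t := by
    rw [show mu01 = volume.restrict (Set.Icc 0 1) from rfl]
    rw [show (∫ y, (fc y * conj (b y)).re ∂volume.restrict (Set.Icc 0 1))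
        = ∫ y in Set.Icc (0:ℝ) 1, (fc y * conj (b y)).re from rfl,
      MeasureTheory.integral_Icc_eq_integral_Ioc]
    exact (setIntegral_congr_fun measurableSet_Ioc fun t _ => heq t).symm
  have hIb2 : ∫ y, ‖b y‖ ^ 2 ∂mu01
      = 2 * ∫ x in Set.Ioc (0:ℝ) 1, (x ^ 2)⁻¹ * ∫ t in Set.Ioc 0 x, h t := by
    rw [show mu01 = volume.restrict (Set.Icc 0 1) from rfl]
    rw [show (∫ y, ‖b y‖ ^ 2 ∂volume.restrict (Set.Icc 0 1))
        = ∫ y in Set.Icc (0:ℝ) 1, ‖b y‖ ^ 2 from rfl,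
      MeasureTheory.integral_Icc_eq_integral_Ioc, ← MeasureTheory.integral_const_mul]
    refine setIntegral_congr_fun measurableSet_Ioc fun y hy => ?_
    have h1 : ‖b y‖ ^ 2 = (y ^ 2)⁻¹ * ‖F y‖ ^ 2 := by
      rw [hbdef]
      simp only [norm_mul, mul_pow, norm_inv, Complex.norm_real, Real.norm_eq_abs,
        abs_of_pos hy.1, inv_pow]
    rw [h1, hA y hy]
    ring
  -- split the Fubini identity integral
  have hsplit : ∫ t in Set.Ioc (0:ℝ) 1, (t⁻¹ - 1) * h t
      = (∫ t in Set.Ioc (0:ℝ) 1, t⁻¹ * h t) - ∫ t in Set.Ioc (0:ℝ) 1, h t := by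
    rw [← MeasureTheory.integral_sub hit ihh]
    refine integral_congr_ae (Filter.Eventually.of_forall fun t => ?_)
    ring
  -- expand ‖g‖²
  have hpt : ∀ a c : ℂ, ‖a - c‖ ^ 2 = ‖a‖ ^ 2 - 2 * (a * conj c).re + ‖c‖ ^ 2 := by
    intro a c
    simp only [Complex.sq_norm, Complex.normSq_apply, Complex.mul_re,
      Complex.conj_re, Complex.conj_im, Complex.sub_re, Complex.sub_im]
    ring
  have hgnorm : ‖g‖ ^ 2 = (∫ y, ‖fc y‖ ^ 2 ∂mu01)
      - 2 * (∫ y, (fc y * conj (b y)).re ∂mu01) + ∫ y, ‖b y‖ ^ 2 ∂mu01 := by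
    rw [hnorm g]
    have hcongr : ∫ y, ‖gc y‖ ^ 2 ∂mu01 = ∫ y, ‖fc y - b y‖ ^ 2 ∂mu01 := by
      refine integral_congr_ae ?_
      filter_upwards [hg] with y hy
      rw [hy]
    rw [hcongr]
    have hexp : ∫ y, ‖fc y - b y‖ ^ 2 ∂mu01
        = ∫ y, (‖fc y‖ ^ 2 - 2 * (fc y * conj (b y)).re + ‖b y‖ ^ 2) ∂mu01 := by
      refine integral_congr_ae (Filter.Eventually.of_forall fun y => hpt _ _)
    have e1 : ∫ y, (‖fc y‖ ^ 2 - 2 * (fc y * conj (b y)).re + ‖b y‖ ^ 2) ∂mu01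
        = (∫ y, (‖fc y‖ ^ 2 - 2 * (fc y * conj (b y)).re) ∂mu01) + ∫ y, ‖b y‖ ^ 2 ∂mu01 :=
      MeasureTheory.integral_add (i1.sub (icross.const_mul 2)) ib2
    have e2 : ∫ y, (‖fc y‖ ^ 2 - 2 * (fc y * conj (b y)).re) ∂mu01
        = (∫ y, ‖fc y‖ ^ 2 ∂mu01) - ∫ y, 2 * (fc y * conj (b y)).re ∂mu01 :=
      MeasureTheory.integral_sub i1 (icross.const_mul 2)
    have e3 : ∫ y, 2 * (fc y * conj (b y)).re ∂mu01
        = 2 * ∫ y, (fc y * conj (b y)).re ∂mu01 := MeasureTheory.integral_const_mul 2 _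
    rw [hexp, e1, e2, e3]
  rw [hnorm f, hgnorm, hint1]
  have h2A1 := hA1
  rw [hIcr] at *
  linarith [hA1, hB, hsplit, hIb2, hIcr]
end

section
/- The operator I − H on L²[0,1] is a contraction: ‖(I − H)f‖ ≤ ‖f‖ for every f ∈ L²[0,1], i.e. ‖I − H‖ ≤ 1. -/
open MeasureTheory Filter Topology Set
open scoped ComplexConjugate

lemma vol_prod_diag_null : (volume.prod volume) {p : ℝ × ℝ | p.1 = p.2} = 0 := by
  have hm : MeasurableSet {p : ℝ × ℝ | p.1 = p.2} :=
    measurableSet_eq_fun measurable_fst measurable_snd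
  rw [Measure.prod_apply hm]
  have : ∀ x : ℝ, (Prod.mk x ⁻¹' {p : ℝ × ℝ | p.1 = p.2}) = {x} := by
    intro x; ext y; simp [eq_comm]
  simp [this]

lemma int_inv_sq {a : ℝ} (ha : 0 < a) (ha1 : a ≤ 1) :
    ∫ x in Set.Ioc a 1, (x^2)⁻¹ = a⁻¹ - 1 := by
  rw [← intervalIntegral.integral_of_le ha1]
  have heq : ∀ x : ℝ, (x^2)⁻¹ = x^(-2 : ℤ) := by
    intro x; rw [zpow_neg, zpow_two, sq]
  simp_rw [heq]
  have h0 : (0:ℝ) ∉ Set.uIcc a 1 := by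
    rw [Set.uIcc_of_le ha1]
    rintro ⟨h1, -⟩; exact absurd h1 (not_le.2 ha)
  rw [integral_zpow (Or.inr ⟨by norm_num, h0⟩)]
  norm_num
  ring

lemma int_inv_sq' {a : ℝ} (ha : 0 < a) (ha1 : a ≤ 1) :
    ∫ x in Set.Ioc a 1, ((x:ℂ)^2)⁻¹ = ((a⁻¹ - 1 : ℝ) : ℂ) := by
  have heq : ∀ x ∈ Set.Ioc a 1, ((x:ℂ)^2)⁻¹ = (((x^2)⁻¹ : ℝ) : ℂ) := by
    intro x _; push_cast; ring
  rw [setIntegral_congr_fun measurableSet_Ioc heq]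
  rw [show ((fun x => (((x^2)⁻¹ : ℝ) : ℂ)) : ℝ → ℂ) = fun x => RCLike.ofReal ((x^2)⁻¹) from rfl]
  rw [integral_ofReal, int_inv_sq ha ha1]
  norm_num

section repr

variable {ε : ℝ}

/-- Representation of the cross term as a double integral. -/
lemma cross_repr (u v : ℝ → ℂ) (hu : StronglyMeasurable u) (hv : StronglyMeasurable v)
    (huI : IntegrableOn u (Set.Ioc (0:ℝ) 1) volume)
    (hvI : IntegrableOn v (Set.Ioc (0:ℝ) 1) volume)
    (hε : 0 < ε) (hε1 : ε ≤ 1) :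
    ∫ x in Set.Ioc ε 1, u x * ((x:ℂ)⁻¹ * ∫ t in Set.Ioc (0:ℝ) x, v t)
      = ∫ q, {q : ℝ × ℝ | q.2 ≤ q.1 ∧ ε < q.1}.indicator
          (fun q => ((q.1 : ℂ))⁻¹ * (u q.1 * v q.2)) q
          ∂((volume.restrict (Set.Ioc (0:ℝ) 1)).prod (volume.restrict (Set.Ioc (0:ℝ) 1))) := by
  set S : Set ℝ := Set.Ioc (0:ℝ) 1 with hS
  set A : Set ℝ := Set.Ioc ε 1 with hA
  set T : Set (ℝ × ℝ) := {q : ℝ × ℝ | q.2 ≤ q.1 ∧ ε < q.1} with hT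
  have hTm : MeasurableSet T :=
    (measurableSet_le measurable_snd measurable_fst).inter
      (measurableSet_lt measurable_const measurable_fst)
  set h : ℝ × ℝ → ℂ := T.indicator (fun q => ((q.1 : ℂ))⁻¹ * (u q.1 * v q.2)) with hh
  have hASsub : A ⊆ S := Set.Ioc_subset_Ioc_left hε.le
  -- measurability of h
  have hmeas_h : Measurable h := by
    apply Measurable.indicator _ hTm
    exact ((Complex.measurable_ofReal.comp measurable_fst).inv.mul
      ((hu.measurable.comp measurable_fst).mul (hv.measurable.comp measurable_snd)))
  -- integrability of h on the product
  have hbound : ∀ q : ℝ × ℝ, ‖h q‖ ≤ (ε⁻¹ * ‖u q.1‖) * ‖v q.2‖ := by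
    intro q
    by_cases hq : q ∈ T
    · rw [hh, Set.indicator_of_mem hq]
      rw [norm_mul, norm_mul, norm_inv]
      have h1 : ε ≤ ‖((q.1 : ℝ) : ℂ)‖ := by
        rw [Complex.norm_real]
        exact le_trans (le_of_lt hq.2) (le_abs_self _)
      have h2 : ‖((q.1 : ℝ) : ℂ)‖⁻¹ ≤ ε⁻¹ := by
        apply inv_anti₀ hε h1
      rw [mul_assoc]
      exact mul_le_mul_of_nonneg_right h2 (by positivity)
    · rw [hh, Set.indicator_of_notMem hq]
      simp only [norm_zero]
      positivity
  have hint_h : Integrable h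
      ((volume.restrict S).prod (volume.restrict S)) := by
    refine Integrable.mono' ?_ hmeas_h.aestronglyMeasurable (Eventually.of_forall hbound)
    exact (huI.norm.const_mul ε⁻¹).mul_prod hvI.norm
  have hint_AS : IntegrableOn h (A ×ˢ S) (volume.prod volume) := by
    have := hint_h
    rw [Measure.prod_restrict] at this
    exact this.mono_measure (Measure.restrict_mono (Set.prod_mono hASsub subset_rfl) le_rfl)
  -- the chain of equalities
  have step1 : ∫ x in A, u x * ((x:ℂ)⁻¹ * ∫ t in Set.Ioc (0:ℝ) x, v t)
      = ∫ x in A, ∫ t in S, h (x, t) := by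
    apply setIntegral_congr_fun measurableSet_Ioc
    intro x hx
    dsimp only
    have hfun : (fun t => h (x, t))
        = (Set.Iic x).indicator (fun t => ((x : ℂ))⁻¹ * (u x * v t)) := by
      funext t
      by_cases ht : t ≤ x
      · rw [hh, Set.indicator_of_mem (show (x, t) ∈ T from ⟨ht, hx.1⟩),
          Set.indicator_of_mem (Set.mem_Iic.2 ht)]
      · rw [hh, Set.indicator_of_notMem (show (x, t) ∉ T from fun hc => ht hc.1),
          Set.indicator_of_notMem (fun hc => ht (Set.mem_Iic.1 hc))]
    rw [hfun, setIntegral_indicator measurableSet_Iic]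
    have hset : S ∩ Set.Iic x = Set.Ioc 0 x := by
      ext t
      simp only [hS, Set.mem_inter_iff, Set.mem_Ioc, Set.mem_Iic]
      constructor
      · rintro ⟨⟨h1, _⟩, h3⟩; exact ⟨h1, h3⟩
      · rintro ⟨h1, h2⟩; exact ⟨⟨h1, le_trans h2 hx.2⟩, h2⟩
    rw [hset, integral_const_mul, integral_const_mul]
    ring
  have step2 : ∫ x in A, ∫ t in S, h (x, t) = ∫ p in A ×ˢ S, h p ∂(volume.prod volume) :=
    (setIntegral_prod h hint_AS).symm
  have step3 : ∫ p in A ×ˢ S, h p ∂(volume.prod volume)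
      = ∫ p in S ×ˢ S, h p ∂(volume.prod volume) := by
    have : ∫ p in S ×ˢ S, h p ∂(volume.prod volume)
        = ∫ p in S ×ˢ S, (A ×ˢ S).indicator h p ∂(volume.prod volume) := by
      apply setIntegral_congr_fun (measurableSet_Ioc.prod measurableSet_Ioc)
      intro p hp
      by_cases hpA : p ∈ A ×ˢ S
      · rw [Set.indicator_of_mem hpA]
      · rw [Set.indicator_of_notMem hpA]
        have hp1 : p.1 ∈ S := hp.1
        have : ¬ (ε < p.1) := by
          intro hc
          exact hpA ⟨⟨hc, hp1.2⟩, hp.2⟩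
        rw [hh, Set.indicator_of_notMem (fun hc => this hc.2)]
    rw [this, setIntegral_indicator (measurableSet_Ioc.prod measurableSet_Ioc),
      Set.prod_inter_prod, Set.inter_eq_self_of_subset_right hASsub, Set.inter_self]
  have step4 : ∫ p in S ×ˢ S, h p ∂(volume.prod volume)
      = ∫ q, h q ∂((volume.restrict S).prod (volume.restrict S)) := by
    rw [Measure.prod_restrict]
  rw [step1, step2, step3, step4]

end repr
section reprD

open MeasureTheory Filter Topology Set

variable {ε : ℝ}

lemma D_repr (f₀ : ℝ → ℂ) (hmeas : StronglyMeasurable f₀)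
    (hI : IntegrableOn f₀ (Set.Ioc (0:ℝ) 1) volume)
    (hε : 0 < ε) (hε1 : ε ≤ 1) :
    ∫ x in Set.Ioc ε 1, ((x:ℂ)^2)⁻¹ *
        ((∫ t in Set.Ioc (0:ℝ) x, (starRingEnd ℂ) (f₀ t)) * ∫ t in Set.Ioc (0:ℝ) x, f₀ t)
      = ∫ q : ℝ × ℝ, ((starRingEnd ℂ) (f₀ q.1) * f₀ q.2) * (((max ε (max q.1 q.2))⁻¹ - 1 : ℝ) : ℂ)
          ∂((volume.restrict (Set.Ioc (0:ℝ) 1)).prod (volume.restrict (Set.Ioc (0:ℝ) 1))) := by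
  set S : Set ℝ := Set.Ioc (0:ℝ) 1 with hS
  set A : Set ℝ := Set.Ioc ε 1 with hA
  set P : Measure (ℝ × ℝ) := (volume.restrict S).prod (volume.restrict S) with hP
  set φ : ℝ × ℝ → ℂ := fun q => (starRingEnd ℂ) (f₀ q.1) * f₀ q.2 with hφ
  set Θ : ℝ → ℝ × ℝ → ℂ := fun x q =>
    if q.1 ≤ x ∧ q.2 ≤ x ∧ ε < x then ((x:ℂ)^2)⁻¹ * φ q else 0 with hΘ
  haveI : IsFiniteMeasure (volume.restrict A) := by
    constructor
    rw [Measure.restrict_apply_univ]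
    simp [hA, Real.volume_Ioc]
  have hφnorm : Integrable (fun q : ℝ × ℝ => ‖f₀ q.1‖ * ‖f₀ q.2‖) P :=
    hI.norm.mul_prod hI.norm
  have hφint : Integrable φ P := by
    refine Integrable.mono' hφnorm ?_ (Eventually.of_forall ?_)
    · exact ((RCLike.continuous_conj.measurable.comp
        (hmeas.measurable.comp measurable_fst)).mul
        (hmeas.measurable.comp measurable_snd)).aestronglyMeasurable
    · intro q
      rw [hφ]
      simp [norm_mul]
  have hbound : ∀ z : ℝ × (ℝ × ℝ), ‖Θ z.1 z.2‖ ≤ (ε^2)⁻¹ * (‖f₀ z.2.1‖ * ‖f₀ z.2.2‖) := by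
    intro z
    rw [show Θ z.1 z.2 = (if z.2.1 ≤ z.1 ∧ z.2.2 ≤ z.1 ∧ ε < z.1
      then ((z.1:ℂ)^2)⁻¹ * φ z.2 else 0) from rfl]
    by_cases hc : z.2.1 ≤ z.1 ∧ z.2.2 ≤ z.1 ∧ ε < z.1
    · rw [if_pos hc]
      rw [norm_mul, norm_inv, norm_pow, Complex.norm_real]
      have h1 : ε ≤ |z.1| := le_trans hc.2.2.le (le_abs_self _)
      have h2 : (|z.1|^2)⁻¹ ≤ (ε^2)⁻¹ := by
        apply inv_anti₀ (by positivity)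
        exact pow_le_pow_left₀ hε.le h1 2
      have h3 : ‖φ z.2‖ = ‖f₀ z.2.1‖ * ‖f₀ z.2.2‖ := by rw [hφ]; simp [norm_mul]
      rw [h3]
      exact mul_le_mul_of_nonneg_right h2 (by positivity)
    · rw [if_neg hc]
      simp only [norm_zero]
      positivity
  have hmeasΘ : Measurable (Function.uncurry Θ) := by
    have hset : MeasurableSet {z : ℝ × (ℝ × ℝ) | z.2.1 ≤ z.1 ∧ z.2.2 ≤ z.1 ∧ ε < z.1} := by
      refine MeasurableSet.inter ?_ (MeasurableSet.inter ?_ ?_)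
      · exact measurableSet_le (measurable_snd.fst) measurable_fst
      · exact measurableSet_le (measurable_snd.snd) measurable_fst
      · exact measurableSet_lt measurable_const measurable_fst
    have hcore : Measurable (fun z : ℝ × (ℝ × ℝ) => ((z.1:ℂ)^2)⁻¹ * φ z.2) := by
      refine Measurable.mul ?_ ?_
      · exact ((Complex.measurable_ofReal.comp measurable_fst).pow_const 2).inv
      · exact ((RCLike.continuous_conj.measurable.comp
          (hmeas.measurable.comp measurable_snd.fst)).mul
          (hmeas.measurable.comp measurable_snd.snd))
    have : Function.uncurry Θ = fun z : ℝ × (ℝ × ℝ) =>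
        if z ∈ {z : ℝ × (ℝ × ℝ) | z.2.1 ≤ z.1 ∧ z.2.2 ≤ z.1 ∧ ε < z.1}
        then ((z.1:ℂ)^2)⁻¹ * φ z.2 else 0 := by
      funext z
      rfl
    rw [this]
    exact Measurable.ite hset hcore measurable_const
  have hintΘ : Integrable (Function.uncurry Θ) ((volume.restrict A).prod P) := by
    refine Integrable.mono'
      (g := fun z : ℝ × (ℝ × ℝ) => (ε^2)⁻¹ * (‖f₀ z.2.1‖ * ‖f₀ z.2.2‖)) ?_
      hmeasΘ.aestronglyMeasurable (Eventually.of_forall hbound)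
    exact (integrable_const ((ε^2)⁻¹)).mul_prod hφnorm
  -- step d1 : pointwise identity in x
  have d1 : ∀ x ∈ A, ((x:ℂ)^2)⁻¹ *
      ((∫ t in Set.Ioc (0:ℝ) x, (starRingEnd ℂ) (f₀ t)) * ∫ t in Set.Ioc (0:ℝ) x, f₀ t)
      = ∫ q, Θ x q ∂P := by
    intro x hx
    have hfun : Θ x = (Set.Iic x ×ˢ Set.Iic x).indicator (fun q => ((x:ℂ)^2)⁻¹ * φ q) := by
      funext q
      by_cases hq : q.1 ≤ x ∧ q.2 ≤ x
      · rw [Set.indicator_of_mem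
          (show q ∈ Set.Iic x ×ˢ Set.Iic x from ⟨hq.1, hq.2⟩)]
        exact if_pos ⟨hq.1, hq.2, hx.1⟩
      · rw [Set.indicator_of_notMem
          (show q ∉ Set.Iic x ×ˢ Set.Iic x from fun hc => hq ⟨hc.1, hc.2⟩)]
        exact if_neg (fun hc => hq ⟨hc.1, hc.2.1⟩)
    have hSIic : S ∩ Set.Iic x = Set.Ioc 0 x := by
      ext t
      simp only [hS, Set.mem_inter_iff, Set.mem_Ioc, Set.mem_Iic]
      constructor
      · rintro ⟨⟨h1, _⟩, h3⟩; exact ⟨h1, h3⟩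
      · rintro ⟨h1, h2⟩; exact ⟨⟨h1, le_trans h2 hx.2⟩, h2⟩
    rw [hfun, hP, Measure.prod_restrict,
      setIntegral_indicator (measurableSet_Iic.prod measurableSet_Iic),
      Set.prod_inter_prod, hSIic, integral_const_mul]
    congr 1
    exact (setIntegral_prod_mul (fun t => (starRingEnd ℂ) (f₀ t)) f₀ _ _).symm
  have d2 : ∫ x in A, ((x:ℂ)^2)⁻¹ *
      ((∫ t in Set.Ioc (0:ℝ) x, (starRingEnd ℂ) (f₀ t)) * ∫ t in Set.Ioc (0:ℝ) x, f₀ t)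
      = ∫ q, (∫ x in A, Θ x q) ∂P := by
    rw [setIntegral_congr_fun measurableSet_Ioc (fun x hx => d1 x hx)]
    exact integral_integral_swap hintΘ
  rw [d2]
  -- step d3/d4 : evaluate the inner integral
  have hae : ∀ᵐ q ∂P, q ∈ S ×ˢ S := by
    have hmSS : MeasurableSet (S ×ˢ S) := measurableSet_Ioc.prod measurableSet_Ioc
    have := ae_restrict_mem (μ := volume.prod volume) hmSS
    rw [← Measure.prod_restrict] at this
    exact this
  apply integral_congr_ae
  filter_upwards [hae] with q hq
  set m : ℝ := max q.1 q.2 with hm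
  have hm0 : (0:ℝ) < m := lt_of_lt_of_le hq.1.1 (le_max_left _ _)
  have hm1 : m ≤ 1 := max_le hq.1.2 hq.2.2
  have hmax0 : (0:ℝ) < max ε m := lt_of_lt_of_le hε (le_max_left _ _)
  have hmax1 : max ε m ≤ 1 := max_le hε1 hm1
  have hfun : (fun x => Θ x q)
      = (Set.Ici m ∩ Set.Ioi ε).indicator (fun x => ((x:ℂ)^2)⁻¹ * φ q) := by
    funext x
    by_cases hc : q.1 ≤ x ∧ q.2 ≤ x ∧ ε < x
    · rw [Set.indicator_of_mem (show x ∈ Set.Ici m ∩ Set.Ioi ε from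
        ⟨max_le hc.1 hc.2.1, hc.2.2⟩)]
      exact if_pos hc
    · rw [Set.indicator_of_notMem (show x ∉ Set.Ici m ∩ Set.Ioi ε from fun hmem => hc
        ⟨le_trans (le_max_left _ _) hmem.1, le_trans (le_max_right _ _) hmem.1, hmem.2⟩)]
      exact if_neg hc
  have hsetae : ((A ∩ (Set.Ici m ∩ Set.Ioi ε) : Set ℝ) : Set ℝ)
      =ᵐ[volume] (Set.Ioc (max ε m) 1 : Set ℝ) := by
    rcases le_or_gt m ε with h | h
    · have hseteq : A ∩ (Set.Ici m ∩ Set.Ioi ε) = Set.Ioc (max ε m) 1 := by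
        rw [max_eq_left h]
        ext x
        constructor
        · rintro ⟨hxA, -, -⟩; exact hxA
        · intro hxA; exact ⟨hxA, le_trans h hxA.1.le, hxA.1⟩
      rw [hseteq]
      exact EventuallyEq.rfl
    · have hseteq : A ∩ (Set.Ici m ∩ Set.Ioi ε) = Set.Icc m 1 := by
        ext x
        constructor
        · rintro ⟨hxA, hm', -⟩; exact ⟨hm', hxA.2⟩
        · rintro ⟨h1, h2⟩
          exact ⟨⟨lt_of_lt_of_le h h1, h2⟩, h1, lt_of_lt_of_le h h1⟩
      rw [hseteq, max_eq_right (le_of_lt h)]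
      exact (Ioc_ae_eq_Icc (μ := volume) (a := m) (b := 1)).symm
  rw [hfun, setIntegral_indicator (measurableSet_Ici.inter measurableSet_Ioi),
    setIntegral_congr_set hsetae, integral_mul_const, int_inv_sq' hmax0 hmax1]
  ring

end reprD

lemma L2norm_sq {μ : Measure ℝ} (h : Lp ℂ 2 μ) :
    ‖h‖^2 = ∫ x, ‖(h : ℝ → ℂ) x‖^2 ∂μ := by
  have h1 : ‖h‖^2 = RCLike.re (inner (𝕜 := ℂ) h h) := norm_sq_eq_re_inner (𝕜 := ℂ) h
  rw [h1, L2.inner_def, ← integral_re (L2.integrable_inner h h)]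
  congr 1
  ext x
  simpa using (inner_self_eq_norm_sq (𝕜 := ℂ) ((h : ℝ → ℂ) x))

lemma cs_bound (f₀ : ℝ → ℂ) (hL2 : MemLp f₀ 2 (volume.restrict (Set.Ioc (0:ℝ) 1)))
    {ε : ℝ} (hε : 0 < ε) (hε1 : ε ≤ 1) :
    ‖∫ t in Set.Ioc (0:ℝ) ε, f₀ t‖^2 ≤ ε * ∫ t in Set.Ioc (0:ℝ) ε, ‖f₀ t‖^2 := by
  set με : Measure ℝ := volume.restrict (Set.Ioc (0:ℝ) ε) with hμε
  haveI : IsFiniteMeasure με := by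
    constructor
    rw [hμε, Measure.restrict_apply_univ]
    simp [Real.volume_Ioc]
  have hrest : με ≤ volume.restrict (Set.Ioc (0:ℝ) 1) :=
    Measure.restrict_mono (Set.Ioc_subset_Ioc_right hε1) le_rfl
  have hfε : MemLp f₀ 2 με := hL2.mono_measure hrest
  have h1 : MemLp (fun _ : ℝ => (1:ℂ)) 2 με := memLp_const 1
  set U : Lp ℂ 2 με := hfε.toLp f₀ with hU
  set O : Lp ℂ 2 με := h1.toLp _ with hO
  have hUc : (U : ℝ → ℂ) =ᵐ[με] f₀ := hfε.coeFn_toLp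
  have hOc : (O : ℝ → ℂ) =ᵐ[με] fun _ => (1:ℂ) := h1.coeFn_toLp
  have hinner : inner (𝕜 := ℂ) O U = ∫ t, f₀ t ∂με := by
    rw [L2.inner_def]
    apply integral_congr_ae
    filter_upwards [hUc, hOc] with t h1t h2t
    simp [h1t, h2t, RCLike.inner_apply]
  have hOn : ‖O‖^2 = ε := by
    rw [L2norm_sq O]
    have : (fun x => ‖(O : ℝ → ℂ) x‖^2) =ᵐ[με] fun _ => (1:ℝ) := by
      filter_upwards [hOc] with t ht; simp [ht]
    rw [integral_congr_ae this, integral_const, smul_eq_mul, mul_one,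
      hμε, measureReal_restrict_apply_univ, measureReal_def, Real.volume_Ioc]
    simp [ENNReal.toReal_ofReal hε.le]
  have hUn : ‖U‖^2 = ∫ t, ‖f₀ t‖^2 ∂με := by
    rw [L2norm_sq U]
    apply integral_congr_ae
    filter_upwards [hUc] with t ht; rw [ht]
  have hCS : ‖(inner (𝕜 := ℂ) O U : ℂ)‖ ≤ ‖O‖ * ‖U‖ := norm_inner_le_norm O U
  have h2 : ‖∫ t, f₀ t ∂με‖^2 ≤ (‖O‖ * ‖U‖)^2 := by
    rw [← hinner]
    exact pow_le_pow_left₀ (norm_nonneg _) hCS 2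
  calc ‖∫ t in Set.Ioc (0:ℝ) ε, f₀ t‖^2 = ‖∫ t, f₀ t ∂με‖^2 := by rw [hμε]
    _ ≤ (‖O‖ * ‖U‖)^2 := h2
    _ = ‖O‖^2 * ‖U‖^2 := by ring
    _ = ε * ∫ t, ‖f₀ t‖^2 ∂με := by rw [hOn, hUn]
    _ = ε * ∫ t in Set.Ioc (0:ℝ) ε, ‖f₀ t‖^2 := by rw [hμε]

section epsmain

open MeasureTheory Filter Topology Set
open scoped ComplexConjugate

set_option maxHeartbeats 1600000 in
lemma hardy_eps_bound (f₀ : ℝ → ℂ) (hmeas : StronglyMeasurable f₀)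
    (hL2 : MemLp f₀ 2 (volume.restrict (Set.Ioc (0:ℝ) 1)))
    (hsupp : ∀ x, x ∉ Set.Ioc (0:ℝ) 1 → f₀ x = 0)
    {ε : ℝ} (hε : 0 < ε) (hε1 : ε ≤ 1) :
    ∫ x in Set.Ioc ε 1, ‖f₀ x - (x:ℂ)⁻¹ * ∫ t in (0:ℝ)..x, f₀ t‖^2
      ≤ (∫ x in Set.Ioc (0:ℝ) 1, ‖f₀ x‖^2) + ∫ x in Set.Ioc (0:ℝ) ε, ‖f₀ x‖^2 := by
  set S : Set ℝ := Set.Ioc (0:ℝ) 1 with hS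
  set A : Set ℝ := Set.Ioc ε 1 with hA
  set P : Measure (ℝ × ℝ) := (volume.restrict S).prod (volume.restrict S) with hP
  set φ : ℝ × ℝ → ℂ := fun q => (starRingEnd ℂ) (f₀ q.1) * f₀ q.2 with hφ
  set F : ℝ → ℂ := fun x => ∫ t in (0:ℝ)..x, f₀ t with hF
  have hAS : A ⊆ S := Set.Ioc_subset_Ioc_left hε.le
  haveI : IsFiniteMeasure (volume.restrict S) := by
    constructor; rw [Measure.restrict_apply_univ]; simp [hS, Real.volume_Ioc]
  haveI : IsFiniteMeasure (volume.restrict A) := by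
    constructor; rw [Measure.restrict_apply_univ]; simp [hA, Real.volume_Ioc]
  -- basic integrability
  have hsq : Integrable (fun x => ‖f₀ x‖^2) (volume.restrict S) := by
    have := hL2.integrable_norm_rpow (by norm_num) (by norm_num)
    simpa [ENNReal.toReal_ofNat, Real.rpow_natCast] using this
  have hfS : Integrable f₀ (volume.restrict S) := hL2.integrable one_le_two
  have hIOn : IntegrableOn f₀ S volume := hfS
  have hfvol : Integrable f₀ volume := by
    have heq : f₀ = S.indicator f₀ := by
      funext x
      by_cases hx : x ∈ S
      · rw [Set.indicator_of_mem hx]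
      · rw [Set.indicator_of_notMem hx, hsupp x hx]
    rw [heq]
    rw [integrable_indicator_iff measurableSet_Ioc]
    exact hIOn
  have hconjmeas : StronglyMeasurable (fun t => (starRingEnd ℂ) (f₀ t)) :=
    RCLike.continuous_conj.comp_stronglyMeasurable hmeas
  have hconjI : IntegrableOn (fun t => (starRingEnd ℂ) (f₀ t)) S volume := by
    simpa [IntegrableOn] using (Complex.conjCLE.toContinuousLinearMap : ℂ →L[ℝ] ℂ).integrable_comp hfS
  -- properties of F
  have hFc : Continuous F := hfvol.continuous_primitive 0
  have hFset : ∀ x : ℝ, 0 ≤ x → F x = ∫ t in Set.Ioc 0 x, f₀ t := fun x hx =>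
    intervalIntegral.integral_of_le hx
  set M : ℝ := ∫ t in S, ‖f₀ t‖ with hM
  have hM0 : 0 ≤ M := setIntegral_nonneg measurableSet_Ioc fun t _ => norm_nonneg _
  have hMb : ∀ x ∈ Set.Icc (0:ℝ) 1, ‖F x‖ ≤ M := by
    intro x hx
    rw [hFset x hx.1]
    refine (norm_integral_le_integral_norm _).trans ?_
    apply setIntegral_mono_set hfS.norm
    · exact Eventually.of_forall fun t => norm_nonneg _
    · exact HasSubset.Subset.eventuallyLE (Set.Ioc_subset_Ioc_right hx.2)
  -- integrabilities on A
  have hfA : IntegrableOn f₀ A volume := hIOn.mono_set hAS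
  have i1 : Integrable (fun x => ‖f₀ x‖^2) (volume.restrict A) :=
    IntegrableOn.mono_set hsq hAS
  have hnormb : ∀ x ∈ A, ‖((x:ℝ):ℂ)⁻¹‖ ≤ ε⁻¹ := by
    intro x hx
    rw [norm_inv, Complex.norm_real]
    apply inv_anti₀ hε
    exact le_trans hx.1.le (le_abs_self x)
  have hxmem : ∀ x ∈ A, x ∈ Set.Icc (0:ℝ) 1 := fun x hx =>
    ⟨le_of_lt (lt_of_le_of_lt hε.le hx.1), hx.2⟩
  have i2c : Integrable (fun x => (starRingEnd ℂ) (f₀ x) * ((x:ℂ)⁻¹ * F x))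
      (volume.restrict A) := by
    refine Integrable.mono' (hfA.norm.mul_const (ε⁻¹ * M)) ?_ ?_
    · exact ((hconjmeas.measurable).mul
        ((Complex.measurable_ofReal.inv).mul hFc.measurable)).aestronglyMeasurable
    · filter_upwards [ae_restrict_mem measurableSet_Ioc] with x hx
      rw [norm_mul, norm_mul, RCLike.norm_conj]
      gcongr ‖f₀ x‖ * (?_ * ?_)
      · exact hnormb x hx
      · exact hMb x (hxmem x hx)
  have i2 : Integrable (fun x => RCLike.re ((starRingEnd ℂ) (f₀ x) * ((x:ℂ)⁻¹ * F x)))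
      (volume.restrict A) := i2c.re
  have i3c : Integrable (fun x : ℝ => ((x:ℂ)^2)⁻¹ * ((starRingEnd ℂ) (F x) * F x))
      (volume.restrict A) := by
    refine Integrable.mono' (integrable_const ((ε^2)⁻¹ * M^2)) ?_ ?_
    · exact (((Complex.measurable_ofReal.pow_const 2).inv).mul
        ((RCLike.continuous_conj.measurable.comp hFc.measurable).mul
          hFc.measurable)).aestronglyMeasurable
    · filter_upwards [ae_restrict_mem measurableSet_Ioc] with x hx
      rw [norm_mul, norm_mul, RCLike.norm_conj, norm_inv, norm_pow, Complex.norm_real]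
      have h1 : ((abs x)^2)⁻¹ ≤ (ε^2)⁻¹ := by
        apply inv_anti₀ (by positivity)
        exact pow_le_pow_left₀ hε.le (le_trans hx.1.le (le_abs_self x)) 2
      have h2 : ‖F x‖ * ‖F x‖ ≤ M^2 := by
        have := hMb x (hxmem x hx)
        nlinarith [norm_nonneg (F x)]
      exact mul_le_mul h1 h2 (by positivity) (by positivity)
  have i3 : Integrable (fun x : ℝ => (x^2)⁻¹ * ‖F x‖^2) (volume.restrict A) := by
    refine Integrable.mono' (integrable_const ((ε^2)⁻¹ * M^2)) ?_ ?_
    · exact (((measurable_id.pow_const 2).inv).mul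
        (hFc.measurable.norm.pow_const 2)).aestronglyMeasurable
    · filter_upwards [ae_restrict_mem measurableSet_Ioc] with x hx
      have hx0 : (0:ℝ) < x := lt_of_le_of_lt hε.le hx.1
      rw [Real.norm_eq_abs, abs_mul, abs_of_nonneg (by positivity : (0:ℝ) ≤ (x^2)⁻¹),
        abs_of_nonneg (by positivity : (0:ℝ) ≤ ‖F x‖^2)]
      have h1 : (x^2)⁻¹ ≤ (ε^2)⁻¹ := by
        apply inv_anti₀ (by positivity)
        exact pow_le_pow_left₀ hε.le hx.1.le 2
      have h2 : ‖F x‖^2 ≤ M^2 := by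
        have := hMb x (hxmem x hx)
        nlinarith [norm_nonneg (F x)]
      exact mul_le_mul h1 h2 (by positivity) (by positivity)
  -- pointwise expansion
  have hexp : ∀ x ∈ A, ‖f₀ x - (x:ℂ)⁻¹ * F x‖^2
      = ‖f₀ x‖^2 - 2 * RCLike.re ((starRingEnd ℂ) (f₀ x) * ((x:ℂ)⁻¹ * F x))
        + (x^2)⁻¹ * ‖F x‖^2 := by
    intro x hx
    have hx0 : (0:ℝ) < x := lt_of_le_of_lt hε.le hx.1
    have h1 : ‖f₀ x - (x:ℂ)⁻¹ * F x‖^2 = ‖f₀ x‖^2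
        - 2 * RCLike.re ((starRingEnd ℂ) (f₀ x) * ((x:ℂ)⁻¹ * F x)) + ‖(x:ℂ)⁻¹ * F x‖^2 := by
      simpa [mul_comm] using @norm_sub_sq ℂ ℂ _ _ _ (f₀ x) ((x:ℂ)⁻¹ * F x)
    rw [h1]
    congr 1
    simp [norm_mul, norm_inv, Complex.norm_real, mul_pow, inv_pow, sq_abs]
  -- step 1 : expand the square
  have step1 : ∫ x in A, ‖f₀ x - (x:ℂ)⁻¹ * F x‖^2
      = (∫ x in A, ‖f₀ x‖^2)
        - 2 * (∫ x in A, RCLike.re ((starRingEnd ℂ) (f₀ x) * ((x:ℂ)⁻¹ * F x)))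
        + ∫ x in A, (x^2)⁻¹ * ‖F x‖^2 := by
    have isub : Integrable (fun x : ℝ => ‖f₀ x‖^2
        - 2 * RCLike.re ((starRingEnd ℂ) (f₀ x) * ((x:ℂ)⁻¹ * F x))) (volume.restrict A) :=
      i1.sub (i2.const_mul 2)
    rw [setIntegral_congr_fun measurableSet_Ioc hexp,
      integral_add isub i3, integral_sub i1 (i2.const_mul 2), integral_const_mul]
  -- the indicator kernels
  set T : Set (ℝ × ℝ) := {q : ℝ × ℝ | q.2 ≤ q.1 ∧ ε < q.1} with hT
  have hTm : MeasurableSet T :=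
    (measurableSet_le measurable_snd measurable_fst).inter
      (measurableSet_lt measurable_const measurable_fst)
  set Ψ : ℝ × ℝ → ℂ :=
    T.indicator (fun q => ((q.1 : ℂ))⁻¹ * ((starRingEnd ℂ) (f₀ q.1) * f₀ q.2)) with hΨ
  set Ψ' : ℝ × ℝ → ℂ :=
    T.indicator (fun q => ((q.1 : ℂ))⁻¹ * (f₀ q.1 * (starRingEnd ℂ) (f₀ q.2))) with hΨ'
  -- cross term representations
  have hx0le : ∀ x ∈ A, (0:ℝ) ≤ x := fun x hx => (lt_of_le_of_lt hε.le hx.1).le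
  have hC : ∫ x in A, (starRingEnd ℂ) (f₀ x) * ((x:ℂ)⁻¹ * F x) = ∫ q, Ψ q ∂P := by
    have h := cross_repr (fun t => (starRingEnd ℂ) (f₀ t)) f₀ hconjmeas hmeas hconjI hIOn hε hε1
    refine Eq.trans ?_ (h.trans rfl)
    apply setIntegral_congr_fun measurableSet_Ioc
    intro x hx
    dsimp only
    rw [hFset x (hx0le x hx)]
  have hCc : ∫ x in A, f₀ x * ((x:ℂ)⁻¹ * (starRingEnd ℂ) (F x)) = ∫ q, Ψ' q ∂P := by
    have h := cross_repr f₀ (fun t => (starRingEnd ℂ) (f₀ t)) hmeas hconjmeas hIOn hconjI hε hε1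
    refine Eq.trans ?_ (h.trans rfl)
    apply setIntegral_congr_fun measurableSet_Ioc
    intro x hx
    dsimp only
    rw [hFset x (hx0le x hx), ← integral_conj]
  have hconjC : (starRingEnd ℂ) (∫ x in A, (starRingEnd ℂ) (f₀ x) * ((x:ℂ)⁻¹ * F x))
      = ∫ x in A, f₀ x * ((x:ℂ)⁻¹ * (starRingEnd ℂ) (F x)) := by
    rw [← integral_conj]
    apply setIntegral_congr_fun measurableSet_Ioc
    intro x hx
    dsimp only
    rw [map_mul, map_mul, Complex.conj_conj, map_inv₀, Complex.conj_ofReal]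
  -- integrability over P
  have hφnorm : Integrable (fun q : ℝ × ℝ => ‖f₀ q.1‖ * ‖f₀ q.2‖) P :=
    hIOn.norm.mul_prod hIOn.norm
  have hφmeas : Measurable φ :=
    (RCLike.continuous_conj.measurable.comp (hmeas.measurable.comp measurable_fst)).mul
      (hmeas.measurable.comp measurable_snd)
  have hφint : Integrable φ P := by
    refine Integrable.mono' hφnorm hφmeas.aestronglyMeasurable (Eventually.of_forall ?_)
    intro q
    rw [hφ]
    simp [norm_mul]
  have hΨint : Integrable Ψ P := by
    refine Integrable.mono' (hφnorm.const_mul ε⁻¹) ?_ (Eventually.of_forall ?_)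
    · exact (((Complex.measurable_ofReal.comp measurable_fst).inv.mul
        ((RCLike.continuous_conj.measurable.comp (hmeas.measurable.comp measurable_fst)).mul
          (hmeas.measurable.comp measurable_snd))).indicator hTm).aestronglyMeasurable
    · intro q
      rw [hΨ]
      by_cases hq : q ∈ T
      · rw [Set.indicator_of_mem hq, norm_mul, norm_mul, RCLike.norm_conj, norm_inv,
          Complex.norm_real]
        have h2 : ‖q.1‖⁻¹ ≤ ε⁻¹ := by
          rw [Real.norm_eq_abs]
          exact inv_anti₀ hε (le_trans hq.2.le (le_abs_self _))
        gcongr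
      · rw [Set.indicator_of_notMem hq]
        simp only [norm_zero]
        positivity
  have hΨ'int : Integrable Ψ' P := by
    refine Integrable.mono' (hφnorm.const_mul ε⁻¹) ?_ (Eventually.of_forall ?_)
    · exact (((Complex.measurable_ofReal.comp measurable_fst).inv.mul
        ((hmeas.measurable.comp measurable_fst).mul
          (RCLike.continuous_conj.measurable.comp (hmeas.measurable.comp measurable_snd)))).indicator
            hTm).aestronglyMeasurable
    · intro q
      rw [hΨ']
      by_cases hq : q ∈ T
      · rw [Set.indicator_of_mem hq, norm_mul, norm_mul, RCLike.norm_conj, norm_inv,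
          Complex.norm_real]
        have h2 : ‖q.1‖⁻¹ ≤ ε⁻¹ := by
          rw [Real.norm_eq_abs]
          exact inv_anti₀ hε (le_trans hq.2.le (le_abs_self _))
        gcongr
      · rw [Set.indicator_of_notMem hq]
        simp only [norm_zero]
        positivity
  have hΨ'sw : Integrable (fun q : ℝ × ℝ => Ψ' q.swap) P := hΨ'int.swap
  have hεinv1 : (1:ℝ) ≤ ε⁻¹ := by simpa using inv_anti₀ hε hε1
  have hw1int : Integrable
      (fun q : ℝ × ℝ => φ q * (((max ε (max q.1 q.2))⁻¹ - 1 : ℝ) : ℂ)) P := by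
    refine Integrable.mono' (hφnorm.mul_const ε⁻¹) ?_ (Eventually.of_forall ?_)
    · exact (hφmeas.mul (Complex.measurable_ofReal.comp
        (((measurable_const.max (measurable_fst.max measurable_snd)).inv).sub
          measurable_const))).aestronglyMeasurable
    · intro q
      rw [norm_mul, Complex.norm_real]
      have hM0' : (0:ℝ) < max ε (max q.1 q.2) := lt_of_lt_of_le hε (le_max_left _ _)
      have h1 : (max ε (max q.1 q.2))⁻¹ ≤ ε⁻¹ := inv_anti₀ hε (le_max_left _ _)
      have h2 : (0:ℝ) < (max ε (max q.1 q.2))⁻¹ := by positivity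
      have h3 : |(max ε (max q.1 q.2))⁻¹ - 1| ≤ ε⁻¹ := by
        rw [abs_le]
        constructor <;> linarith
      have h4 : ‖φ q‖ = ‖f₀ q.1‖ * ‖f₀ q.2‖ := by rw [hφ]; simp [norm_mul]
      rw [h4]
      exact mul_le_mul_of_nonneg_left h3 (by positivity)
  have hindint : Integrable ((Set.Ioc (0:ℝ) ε ×ˢ Set.Ioc (0:ℝ) ε).indicator φ) P :=
    hφint.indicator (measurableSet_Ioc.prod measurableSet_Ioc)
  -- null sets
  have hdiag : ∀ᵐ q ∂P, q.1 ≠ q.2 := by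
    have hm : MeasurableSet {p : ℝ × ℝ | p.1 = p.2} :=
      measurableSet_eq_fun measurable_fst measurable_snd
    have h0 : P {q : ℝ × ℝ | q.1 = q.2} = 0 := by
      apply le_antisymm _ (by simp)
      calc P {q : ℝ × ℝ | q.1 = q.2}
          = (volume.prod volume) ({q : ℝ × ℝ | q.1 = q.2} ∩ S ×ˢ S) := by
            rw [hP, Measure.prod_restrict, Measure.restrict_apply hm]
        _ ≤ (volume.prod volume) {q : ℝ × ℝ | q.1 = q.2} :=
            measure_mono Set.inter_subset_left
        _ = 0 := vol_prod_diag_null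
    rw [ae_iff]
    convert h0 using 2
    ext q
    simp
  have haeSS : ∀ᵐ q ∂P, q ∈ S ×ˢ S := by
    have hmSS : MeasurableSet (S ×ˢ S) := measurableSet_Ioc.prod measurableSet_Ioc
    have := ae_restrict_mem (μ := volume.prod volume) hmSS
    rw [← Measure.prod_restrict] at this
    exact this
  -- a.e. pointwise combination
  have hae_eq : (fun q : ℝ × ℝ => Ψ q + Ψ' q.swap
        - φ q * (((max ε (max q.1 q.2))⁻¹ - 1 : ℝ) : ℂ))
      =ᵐ[P] (fun q : ℝ × ℝ => φ q
        - (((ε:ℝ) : ℂ))⁻¹ * (Set.Ioc (0:ℝ) ε ×ˢ Set.Ioc (0:ℝ) ε).indicator φ q) := by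
    filter_upwards [hdiag, haeSS] with q hne hq
    obtain ⟨hq1, hq2⟩ := hq
    rcases lt_or_gt_of_ne hne with hlt | hgt
    · -- q.1 < q.2
      have hm : max q.1 q.2 = q.2 := max_eq_right hlt.le
      have hΨ0 : Ψ q = 0 :=
        Set.indicator_of_notMem (fun hc => absurd hc.1 (not_le.2 hlt)) _
      by_cases hce : ε < q.2
      · have hmem : q.swap ∈ T := ⟨hlt.le, hce⟩
        have hΨ's : Ψ' q.swap = ((q.2 : ℂ))⁻¹ * (f₀ q.2 * (starRingEnd ℂ) (f₀ q.1)) :=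
          Set.indicator_of_mem hmem _
        have hmax : max ε (max q.1 q.2) = q.2 := by rw [hm]; exact max_eq_right hce.le
        have hnind : q ∉ Set.Ioc (0:ℝ) ε ×ˢ Set.Ioc (0:ℝ) ε :=
          fun hc => absurd hc.2.2 (not_le.2 hce)
        rw [hΨ0, hΨ's, hmax, Set.indicator_of_notMem hnind, hφ]
        push_cast
        ring
      · have hΨ's : Ψ' q.swap = 0 :=
          Set.indicator_of_notMem (fun hc => hce hc.2) _
        have hmax : max ε (max q.1 q.2) = ε := by rw [hm]; exact max_eq_left (not_lt.1 hce)
        have hind : q ∈ Set.Ioc (0:ℝ) ε ×ˢ Set.Ioc (0:ℝ) ε :=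
          ⟨⟨hq1.1, le_trans hlt.le (not_lt.1 hce)⟩, ⟨hq2.1, not_lt.1 hce⟩⟩
        rw [hΨ0, hΨ's, hmax, Set.indicator_of_mem hind, hφ]
        push_cast
        ring
    · -- q.2 < q.1
      have hm : max q.1 q.2 = q.1 := max_eq_left hgt.le
      have hΨ's0 : Ψ' q.swap = 0 :=
        Set.indicator_of_notMem (fun hc => absurd hc.1 (not_le.2 hgt)) _
      by_cases hce : ε < q.1
      · have hmem : q ∈ T := ⟨hgt.le, hce⟩
        have hΨv : Ψ q = ((q.1 : ℂ))⁻¹ * ((starRingEnd ℂ) (f₀ q.1) * f₀ q.2) :=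
          Set.indicator_of_mem hmem _
        have hmax : max ε (max q.1 q.2) = q.1 := by rw [hm]; exact max_eq_right hce.le
        have hnind : q ∉ Set.Ioc (0:ℝ) ε ×ˢ Set.Ioc (0:ℝ) ε :=
          fun hc => absurd hc.1.2 (not_le.2 hce)
        rw [hΨv, hΨ's0, hmax, Set.indicator_of_notMem hnind, hφ]
        push_cast
        ring
      · have hΨ0 : Ψ q = 0 :=
          Set.indicator_of_notMem (fun hc => hce hc.2) _
        have hmax : max ε (max q.1 q.2) = ε := by rw [hm]; exact max_eq_left (not_lt.1 hce)
        have hind : q ∈ Set.Ioc (0:ℝ) ε ×ˢ Set.Ioc (0:ℝ) ε :=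
          ⟨⟨hq1.1, not_lt.1 hce⟩, ⟨hq2.1, le_trans hgt.le (not_lt.1 hce)⟩⟩
        rw [hΨ0, hΨ's0, hmax, Set.indicator_of_mem hind, hφ]
        push_cast
        ring
  -- the combined double-integral identity
  have hkey : (∫ q, Ψ q ∂P) + (∫ q, (fun q : ℝ × ℝ => Ψ' q.swap) q ∂P)
      - (∫ q, φ q * (((max ε (max q.1 q.2))⁻¹ - 1 : ℝ) : ℂ) ∂P)
      = (∫ q, φ q ∂P) - (((ε:ℝ) : ℂ))⁻¹
        * ∫ q, (Set.Ioc (0:ℝ) ε ×ˢ Set.Ioc (0:ℝ) ε).indicator φ q ∂P := by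
    have e1 : ∫ q : ℝ × ℝ, (Ψ q + Ψ' q.swap
          - φ q * (((max ε (max q.1 q.2))⁻¹ - 1 : ℝ) : ℂ)) ∂P
        = ∫ q : ℝ × ℝ, (φ q - (((ε:ℝ) : ℂ))⁻¹
          * (Set.Ioc (0:ℝ) ε ×ˢ Set.Ioc (0:ℝ) ε).indicator φ q) ∂P :=
      integral_congr_ae hae_eq
    have hsumint : Integrable (fun q : ℝ × ℝ => Ψ q + Ψ' q.swap) P := hΨint.add hΨ'sw
    rw [integral_sub hsumint hw1int, integral_add hΨint hΨ'sw] at e1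
    rw [integral_sub hφint (hindint.const_mul _), integral_const_mul] at e1
    exact e1
  have hswap : ∫ q, Ψ' q ∂P = ∫ q, (fun q : ℝ × ℝ => Ψ' q.swap) q ∂P :=
    (integral_prod_swap Ψ').symm
  -- evaluating the total double integrals
  have hφtot : ∫ q, φ q ∂P = (starRingEnd ℂ) (F 1) * F 1 := by
    have h := integral_prod_mul (μ := volume.restrict S) (ν := volume.restrict S)
      (fun t => (starRingEnd ℂ) (f₀ t)) f₀
    refine Eq.trans (h.trans ?_) rfl
    rw [integral_conj]
    rw [hFset 1 zero_le_one]
  have hφε : ∫ q, (Set.Ioc (0:ℝ) ε ×ˢ Set.Ioc (0:ℝ) ε).indicator φ q ∂P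
      = (starRingEnd ℂ) (F ε) * F ε := by
    rw [integral_indicator (measurableSet_Ioc.prod measurableSet_Ioc), hP,
      Measure.prod_restrict, Measure.restrict_restrict (measurableSet_Ioc.prod measurableSet_Ioc),
      Set.prod_inter_prod,
      Set.inter_eq_self_of_subset_left (Set.Ioc_subset_Ioc_right hε1 : Set.Ioc (0:ℝ) ε ⊆ S),
      ← Measure.prod_restrict]
    have h := integral_prod_mul (μ := volume.restrict (Set.Ioc (0:ℝ) ε))
      (ν := volume.restrict (Set.Ioc (0:ℝ) ε)) (fun t => (starRingEnd ℂ) (f₀ t)) f₀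
    refine Eq.trans (h.trans ?_) rfl
    rw [integral_conj, hFset ε hε.le]
  -- D representation
  have hD : ∫ x in A, ((x:ℂ)^2)⁻¹ * ((starRingEnd ℂ) (F x) * F x)
      = ∫ q, φ q * (((max ε (max q.1 q.2))⁻¹ - 1 : ℝ) : ℂ) ∂P := by
    have h := D_repr f₀ hmeas hIOn hε hε1
    refine Eq.trans ?_ (h.trans rfl)
    apply setIntegral_congr_fun measurableSet_Ioc
    intro x hx
    dsimp only
    rw [hFset x (hx0le x hx), ← integral_conj]
  -- the complex identity
  have hfullC : (∫ x in A, (starRingEnd ℂ) (f₀ x) * ((x:ℂ)⁻¹ * F x))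
      + (starRingEnd ℂ) (∫ x in A, (starRingEnd ℂ) (f₀ x) * ((x:ℂ)⁻¹ * F x))
      - (∫ x in A, ((x:ℂ)^2)⁻¹ * ((starRingEnd ℂ) (F x) * F x))
      = (starRingEnd ℂ) (F 1) * F 1
        - (((ε:ℝ) : ℂ))⁻¹ * ((starRingEnd ℂ) (F ε) * F ε) := by
    rw [hconjC, hCc, hswap, hC, hD, hkey, hφtot, hφε]
  -- take real parts
  have hre : ∀ z : ℂ, RCLike.re ((starRingEnd ℂ) z * z) = ‖z‖^2 := fun z => by
    rw [mul_comm, Complex.mul_conj, Complex.normSq_eq_norm_sq, RCLike.re_to_complex, Complex.ofReal_re]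
  have hIcross : ∫ x in A, RCLike.re ((starRingEnd ℂ) (f₀ x) * ((x:ℂ)⁻¹ * F x))
      = RCLike.re (∫ x in A, (starRingEnd ℂ) (f₀ x) * ((x:ℂ)⁻¹ * F x)) := integral_re i2c
  have hIthird : ∫ x in A, (x^2)⁻¹ * ‖F x‖^2
      = RCLike.re (∫ x in A, ((x:ℂ)^2)⁻¹ * ((starRingEnd ℂ) (F x) * F x)) := by
    rw [← integral_re i3c]
    apply setIntegral_congr_fun measurableSet_Ioc
    intro x hx
    dsimp only
    have hzz : (starRingEnd ℂ) (F x) * F x = ((‖F x‖^2 : ℝ) : ℂ) := by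
      rw [mul_comm, Complex.mul_conj, Complex.normSq_eq_norm_sq]
    rw [hzz, show ((x:ℂ)^2)⁻¹ = (((x^2)⁻¹ : ℝ) : ℂ) from by push_cast; ring,
      ← Complex.ofReal_mul, RCLike.re_to_complex, Complex.ofReal_re]
  have hmain : ∫ x in A, ‖f₀ x - (x:ℂ)⁻¹ * F x‖^2
      = (∫ x in A, ‖f₀ x‖^2) - ‖F 1‖^2 + ε⁻¹ * ‖F ε‖^2 := by
    have hreC := congrArg Complex.re hfullC
    simp only [Complex.add_re, Complex.sub_re, Complex.conj_re] at hreC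
    have hred : RCLike.re (((ε:ℝ):ℂ)⁻¹ * ((starRingEnd ℂ) (F ε) * F ε))
        = ε⁻¹ * ‖F ε‖^2 := by
      rw [show (((ε:ℝ):ℂ))⁻¹ = (((ε⁻¹ : ℝ)) : ℂ) from by push_cast; ring]
      rw [show ((starRingEnd ℂ) (F ε) * F ε) = ((‖F ε‖^2 : ℝ) : ℂ) from by
        rw [mul_comm, Complex.mul_conj, Complex.normSq_eq_norm_sq]]
      rw [← Complex.ofReal_mul, RCLike.re_to_complex, Complex.ofReal_re]
    have hre1 : RCLike.re ((starRingEnd ℂ) (F 1) * F 1) = ‖F 1‖^2 := hre _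
    have hre2 : RCLike.re ((starRingEnd ℂ) (F ε) * F ε) = ‖F ε‖^2 := hre _
    rw [step1, hIcross, hIthird]
    simp only [RCLike.re_to_complex] at hre1 hred ⊢
    rw [hre1] at hreC
    rw [show Complex.re ((((ε:ℝ):ℂ))⁻¹ * ((starRingEnd ℂ) (F ε) * F ε)) = ε⁻¹ * ‖F ε‖^2
      from hred] at hreC
    linarith [hreC]
  rw [hmain]
  have hb1 : (∫ x in A, ‖f₀ x‖^2) ≤ ∫ x in S, ‖f₀ x‖^2 :=
    setIntegral_mono_set hsq (Eventually.of_forall fun x => by positivity)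
      (HasSubset.Subset.eventuallyLE hAS)
  have hb2 : ε⁻¹ * ‖F ε‖^2 ≤ ∫ x in Set.Ioc (0:ℝ) ε, ‖f₀ x‖^2 := by
    have hcs := cs_bound f₀ hL2 hε hε1
    rw [hFset ε hε.le]
    calc ε⁻¹ * ‖∫ t in Set.Ioc (0:ℝ) ε, f₀ t‖^2
        ≤ ε⁻¹ * (ε * ∫ t in Set.Ioc (0:ℝ) ε, ‖f₀ t‖^2) := by
          apply mul_le_mul_of_nonneg_left hcs (by positivity)
      _ = ∫ t in Set.Ioc (0:ℝ) ε, ‖f₀ t‖^2 := by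
          field_simp
  nlinarith [sq_nonneg ‖F 1‖]

end epsmain


/-- **`I − H` is a contraction on `L²[0,1]`.** For every `f ∈ L²[0,1]`,
`‖(I − H)f‖ ≤ ‖f‖`, where `(I − H)f` is the element `g` of `L²[0,1]`
represented by the function `x ↦ f x − (1/x) ∫₀ˣ f(t) dt`.  In other words,
the operator `I − H` has norm at most `1`. -/
theorem one_sub_hardy_contraction (f g : Lp ℂ 2 mu01)
    (hg : (g : ℝ → ℂ) =ᵐ[mu01]
      fun x => f x - (x : ℂ)⁻¹ * ∫ t in (0 : ℝ)..x, f t) :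
    ‖g‖ ≤ ‖f‖ := by
  have hμ : mu01 = volume.restrict (Set.Ioc (0:ℝ) 1) :=
    (Measure.restrict_congr_set Ioc_ae_eq_Icc).symm
  set S : Set ℝ := Set.Ioc (0:ℝ) 1 with hS
  set f₀ : ℝ → ℂ := S.indicator f with hf₀
  have hmeas : StronglyMeasurable f₀ := (Lp.stronglyMeasurable f).indicator measurableSet_Ioc
  have hL2 : MemLp f₀ 2 (volume.restrict S) := by
    rw [← hμ]; exact (Lp.memLp f).indicator measurableSet_Ioc
  have hsupp : ∀ x, x ∉ S → f₀ x = 0 := fun x hx => Set.indicator_of_notMem hx _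
  -- the norm-squared of an L² element as an integral
  have hnormsq : ∀ h : Lp ℂ 2 mu01, ‖h‖^2 = ∫ x, ‖(h : ℝ → ℂ) x‖^2 ∂mu01 := by
    intro h
    have h1 : ‖h‖^2 = RCLike.re (inner (𝕜 := ℂ) h h) := norm_sq_eq_re_inner (𝕜 := ℂ) h
    rw [h1, L2.inner_def, ← integral_re (L2.integrable_inner h h)]
    congr 1
    ext x
    simpa using (inner_self_eq_norm_sq (𝕜 := ℂ) ((h : ℝ → ℂ) x))
  -- integrability of ‖f₀‖², ‖g‖²
  have hgL2 : Integrable (fun x => ‖(g : ℝ → ℂ) x‖^2) mu01 := by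
    have := (Lp.memLp g).integrable_norm_rpow (by norm_num) (by norm_num)
    simpa [ENNReal.toReal_ofNat, Real.rpow_natCast] using this
  have hf₀L2 : Integrable (fun x => ‖f₀ x‖^2) (volume.restrict S) := by
    have := hL2.integrable_norm_rpow (by norm_num) (by norm_num)
    simpa [ENNReal.toReal_ofNat, Real.rpow_natCast] using this
  -- the truncation sets
  set s : ℕ → Set ℝ := fun n => Set.Ioc (1/(n+1) : ℝ) 1 with hs
  have hsm : ∀ n, MeasurableSet (s n) := fun n => measurableSet_Ioc
  have hsmono : Monotone s := by
    intro m n hmn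
    apply Set.Ioc_subset_Ioc_left
    apply one_div_le_one_div_of_le (by positivity)
    have : (m:ℝ) ≤ n := by exact_mod_cast hmn
    linarith
  have hsU : (⋃ n, s n) = S := by
    ext x
    simp only [Set.mem_iUnion, hs, Set.mem_Ioc, hS]
    constructor
    · rintro ⟨n, h1, h2⟩
      exact ⟨lt_trans (by positivity) h1, h2⟩
    · rintro ⟨h1, h2⟩
      obtain ⟨n, hn⟩ := exists_nat_one_div_lt h1
      exact ⟨n, by exact_mod_cast hn, h2⟩
  -- interval integral of f equals interval integral of f₀ for x ∈ [0,1]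
  have hFeq : ∀ x ∈ Set.Icc (0:ℝ) 1, (∫ t in (0:ℝ)..x, (f : ℝ → ℂ) t) = ∫ t in (0:ℝ)..x, f₀ t := by
    intro x hx
    rw [intervalIntegral.integral_of_le hx.1, intervalIntegral.integral_of_le hx.1]
    apply setIntegral_congr_fun measurableSet_Ioc
    intro t ht
    exact (Set.indicator_of_mem (Set.Ioc_subset_Ioc_right hx.2 ht) _).symm
  -- mu01 restricted to a subset of Icc 0 1 is volume restricted
  have hrestr : ∀ t : Set ℝ, MeasurableSet t → t ⊆ Set.Icc (0:ℝ) 1 →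
      mu01.restrict t = volume.restrict t := by
    intro t ht hts
    rw [show mu01 = volume.restrict (Set.Icc 0 1) from rfl, Measure.restrict_restrict ht,
      Set.inter_eq_self_of_subset_left hts]
  -- key bound for each n
  have key : ∀ n : ℕ, (∫ x in s n, ‖(g : ℝ → ℂ) x‖^2 ∂volume)
      ≤ (∫ x in S, ‖f₀ x‖^2) + ∫ x in Set.Ioc (0:ℝ) (1/(n+1) : ℝ), ‖f₀ x‖^2 := by
    intro n
    have hn0 : (0:ℝ) < 1/(n+1) := by positivity
    have hn1 : (1/(n+1) : ℝ) ≤ 1 := by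
      rw [div_le_one (by positivity)]
      simp
    have hsub : s n ⊆ Set.Icc (0:ℝ) 1 := fun x hx => ⟨le_of_lt (lt_trans hn0 hx.1), hx.2⟩
    have hcongr : ∫ x in s n, ‖(g : ℝ → ℂ) x‖^2 ∂volume
        = ∫ x in s n, ‖f₀ x - (x:ℂ)⁻¹ * ∫ t in (0:ℝ)..x, f₀ t‖^2 ∂volume := by
      rw [← hrestr (s n) (hsm n) hsub]
      apply integral_congr_ae
      have hg' : (g : ℝ → ℂ) =ᵐ[mu01.restrict (s n)]
          fun x => (f : ℝ → ℂ) x - (x : ℂ)⁻¹ * ∫ t in (0 : ℝ)..x, (f : ℝ → ℂ) t :=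
        ae_restrict_of_ae hg
      filter_upwards [hg', ae_restrict_mem (hsm n)] with x hx hxmem
      rw [hx, hFeq x (hsub hxmem), hf₀, Set.indicator_of_mem
        (Set.Ioc_subset_Ioc_left (le_of_lt hn0) hxmem) (f : ℝ → ℂ)]
    rw [hcongr]
    exact hardy_eps_bound f₀ hmeas hL2 hsupp hn0 hn1
  -- limits
  have hgtend : Tendsto (fun n => ∫ x in s n, ‖(g : ℝ → ℂ) x‖^2 ∂volume) atTop
      (𝓝 (∫ x in S, ‖(g : ℝ → ℂ) x‖^2 ∂volume)) := by
    have : IntegrableOn (fun x => ‖(g : ℝ → ℂ) x‖^2) (⋃ n, s n) volume := by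
      rw [hsU]
      show Integrable _ (volume.restrict S)
      rw [← hμ]; exact hgL2
    simpa [hsU] using tendsto_setIntegral_of_monotone hsm hsmono this
  have hδtend : Tendsto (fun n : ℕ => ∫ x in Set.Ioc (0:ℝ) (1/((n:ℝ)+1)), ‖f₀ x‖^2 ∂volume) atTop
      (𝓝 0) := by
    have h1 : Tendsto (fun n => ∫ x in s n, ‖f₀ x‖^2 ∂volume) atTop
        (𝓝 (∫ x in S, ‖f₀ x‖^2 ∂volume)) := by
      have : IntegrableOn (fun x => ‖f₀ x‖^2) (⋃ n, s n) volume := by rw [hsU]; exact hf₀L2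
      simpa [hsU] using tendsto_setIntegral_of_monotone hsm hsmono this
    have h2 : ∀ n : ℕ, ∫ x in Set.Ioc (0:ℝ) (1/((n:ℝ)+1)), ‖f₀ x‖^2 ∂volume
        = (∫ x in S, ‖f₀ x‖^2 ∂volume) - ∫ x in s n, ‖f₀ x‖^2 ∂volume := by
      intro n
      have hn0 : (0:ℝ) < 1/(n+1) := by positivity
      have hn1 : (1/(n+1) : ℝ) ≤ 1 := by rw [div_le_one (by positivity)]; simp
      have hunion : Set.Ioc (0:ℝ) (1/(n+1):ℝ) ∪ s n = S := Set.Ioc_union_Ioc_eq_Ioc hn0.le hn1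
      have hdisj : Disjoint (Set.Ioc (0:ℝ) (1/(n+1):ℝ)) (s n) := Set.Ioc_disjoint_Ioc_of_le le_rfl
      have := setIntegral_union hdisj (hsm n)
        (hf₀L2.mono_measure (Measure.restrict_mono (by rw [← hunion]; exact Set.subset_union_left) le_rfl))
        (hf₀L2.mono_measure (Measure.restrict_mono (by rw [← hunion]; exact Set.subset_union_right) le_rfl))
      rw [hunion] at this
      rw [this]; ring
    simp_rw [h2]
    have := (tendsto_const_nhds (x := ∫ x in S, ‖f₀ x‖^2 ∂volume)).sub h1
    rw [sub_self] at this
    exact this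
  have hmeq : ∀ φ : ℝ → ℝ, ∫ x, φ x ∂mu01 = ∫ x in S, φ x ∂volume := fun φ => by rw [hμ]
  have main : (∫ x, ‖(g : ℝ → ℂ) x‖^2 ∂mu01) ≤ ∫ x, ‖(f : ℝ → ℂ) x‖^2 ∂mu01 := by
    have hf : (∫ x, ‖(f : ℝ → ℂ) x‖^2 ∂mu01) = ∫ x in S, ‖f₀ x‖^2 ∂volume := by
      rw [hmeq]
      apply setIntegral_congr_fun measurableSet_Ioc
      intro x hx
      have h : f₀ x = (f : ℝ → ℂ) x := Set.indicator_of_mem hx _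
      simp only [h]
    have hgint : (∫ x, ‖(g : ℝ → ℂ) x‖^2 ∂mu01) = ∫ x in S, ‖(g : ℝ → ℂ) x‖^2 ∂volume :=
      hmeq _
    rw [hf, hgint]
    have := le_of_tendsto_of_tendsto' hgtend
      (((tendsto_const_nhds (x := ∫ x in S, ‖f₀ x‖^2 ∂volume)).add hδtend)) key
    simpa using this
  have h2 : ‖g‖^2 ≤ ‖f‖^2 := by rw [hnormsq f, hnormsq g]; exact main
  nlinarith [norm_nonneg g, norm_nonneg f, h2]
end

section
/- (Cauchy determinant formula) Let x₁, …, x_N and y₁, …, y_N be scalars with x_i ≠ y_j for all i, j, and let M be the N×N matrix with entries M_{ij} = 1/(x_i − y_j). Then det M = ∏_{1≤j<i≤N}(x_i − x_j)(y_j − y_i) / ∏_{1≤i,j≤N}(x_i − y_j). -/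
open Finset Matrix

private lemma cauchy_pair_split {M : Type*} [CommMonoid M] (n : ℕ)
    (f : Fin (n+1) → Fin (n+1) → M) :
    ∏ p ∈ univ.filter (fun p : Fin (n+1) × Fin (n+1) => p.2 < p.1), f p.1 p.2 =
    (∏ j : Fin n, f (Fin.last n) j.castSucc) *
      ∏ p ∈ univ.filter (fun p : Fin n × Fin n => p.2 < p.1), f p.1.castSucc p.2.castSucc := by
  rw [prod_filter, prod_filter, Fintype.prod_prod_type, Fintype.prod_prod_type,
    Fin.prod_univ_castSucc (f := fun i => ∏ j, if j < i then f i j else 1), mul_comm]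
  congr 1
  · rw [Fin.prod_univ_castSucc]
    simp [Fin.castSucc_lt_last, lt_irrefl]
  · refine Finset.prod_congr rfl fun i _ => ?_
    rw [Fin.prod_univ_castSucc]
    simp [Fin.castSucc_lt_castSucc_iff, (Fin.castSucc_lt_last _).asymm]

/-- **Cauchy determinant formula.** If `x i ≠ y j` for all `i, j`, then the
determinant of the Cauchy matrix with entries `1/(x i − y j)` equals
`∏_{j<i} (x i − x j)(y j − y i) / ∏_{i,j} (x i − y j)`. -/
theorem cauchy_determinant_formula {F : Type*} [Field F] (N : ℕ)
    (x y : Fin N → F) (h : ∀ i j, x i ≠ y j) :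
    (Matrix.of fun i j : Fin N => (x i - y j)⁻¹).det =
      (∏ p ∈ Finset.univ.filter (fun p : Fin N × Fin N => p.2 < p.1),
        ((x p.1 - x p.2) * (y p.2 - y p.1))) /
      ∏ i, ∏ j, (x i - y j) := by
  induction N with
  | zero => simp
  | succ n ih =>
    set L := Fin.last n with hL
    have hxy : ∀ i j, x i - y j ≠ 0 := fun i j => sub_ne_zero.mpr (h i j)
    set H : Matrix (Fin (n+1)) (Fin (n+1)) F :=
      Matrix.of (fun i j => if j = L then 1 else (x i - y j)⁻¹) with hH
    -- Step 1: column operations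
    have step1 : (Matrix.of fun i j : Fin (n+1) => (x i - y j)⁻¹).det =
        (∏ i, (x i - y L)⁻¹) *
          ((∏ j, (if j = L then 1 else y j - y L)) * H.det) := by
      have hB : (Matrix.of fun i j : Fin (n+1) => (x i - y j)⁻¹).det =
          (Matrix.of (fun i j : Fin (n+1) =>
            (x i - y L)⁻¹ * ((if j = L then 1 else y j - y L) * H i j))).det := by
        rw [← Matrix.det_transpose, ← Matrix.det_transpose (Matrix.of fun i j => _)]
        apply Matrix.det_eq_of_forall_row_eq_smul_add_const
          (fun j => if j = L then 0 else 1) L (if_pos rfl)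
        intro j i
        simp only [Matrix.transpose_apply, Matrix.of_apply, hH]
        by_cases hj : j = L
        · simp [hj]
        · have h1 : x i - y j ≠ 0 := hxy i j
          have h2 : x i - y L ≠ 0 := hxy i L
          simp only [hj, if_neg hj, if_pos rfl, mul_one, one_mul, ↓reduceIte]
          field_simp
          ring
      rw [hB]
      refine (Matrix.det_mul_column _ (Matrix.of fun i j =>
        (if j = L then 1 else y j - y L) * H i j)).trans ?_
      congr 1
      exact Matrix.det_mul_row _ H
    -- Step 2: row operations
    set K : Matrix (Fin (n+1)) (Fin (n+1)) F :=
      Matrix.of (fun i j => if i = L then H L j else H i j - H L j) with hK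
    have step2 : H.det = K.det := by
      apply Matrix.det_eq_of_forall_row_eq_smul_add_const
        (fun i => if i = L then 0 else 1) L (if_pos rfl)
      intro i j
      by_cases hi : i = L
      · simp [hK, hi]
      · simp [hK, hi]
    -- Step 3: expansion along last column
    have step3 : K.det = (K.submatrix Fin.castSucc Fin.castSucc).det := by
      rw [Matrix.det_succ_column K L, Finset.sum_eq_single L]
      · simp [hK, hH, hL, Fin.succAbove_last]
      · intro i _ hi
        have : K i L = 0 := by simp [hK, hH, hi]
        simp [this]
      · simp
    -- Step 4: factor the minor
    have step4 : (K.submatrix Fin.castSucc Fin.castSucc).det =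
        (∏ i : Fin n, (x L - x i.castSucc)) * ((∏ j : Fin n, (x L - y j.castSucc)⁻¹) *
          (Matrix.of fun i j : Fin n => (x i.castSucc - y j.castSucc)⁻¹).det) := by
      have hsub : K.submatrix Fin.castSucc Fin.castSucc =
          Matrix.of (fun i j : Fin n => (x L - x i.castSucc) *
            ((x L - y j.castSucc)⁻¹ *
              (Matrix.of fun i j : Fin n => (x i.castSucc - y j.castSucc)⁻¹) i j)) := by
        ext i j
        have hi : i.castSucc ≠ L := (Fin.castSucc_lt_last i).ne
        have hj : j.castSucc ≠ L := (Fin.castSucc_lt_last j).ne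
        have h1 : x i.castSucc - y j.castSucc ≠ 0 := hxy _ _
        have h2 : x L - y j.castSucc ≠ 0 := hxy _ _
        simp only [Matrix.submatrix_apply, hK, hH, Matrix.of_apply, if_neg hi, if_neg hj]
        rw [inv_sub_inv h1 h2, ← mul_inv, ← div_eq_mul_inv,
          div_eq_div_iff (mul_ne_zero h1 h2) (mul_ne_zero h2 h1)]
        ring
      rw [hsub]
      refine (Matrix.det_mul_column _ (Matrix.of fun i j : Fin n => (x L - y j.castSucc)⁻¹ *
        (Matrix.of fun i j : Fin n => (x i.castSucc - y j.castSucc)⁻¹) i j)).trans ?_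
      congr 1
      exact Matrix.det_mul_row _ _
    rw [step1, step2, step3, step4, ih _ _ (fun i j => h _ _)]
    -- Now pure product manipulation
    have e2 : (∏ j : Fin (n+1), (if j = L then 1 else y j - y L)) =
        ∏ j : Fin n, (y j.castSucc - y L) := by
      rw [Fin.prod_univ_castSucc]
      simp [hL, (Fin.castSucc_lt_last _).ne]
    have e3 : (∏ p ∈ Finset.univ.filter (fun p : Fin (n+1) × Fin (n+1) => p.2 < p.1),
          ((x p.1 - x p.2) * (y p.2 - y p.1))) =
        (∏ j : Fin n, ((x L - x j.castSucc) * (y j.castSucc - y L))) *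
          ∏ p ∈ Finset.univ.filter (fun p : Fin n × Fin n => p.2 < p.1),
            ((x p.1.castSucc - x p.2.castSucc) * (y p.2.castSucc - y p.1.castSucc)) :=
      cauchy_pair_split n (fun i j => (x i - x j) * (y j - y i))
    have e4 : (∏ i : Fin (n+1), ∏ j : Fin (n+1), (x i - y j)) =
        ((∏ i : Fin n, ∏ j : Fin n, (x i.castSucc - y j.castSucc)) *
          (∏ i : Fin n, (x i.castSucc - y L))) * (∏ j : Fin (n+1), (x L - y j)) := by
      rw [Fin.prod_univ_castSucc (f := fun i => ∏ j, (x i - y j))]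
      congr 1
      rw [← Finset.prod_mul_distrib]
      exact Finset.prod_congr rfl fun i _ => Fin.prod_univ_castSucc fun j => x i.castSucc - y j
    have e5 : (∏ j : Fin (n+1), (x L - y j)) =
        (∏ j : Fin n, (x L - y j.castSucc)) * (x L - y L) :=
      Fin.prod_univ_castSucc fun j => x L - y j
    have e6 : (∏ i : Fin (n+1), (x i - y L)) =
        (∏ i : Fin n, (x i.castSucc - y L)) * (x L - y L) :=
      Fin.prod_univ_castSucc fun i => x i - y L
    have e1 : (∏ i : Fin (n+1), (x i - y L)⁻¹) = (∏ i : Fin (n+1), (x i - y L))⁻¹ :=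
      Finset.prod_inv_distrib _
    have e7 : (∏ j : Fin n, (x L - y j.castSucc)⁻¹) =
        (∏ j : Fin n, (x L - y j.castSucc))⁻¹ :=
      Finset.prod_inv_distrib _
    have e8 : (∏ j : Fin n, ((x L - x j.castSucc) * (y j.castSucc - y L))) =
        (∏ j : Fin n, (x L - x j.castSucc)) * (∏ j : Fin n, (y j.castSucc - y L)) :=
      Finset.prod_mul_distrib
    have hQ : (∏ i : Fin n, ∏ j : Fin n, (x i.castSucc - y j.castSucc)) ≠ 0 :=
      Finset.prod_ne_zero_iff.mpr fun i _ =>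
        Finset.prod_ne_zero_iff.mpr fun j _ => hxy _ _
    have hf : (∏ i : Fin n, (x i.castSucc - y L)) ≠ 0 :=
      Finset.prod_ne_zero_iff.mpr fun i _ => hxy _ _
    have hd : (∏ j : Fin n, (x L - y j.castSucc)) ≠ 0 :=
      Finset.prod_ne_zero_iff.mpr fun j _ => hxy _ _
    have hll : x L - y L ≠ 0 := hxy _ _
    rw [e1, e2, e3, e4, e5, e6, e7, e8]
    field_simp
end

section
/- (Baby Brodskii–Donoghue theorem) Let 𝓜 be a closed subspace of L²[0,1] that is invariant under both the multiplication operator M_x and the Volterra operator V. Then 𝓜 = L²[s,1] for some s ∈ [0,1]. -/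
open MeasureTheory Filter Topology

open scoped ContDiff

namespace BBD

open Set intervalIntegral

lemma mu01_def : mu01 = volume.restrict (Set.Icc 0 1) := rfl

instance : IsFiniteMeasure mu01 :=
  ⟨by rw [mu01_def, Measure.restrict_apply_univ]; simp [Real.volume_Icc]⟩

lemma mu01_ae_mem : ∀ᵐ x ∂mu01, x ∈ Set.Icc (0:ℝ) 1 := by
  rw [mu01_def]; exact ae_restrict_mem measurableSet_Icc

lemma mu01_null_singleton (a : ℝ) : mu01 {a} = 0 := by
  rw [mu01_def, Measure.restrict_apply' measurableSet_Icc]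
  exact measure_mono_null Set.inter_subset_left Real.volume_singleton

lemma mu01_ae_ne (a : ℝ) : ∀ᵐ x ∂mu01, x ≠ a := by
  rw [ae_iff]
  simpa using mu01_null_singleton a

lemma ae_mu01_of_ae_volume {p : ℝ → Prop} (h : ∀ᵐ x ∂(volume : Measure ℝ), p x) :
    ∀ᵐ x ∂mu01, p x := by
  rw [mu01_def]; exact ae_restrict_of_ae h

lemma mu01_null_to_volume {E : Set ℝ} (h : mu01 E = 0) :
    volume (E ∩ Set.Icc 0 1) = 0 := by
  rw [mu01_def, Measure.restrict_apply' measurableSet_Icc] at h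
  exact h

lemma integ (f : MeasureTheory.Lp ℂ 2 mu01) : Integrable f mu01 :=
  (Lp.memLp f).integrable (by norm_num)

/-- Extension by zero outside `[0,1]`. -/
noncomputable def hat (f : ℝ → ℂ) : ℝ → ℂ := Set.indicator (Set.Icc 0 1) f

lemma integrable_hat {f : ℝ → ℂ} (hf : Integrable f mu01) :
    Integrable (hat f) volume := by
  rw [hat, integrable_indicator_iff measurableSet_Icc]
  rw [mu01_def] at hf; exact hf

lemma intervalIntegrable_hat {f : ℝ → ℂ} (hf : Integrable f mu01) (a b : ℝ) :
    IntervalIntegrable (hat f) volume a b :=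
  (integrable_hat hf).intervalIntegrable

lemma setIntegral_mu01 (φ : ℝ → ℂ) {s : Set ℝ} (hs : MeasurableSet s)
    (h : s ⊆ Set.Icc 0 1) :
    ∫ t in s, φ t ∂mu01 = ∫ t in s, φ t ∂volume := by
  rw [mu01_def, Measure.restrict_restrict hs, Set.inter_eq_left.mpr h]

/-- The primitive of (the extension by zero of) `f`. -/
noncomputable def prim (f : ℝ → ℂ) : ℝ → ℂ := fun x => ∫ t in (0:ℝ)..x, hat f t

lemma prim_continuous {f : ℝ → ℂ} (hf : Integrable f mu01) : Continuous (prim f) :=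
  intervalIntegral.continuous_primitive (fun a b => intervalIntegrable_hat hf a b) 0

lemma prim_spec (f : ℝ → ℂ) {x : ℝ} (hx : x ∈ Set.Icc (0:ℝ) 1) :
    prim f x = ∫ t in (0:ℝ)..x, f t := by
  refine intervalIntegral.integral_congr fun t ht => ?_
  rw [Set.uIcc_of_le hx.1] at ht
  exact Set.indicator_of_mem (Set.Icc_subset_Icc_right hx.2 ht) f

lemma prim_eq_setIntegral (f : ℝ → ℂ) {x : ℝ} (hx : x ∈ Set.Icc (0:ℝ) 1) :
    prim f x = ∫ t in Set.Ioc 0 x, f t ∂mu01 := by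
  have hsub : Set.Ioc (0:ℝ) x ⊆ Set.Icc 0 1 :=
    fun t ht => ⟨le_of_lt ht.1, le_trans ht.2 hx.2⟩
  rw [prim, intervalIntegral.integral_of_le hx.1, setIntegral_mu01 f measurableSet_Ioc hsub]
  exact setIntegral_congr_fun measurableSet_Ioc (fun t ht => Set.indicator_of_mem (hsub ht) f)

lemma prim_memℒp {f : ℝ → ℂ} (hf : Integrable f mu01) : MemLp (prim f) 2 mu01 := by
  refine MemLp.of_bound ((prim_continuous hf).aestronglyMeasurable)
    (∫ t, ‖hat f t‖ ∂volume) ?_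
  filter_upwards [mu01_ae_mem] with x hx
  rw [prim, intervalIntegral.integral_of_le hx.1]
  calc ‖∫ t in Set.Ioc 0 x, hat f t ∂volume‖
      ≤ ∫ t in Set.Ioc 0 x, ‖hat f t‖ ∂volume := norm_integral_le_integral_norm _
    _ ≤ ∫ t, ‖hat f t‖ ∂volume :=
        setIntegral_le_integral (integrable_hat hf).norm
          (Filter.Eventually.of_forall fun t => norm_nonneg _)

/-- Functions with interval integral zero over every interval vanish a.e.
(Lebesgue differentiation). -/
lemma ae_zero_of_intervals {ψ : ℝ → ℂ} (hψ : Integrable ψ volume)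
    (h : ∀ a b : ℝ, ∫ x in a..b, ψ x = 0) : ∀ᵐ x ∂(volume : Measure ℝ), ψ x = 0 := by
  filter_upwards [(Besicovitch.vitaliFamily (volume : Measure ℝ)).ae_tendsto_average
    hψ.locallyIntegrable] with x hx
  have hx2 : Tendsto (fun r : ℝ => ⨍ y in Metric.closedBall x r, ψ y)
      (𝓝[>] (0:ℝ)) (𝓝 (ψ x)) := hx.comp (Besicovitch.tendsto_filterAt volume x)
  have hzero : ∀ᶠ r in 𝓝[>] (0:ℝ),
      (⨍ y in Metric.closedBall x r, ψ y) = (0:ℂ) := by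
    filter_upwards [self_mem_nhdsWithin] with r (hr : (0:ℝ) < r)
    have : ∫ y in Metric.closedBall x r, ψ y = 0 := by
      rw [Real.closedBall_eq_Icc, integral_Icc_eq_integral_Ioc,
        ← intervalIntegral.integral_of_le (by linarith)]
      exact h _ _
    rw [setAverage_eq, this, smul_zero]
  exact tendsto_nhds_unique (hx2.congr' hzero) tendsto_const_nhds

/-- A continuous function vanishing a.e. with respect to `mu01` vanishes on `[0,1]`. -/
lemma eq_zero_on_Icc {φ : ℝ → ℂ} (hφ : Continuous φ) (h : ∀ᵐ x ∂mu01, φ x = 0) :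
    ∀ x ∈ Set.Icc (0:ℝ) 1, φ x = 0 := by
  intro x₀ hx₀
  by_contra hne
  have hopen : IsOpen {x : ℝ | φ x ≠ 0} := isOpen_compl_iff.mpr (isClosed_eq hφ continuous_const)
  obtain ⟨ε, hε, hball⟩ := Metric.isOpen_iff.mp hopen x₀ hne
  have hnull : mu01 {x : ℝ | φ x ≠ 0} = 0 := by
    rw [ae_iff] at h; exact h
  -- produce an interval of positive measure inside the ball and inside [0,1]
  obtain ⟨a, b, hab, hsub⟩ :
      ∃ a b : ℝ, a < b ∧ Set.Ioo a b ⊆ Metric.ball x₀ ε ∩ Set.Icc 0 1 := by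
    rcases lt_or_eq_of_le hx₀.2 with h1 | h1
    · refine ⟨x₀, min (x₀ + ε) 1, by simp [hε, h1], fun y hy => ?_⟩
      constructor
      · rw [Real.ball_eq_Ioo]
        exact ⟨by linarith [hy.1, hε], lt_of_lt_of_le hy.2 (min_le_left _ _)⟩
      · exact ⟨le_of_lt (lt_of_le_of_lt hx₀.1 hy.1), le_of_lt (lt_of_lt_of_le hy.2 (min_le_right _ _))⟩
    · refine ⟨max (x₀ - ε) 0, x₀, max_lt (by linarith) (by linarith), fun y hy => ?_⟩
      have h0 : (0:ℝ) ≤ y := le_of_lt (lt_of_le_of_lt (le_max_right _ _) hy.1)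
      have hball' : y ∈ Metric.ball x₀ ε := by
        rw [Real.ball_eq_Ioo]
        exact ⟨lt_of_le_of_lt (le_max_left _ _) hy.1, by linarith [hy.2, hε]⟩
      exact ⟨hball', h0, by linarith [hy.2]⟩
  have hposmeas : 0 < mu01 (Set.Ioo a b) := by
    rw [mu01_def, Measure.restrict_apply' measurableSet_Icc]
    have : Set.Ioo a b ∩ Set.Icc 0 1 = Set.Ioo a b :=
      Set.inter_eq_left.mpr fun y hy => (hsub hy).2
    rw [this, Real.volume_Ioo]
    simpa using hab
  have : mu01 (Set.Ioo a b) = 0 :=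
    measure_mono_null (fun y hy => hball (hsub hy).1) hnull
  rw [this] at hposmeas; exact lt_irrefl _ hposmeas

lemma integrable_pow_mul {F : ℝ → ℂ} (hF : Integrable F mu01) (n : ℕ) :
    Integrable (fun x : ℝ => (x:ℂ)^n * F x) mu01 := by
  refine hF.bdd_mul (c := 1) ((Complex.continuous_ofReal.pow n).aestronglyMeasurable) ?_
  filter_upwards [mu01_ae_mem] with x hx
  rw [norm_pow, Complex.norm_real, Real.norm_eq_abs]
  exact pow_le_one₀ (abs_nonneg _) (abs_le.mpr ⟨by linarith [hx.1], hx.2⟩)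

lemma integrable_cont_mul {F : ℝ → ℂ} (hF : Integrable F mu01) {φ : ℝ → ℝ}
    (hφ : Continuous φ) : Integrable (fun x => (φ x : ℂ) * F x) mu01 := by
  obtain ⟨C, hC⟩ := (isCompact_Icc (a := (0:ℝ)) (b := 1)).exists_bound_of_continuousOn
    hφ.continuousOn
  refine hF.bdd_mul (c := C) (Complex.continuous_ofReal.comp hφ).aestronglyMeasurable ?_
  filter_upwards [mu01_ae_mem] with x hx
  rw [Complex.norm_real]
  exact hC x hx

/-- A function in `L¹(mu01)` with vanishing moments vanishes a.e. -/
lemma moment_zero {F : ℝ → ℂ} (hF : Integrable F mu01)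
    (h : ∀ n : ℕ, ∫ x, (x:ℂ)^n * F x ∂mu01 = 0) : ∀ᵐ x ∂mu01, F x = 0 := by
  have hpoly : ∀ p : Polynomial ℝ, ∫ x, ((Polynomial.eval x p : ℝ) : ℂ) * F x ∂mu01 = 0 := by
    intro p
    have hrw : ∀ x : ℝ, ((Polynomial.eval x p : ℝ) : ℂ) * F x
        = ∑ i ∈ Finset.range (p.natDegree + 1), (p.coeff i : ℂ) * ((x:ℂ)^i * F x) := by
      intro x
      rw [Polynomial.eval_eq_sum_range]
      push_cast
      rw [Finset.sum_mul]
      exact Finset.sum_congr rfl fun i _ => by ring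
    simp_rw [hrw]
    rw [MeasureTheory.integral_finset_sum _ (fun i _ => (integrable_pow_mul hF i).const_mul _)]
    refine Finset.sum_eq_zero fun i _ => ?_
    rw [MeasureTheory.integral_const_mul, h i, mul_zero]
  have hcont : ∀ φ : ℝ → ℝ, Continuous φ → ∫ x, (φ x : ℂ) * F x ∂mu01 = 0 := by
    intro φ hφ
    set L := ∫ x, ‖F x‖ ∂mu01 with hLdef
    have hL0 : 0 ≤ L := integral_nonneg fun x => norm_nonneg _
    clear_value L
    by_contra hne
    have hpos : 0 < ‖∫ x, (φ x : ℂ) * F x ∂mu01‖ := norm_pos_iff.mpr hne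
    set ε := ‖∫ x, (φ x : ℂ) * F x ∂mu01‖ with hεdef
    clear_value ε
    obtain ⟨p, hp⟩ := exists_polynomial_near_of_continuousOn 0 1 φ hφ.continuousOn
      (ε / (2 * (L + 1))) (div_pos hpos (by linarith))
    have h1 : Integrable (fun x => (φ x : ℂ) * F x) mu01 := integrable_cont_mul hF hφ
    have h2 : Integrable (fun x => ((Polynomial.eval x p : ℝ) : ℂ) * F x) mu01 :=
      integrable_cont_mul hF p.continuous_aeval
    have key : ε ≤ ε / (2 * (L + 1)) * L := by
      have heq : ∫ x, (φ x : ℂ) * F x ∂mu01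
          = ∫ x, ((φ x : ℂ) - ((Polynomial.eval x p : ℝ) : ℂ)) * F x ∂mu01 := by
        simp_rw [sub_mul]
        rw [integral_sub h1 h2, hpoly p, sub_zero]
      conv_lhs => rw [hεdef, heq]
      calc ‖∫ x, ((φ x : ℂ) - ((Polynomial.eval x p : ℝ) : ℂ)) * F x ∂mu01‖
          ≤ ∫ x, ‖((φ x : ℂ) - ((Polynomial.eval x p : ℝ) : ℂ)) * F x‖ ∂mu01 :=
            norm_integral_le_integral_norm _
        _ ≤ ∫ x, ε / (2 * (L + 1)) * ‖F x‖ ∂mu01 := by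
            have h12 : Integrable
                (fun x : ℝ => ((φ x : ℂ) - ((Polynomial.eval x p : ℝ) : ℂ)) * F x) mu01 := by
              refine (h1.sub h2).congr (Filter.Eventually.of_forall fun x => ?_)
              simp [sub_mul]
            refine MeasureTheory.integral_mono_ae h12.norm (hF.norm.const_mul _) ?_
            filter_upwards [mu01_ae_mem] with x hx
            rw [norm_mul]
            refine mul_le_mul_of_nonneg_right ?_ (norm_nonneg _)
            rw [← Complex.ofReal_sub, Complex.norm_real, Real.norm_eq_abs]
            have := hp x hx
            rw [abs_sub_comm] at this
            exact le_of_lt this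
        _ = ε / (2 * (L + 1)) * L := by rw [MeasureTheory.integral_const_mul, ← hLdef]
    have hlt : ε / (2 * (L + 1)) * L < ε := by
      rw [div_mul_eq_mul_div, div_lt_iff₀ (by linarith : (0:ℝ) < 2 * (L + 1))]
      nlinarith
    linarith
  have hsm : ∀ (g : ℝ → ℝ), ContDiff ℝ ∞ g → HasCompactSupport g →
      ∫ x, g x • hat F x ∂(volume : Measure ℝ) = 0 := by
    intro ginst hg _
    have hrw : ∀ x, ginst x • hat F x
        = Set.indicator (Set.Icc 0 1) (fun x => (ginst x : ℂ) * F x) x := by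
      intro x
      by_cases hx : x ∈ Set.Icc (0:ℝ) 1
      · simp [hat, Set.indicator_of_mem hx, Complex.real_smul]
      · simp [hat, Set.indicator_of_notMem hx]
    simp_rw [hrw]
    rw [MeasureTheory.integral_indicator measurableSet_Icc, ← mu01_def]
    exact hcont ginst hg.continuous
  have hhat := ae_eq_zero_of_integral_contDiff_smul_eq_zero
    (integrable_hat hF).locallyIntegrable hsm
  filter_upwards [mu01_ae_mem, ae_mu01_of_ae_volume hhat] with x hx h0
  rw [hat, Set.indicator_of_mem hx] at h0
  exact h0

section LpLemmas

lemma pow_mem (M : Submodule ℂ (MeasureTheory.Lp ℂ 2 mu01))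
    (hMx : ∀ f ∈ M, ∀ g : MeasureTheory.Lp ℂ 2 mu01,
      ((g : ℝ → ℂ) =ᵐ[mu01] fun x => (x : ℂ) * f x) → g ∈ M) :
    ∀ f ∈ M, ∀ n : ℕ, ∃ fn, fn ∈ M ∧
      ((fn : ℝ → ℂ) =ᵐ[mu01] fun x : ℝ => (x:ℂ)^n * f x) := by
  intro f hf n
  induction n with
  | zero => exact ⟨f, hf, Filter.Eventually.of_forall fun x => by simp⟩
  | succ n ih =>
    obtain ⟨fn, hfnM, hfn⟩ := ih
    have hm : MemLp (fun x : ℝ => (x:ℂ) * fn x) 2 mu01 := by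
      refine MemLp.of_le (Lp.memLp fn)
        (Complex.continuous_ofReal.aestronglyMeasurable.mul (Lp.aestronglyMeasurable fn)) ?_
      filter_upwards [mu01_ae_mem] with x hx
      rw [norm_mul, Complex.norm_real, Real.norm_eq_abs]
      exact mul_le_of_le_one_left (norm_nonneg _) (abs_le.mpr ⟨by linarith [hx.1], hx.2⟩)
    refine ⟨hm.toLp _, hMx fn hfnM _ hm.coeFn_toLp, ?_⟩
    filter_upwards [hm.coeFn_toLp, hfn] with x h1 h2
    rw [h1, h2, pow_succ]
    ring

lemma prim_mem (M : Submodule ℂ (MeasureTheory.Lp ℂ 2 mu01))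
    (hV : ∀ f ∈ M, ∀ g : MeasureTheory.Lp ℂ 2 mu01,
      ((g : ℝ → ℂ) =ᵐ[mu01] fun x => ∫ t in (0 : ℝ)..x, f t) → g ∈ M) :
    ∀ f ∈ M, ∃ F, F ∈ M ∧ ((F : ℝ → ℂ) =ᵐ[mu01] prim (⇑f)) := by
  intro f hf
  have hm : MemLp (prim (⇑f)) 2 mu01 := prim_memℒp (integ f)
  refine ⟨hm.toLp _, hV f hf _ ?_, hm.coeFn_toLp⟩
  filter_upwards [hm.coeFn_toLp, mu01_ae_mem] with x h1 hx
  rw [h1, prim_spec _ hx]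

/-- The conjugate of the extension by zero of `g`. -/
noncomputable def psi (g : MeasureTheory.Lp ℂ 2 mu01) : ℝ → ℂ :=
  fun x => (starRingEnd ℂ) (hat (⇑g) x)

lemma integrable_psi (g : MeasureTheory.Lp ℂ 2 mu01) : Integrable (psi g) volume := by
  refine Integrable.mono' (integrable_hat (integ g)).norm
    (Complex.continuous_conj.comp_aestronglyMeasurable
      (integrable_hat (integ g)).aestronglyMeasurable) ?_
  exact Filter.Eventually.of_forall fun x => by simp [psi]

/-- `Hg g t = ∫ₜ¹ conj ĝ`. -/
noncomputable def Hg (g : MeasureTheory.Lp ℂ 2 mu01) : ℝ → ℂ :=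
  fun t => ∫ x in t..(1:ℝ), psi g x

lemma Hg_continuous (g : MeasureTheory.Lp ℂ 2 mu01) : Continuous (Hg g) := by
  have h1 : Hg g = fun t => -∫ x in (1:ℝ)..t, psi g x := by
    funext t
    rw [Hg, intervalIntegral.integral_symm]
  rw [h1]
  exact (intervalIntegral.continuous_primitive
    (fun a b => (integrable_psi g).intervalIntegrable) 1).neg

lemma Hg_bound (g : MeasureTheory.Lp ℂ 2 mu01) (t : ℝ) :
    ‖Hg g t‖ ≤ ∫ x, ‖psi g x‖ ∂volume := by
  refine le_trans (intervalIntegral.norm_integral_le_integral_norm_uIoc) ?_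
  exact setIntegral_le_integral (integrable_psi g).norm
    (Filter.Eventually.of_forall fun t => norm_nonneg _)

lemma Hg_key (g : MeasureTheory.Lp ℂ 2 mu01) {t : ℝ} (ht : t ∈ Set.Ioc (0:ℝ) 1) :
    ∫ x in Set.Ici t, (starRingEnd ℂ) (g x) ∂mu01 = Hg g t := by
  have hset : Set.Ici t ∩ Set.Icc 0 1 = Set.Icc t 1 :=
    Set.ext fun y => ⟨fun h => ⟨h.1, h.2.2⟩,
      fun h => ⟨h.1, le_trans (le_of_lt ht.1) h.1, h.2⟩⟩
  have hres : ∀ φ : ℝ → ℂ, ∫ x in Set.Ici t, φ x ∂mu01 = ∫ x in Set.Icc t 1, φ x ∂volume := by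
    intro φ
    rw [mu01_def, Measure.restrict_restrict measurableSet_Ici, hset]
  rw [hres, integral_Icc_eq_integral_Ioc, Hg, intervalIntegral.integral_of_le ht.2]
  refine setIntegral_congr_fun measurableSet_Ioc fun x hx => ?_
  rw [psi, hat, Set.indicator_of_mem (show x ∈ Set.Icc (0:ℝ) 1 from ⟨le_of_lt (lt_trans ht.1 hx.1), hx.2⟩)]

lemma integrable_mul_conj (f g : MeasureTheory.Lp ℂ 2 mu01) :
    Integrable (fun x : ℝ => f x * (starRingEnd ℂ) (g x)) mu01 := by
  have := MeasureTheory.L2.integrable_inner (𝕜 := ℂ) g f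
  refine this.congr (Filter.Eventually.of_forall fun x => ?_)
  simp [RCLike.inner_apply, mul_comm]

lemma fubini_key (f g : MeasureTheory.Lp ℂ 2 mu01) :
    ∫ x, prim (⇑f) x * (starRingEnd ℂ) (g x) ∂mu01 = ∫ t, f t * Hg g t ∂mu01 := by
  classical
  set A : Set (ℝ × ℝ) := {p : ℝ × ℝ | p.2 ∈ Set.Ioc 0 p.1} with hA
  have hAm : MeasurableSet A :=
    (measurableSet_lt measurable_const measurable_snd).inter
      (measurableSet_le measurable_snd measurable_fst)
  set G : ℝ × ℝ → ℂ := A.indicator (fun p => f p.2 * (starRingEnd ℂ) (g p.1)) with hG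
  have hconjint : Integrable (fun x : ℝ => (starRingEnd ℂ) (g x)) mu01 := by
    refine Integrable.mono' (integ g).norm
      (Complex.continuous_conj.comp_aestronglyMeasurable (Lp.aestronglyMeasurable g)) ?_
    exact Filter.Eventually.of_forall fun x => by simp
  have hGint : Integrable G (mu01.prod mu01) := by
    have hbase : Integrable (fun p : ℝ × ℝ => (starRingEnd ℂ) (g p.1) * f p.2)
        (mu01.prod mu01) := Integrable.mul_prod hconjint (integ f)
    have hbase' : Integrable (fun p : ℝ × ℝ => f p.2 * (starRingEnd ℂ) (g p.1))
        (mu01.prod mu01) :=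
      hbase.congr (Filter.Eventually.of_forall fun p => mul_comm _ _)
    exact hbase'.indicator hAm
  have hL : ∫ x, prim (⇑f) x * (starRingEnd ℂ) (g x) ∂mu01
      = ∫ x, ∫ t, G (x, t) ∂mu01 ∂mu01 := by
    refine integral_congr_ae ?_
    filter_upwards [mu01_ae_mem] with x hx
    rw [prim_eq_setIntegral (⇑f) hx, ← MeasureTheory.integral_indicator measurableSet_Ioc,
      ← MeasureTheory.integral_mul_const]
    refine integral_congr_ae (Filter.Eventually.of_forall fun t => ?_)
    simp only [hG, hA, Set.indicator_apply, Set.mem_Ioc, Set.mem_setOf_eq]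
    split_ifs
    · rfl
    · rw [zero_mul]
  have hswap : ∫ x, ∫ t, G (x, t) ∂mu01 ∂mu01 = ∫ t, ∫ x, G (x, t) ∂mu01 ∂mu01 :=
    MeasureTheory.integral_integral_swap hGint
  have hR : ∫ t, ∫ x, G (x, t) ∂mu01 ∂mu01 = ∫ t, f t * Hg g t ∂mu01 := by
    refine integral_congr_ae ?_
    filter_upwards [mu01_ae_mem, mu01_ae_ne 0] with t ht ht0
    have htpos : 0 < t := lt_of_le_of_ne ht.1 (Ne.symm ht0)
    have hptw : ∀ x, G (x, t)
        = Set.indicator (Set.Ici t) (fun x => f t * (starRingEnd ℂ) (g x)) x := by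
      intro x
      simp only [hG, hA, Set.indicator_apply, Set.mem_Ioc, Set.mem_setOf_eq, Set.mem_Ici,
        htpos, true_and]
    simp_rw [hptw]
    rw [MeasureTheory.integral_indicator measurableSet_Ici,
      MeasureTheory.integral_const_mul, Hg_key g ⟨htpos, ht.2⟩]
  rw [hL, hswap, hR]

end LpLemmas

lemma crux (M : Submodule ℂ (MeasureTheory.Lp ℂ 2 mu01))
    (hMx : ∀ f ∈ M, ∀ g : MeasureTheory.Lp ℂ 2 mu01,
      ((g : ℝ → ℂ) =ᵐ[mu01] fun x => (x : ℂ) * f x) → g ∈ M)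
    (hV : ∀ f ∈ M, ∀ g : MeasureTheory.Lp ℂ 2 mu01,
      ((g : ℝ → ℂ) =ᵐ[mu01] fun x => ∫ t in (0 : ℝ)..x, f t) → g ∈ M)
    {s : ℝ} (hs0 : 0 ≤ s) (hs1 : s ≤ 1)
    (hvan : ∀ f ∈ M, ∀ᵐ x ∂mu01, x ∈ Set.Icc 0 s → f x = 0)
    (hmax : ∀ u : ℝ, 0 ≤ u → u ≤ 1 →
      (∀ f ∈ M, ∀ᵐ x ∂mu01, x ∈ Set.Icc 0 u → f x = 0) → u ≤ s)
    (g : MeasureTheory.Lp ℂ 2 mu01)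
    (hperp : ∀ f ∈ M, (inner ℂ f g : ℂ) = 0)
    (hg0 : ∀ᵐ x ∂mu01, x ∈ Set.Icc 0 s → g x = 0) :
    g = 0 := by
  classical
  -- conjugated inner products
  have hconj_int : ∀ f : MeasureTheory.Lp ℂ 2 mu01, f ∈ M →
      ∫ x, f x * (starRingEnd ℂ) (g x) ∂mu01 = 0 := by
    intro f hf
    have h0 := hperp f hf
    rw [MeasureTheory.L2.inner_def] at h0
    simp only [RCLike.inner_apply] at h0
    calc ∫ x, f x * (starRingEnd ℂ) (g x) ∂mu01
        = ∫ x, (starRingEnd ℂ) ((starRingEnd ℂ) (f x) * g x) ∂mu01 := by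
          refine integral_congr_ae (Filter.Eventually.of_forall fun x => ?_)
          simp only [map_mul, Complex.conj_conj]
      _ = (starRingEnd ℂ) (∫ x, (starRingEnd ℂ) (f x) * g x ∂mu01) := integral_conj
      _ = 0 := by rw [show (∫ x, (starRingEnd ℂ) (f x) * g x ∂mu01) = ∫ a, g a * (starRingEnd ℂ) (f a) ∂mu01 from integral_congr_ae (Filter.Eventually.of_forall fun x => mul_comm _ _), h0, map_zero]
  -- (i) f ⋅ conj g = 0 a.e.
  have hmom1 : ∀ f, f ∈ M → ∀ᵐ x ∂mu01, f x * (starRingEnd ℂ) (g x) = 0 := by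
    intro f hf
    refine moment_zero (integrable_mul_conj f g) fun n => ?_
    obtain ⟨fn, hfnM, hfn⟩ := pow_mem M hMx f hf n
    calc ∫ x, (x:ℂ)^n * (f x * (starRingEnd ℂ) (g x)) ∂mu01
        = ∫ x, fn x * (starRingEnd ℂ) (g x) ∂mu01 := by
          refine integral_congr_ae ?_
          filter_upwards [hfn] with x hx
          rw [hx]; ring
      _ = 0 := hconj_int fn hfnM
  -- integrability of f ⋅ Hg
  have hHgint : ∀ f : MeasureTheory.Lp ℂ 2 mu01,
      Integrable (fun t : ℝ => f t * Hg g t) mu01 := by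
    intro f
    have := Integrable.bdd_mul (c := ∫ x, ‖psi g x‖ ∂volume) (integ f)
      (Hg_continuous g).aestronglyMeasurable
      (Filter.Eventually.of_forall fun t => Hg_bound g t)
    exact this.congr (Filter.Eventually.of_forall fun t => mul_comm _ _)
  -- (ii) f ⋅ Hg = 0 a.e.
  have hmom2 : ∀ f, f ∈ M → ∀ᵐ t ∂mu01, f t * Hg g t = 0 := by
    intro f hf
    refine moment_zero (hHgint f) fun n => ?_
    obtain ⟨fn, hfnM, hfn⟩ := pow_mem M hMx f hf n
    obtain ⟨Fn, hFnM, hFn⟩ := prim_mem M hV fn hfnM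
    have h1 : ∫ x, prim (⇑fn) x * (starRingEnd ℂ) (g x) ∂mu01 = 0 := by
      rw [← hconj_int Fn hFnM]
      refine integral_congr_ae ?_
      filter_upwards [hFn] with x hx
      rw [hx]
    have h2 := fubini_key fn g
    calc ∫ t, (t:ℂ)^n * (f t * Hg g t) ∂mu01
        = ∫ t, fn t * Hg g t ∂mu01 := by
          refine integral_congr_ae ?_
          filter_upwards [hfn] with t ht
          rw [ht]; ring
      _ = 0 := by rw [← h2]; exact h1
  -- f vanishes where Hg ≠ 0
  have hvanHg : ∀ f, f ∈ M → ∀ᵐ t ∂mu01, Hg g t ≠ 0 → f t = 0 := by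
    intro f hf
    filter_upwards [hmom2 f hf] with t ht hne
    rcases mul_eq_zero.mp ht with h | h
    exacts [h, absurd h hne]
  -- primitives vanish where Hg ≠ 0 (pointwise on [0,1])
  have hprimHg : ∀ f, f ∈ M → ∀ x ∈ Set.Icc (0:ℝ) 1, Hg g x ≠ 0 → prim (⇑f) x = 0 := by
    intro f hf
    obtain ⟨F1, hF1M, hF1⟩ := prim_mem M hV f hf
    have hae : ∀ᵐ t ∂mu01, prim (⇑f) t * Hg g t = 0 := by
      filter_upwards [hmom2 F1 hF1M, hF1] with t h1 h3
      rw [← h3]; exact h1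
    have hcontprod : Continuous (fun t => prim (⇑f) t * Hg g t) :=
      (prim_continuous (integ f)).mul (Hg_continuous g)
    have hz := eq_zero_on_Icc hcontprod hae
    intro x hx hne
    rcases mul_eq_zero.mp (hz x hx) with h | h
    exacts [h, absurd h hne]
  -- trivial case s ≥ 1
  by_cases hs1' : 1 ≤ s
  · rw [MeasureTheory.Lp.eq_zero_iff_ae_eq_zero]
    filter_upwards [hg0, mu01_ae_mem] with x h1 h2
    simpa using h1 ⟨h2.1, le_trans h2.2 hs1'⟩
  push_neg at hs1'
  -- Hg vanishes at s
  have hHgs : Hg g s = 0 := by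
    by_contra hne
    obtain ⟨ε, hε, hball⟩ := Metric.isOpen_iff.mp
      (isOpen_compl_iff.mpr (isClosed_eq (Hg_continuous g) continuous_const)) s hne
    set u := min (s + ε/2) 1 with hu
    have hus : s < u := lt_min (by linarith) (by linarith)
    have hvanu : ∀ f ∈ M, ∀ᵐ x ∂mu01, x ∈ Set.Icc 0 u → f x = 0 := by
      intro f hf
      filter_upwards [hvan f hf, hvanHg f hf] with x h1 h2 hmem
      by_cases hxs : x ≤ s
      · exact h1 ⟨hmem.1, hxs⟩
      · push_neg at hxs
        refine h2 (hball ?_)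
        rw [Metric.mem_ball, Real.dist_eq, abs_of_pos (by linarith)]
        have h3 : x ≤ s + ε/2 := le_trans hmem.2 (min_le_left _ _)
        linarith
    exact absurd (hmax u (le_trans hs0 (le_of_lt hus)) (min_le_right _ _) hvanu)
      (not_le.mpr hus)
  -- Hg vanishes on [s,1]
  have hHs : ∀ x ∈ Set.Icc s 1, Hg g x = 0 := by
    intro x₀ hx₀
    by_contra hne
    have hx₀s : s < x₀ := lt_of_le_of_ne hx₀.1 (fun h => hne (h ▸ hHgs))
    set T := Set.Icc s x₀ ∩ {x : ℝ | Hg g x = 0} with hT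
    have hTne : T.Nonempty := ⟨s, ⟨le_refl s, le_of_lt hx₀s⟩, hHgs⟩
    have hTcomp : IsCompact T :=
      isCompact_Icc.inter_right (isClosed_eq (Hg_continuous g) continuous_const)
    set α := sSup T with halpha
    have hαT : α ∈ T := hTcomp.sSup_mem hTne
    have hα1 : α < x₀ := lt_of_le_of_ne hαT.1.2 (fun h => hne (h ▸ hαT.2))
    have hαs : s ≤ α := hαT.1.1
    have hαIcc : α ∈ Set.Icc (0:ℝ) 1 := ⟨le_trans hs0 hαs, le_trans (le_of_lt hα1) hx₀.2⟩
    have hIoc_ne : ∀ y ∈ Set.Ioc α x₀, Hg g y ≠ 0 := by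
      intro y hy hzero
      have : y ∈ T := ⟨⟨le_trans hαs (le_of_lt hy.1), hy.2⟩, hzero⟩
      exact absurd (le_csSup hTcomp.bddAbove this) (not_le.mpr hy.1)
    have hvanx₀ : ∀ f ∈ M, ∀ᵐ x ∂mu01, x ∈ Set.Icc 0 x₀ → f x = 0 := by
      intro f hf
      have hPn : ∀ n : ℕ,
          ∫ x, (x:ℂ)^n * (Set.indicator (Set.Ioc 0 α) (⇑f) x) ∂mu01 = 0 := by
        intro n
        obtain ⟨fn, hfnM, hfn⟩ := pow_mem M hMx f hf n
        have hPzero : prim (⇑fn) α = 0 := by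
          have hEq : Set.EqOn (prim (⇑fn)) 0 (Set.Ioc α x₀) := fun y hy =>
            hprimHg fn hfnM y ⟨le_trans hαIcc.1 (le_of_lt hy.1), le_trans hy.2 hx₀.2⟩
              (hIoc_ne y hy)
          have hEq2 := hEq.closure (prim_continuous (integ fn)) continuous_const
          have hmem : α ∈ closure (Set.Ioc α x₀) := by
            rw [closure_Ioc (ne_of_lt hα1)]
            exact ⟨le_refl α, le_of_lt hα1⟩
          exact hEq2 hmem
        calc ∫ x, (x:ℂ)^n * (Set.indicator (Set.Ioc 0 α) (⇑f) x) ∂mu01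
            = ∫ x, Set.indicator (Set.Ioc 0 α) (fun x : ℝ => (x:ℂ)^n * f x) x ∂mu01 := by
              refine integral_congr_ae (Filter.Eventually.of_forall fun x => ?_)
              simp only [Set.indicator_apply]
              split_ifs
              · rfl
              · rw [mul_zero]
          _ = ∫ x in Set.Ioc 0 α, (x:ℂ)^n * f x ∂mu01 :=
              MeasureTheory.integral_indicator measurableSet_Ioc
          _ = ∫ x in Set.Ioc 0 α, fn x ∂mu01 := by
              refine integral_congr_ae (ae_restrict_of_ae ?_)
              filter_upwards [hfn] with x hx
              rw [hx]
          _ = prim (⇑fn) α := (prim_eq_setIntegral (⇑fn) hαIcc).symm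
          _ = 0 := hPzero
      have hind := moment_zero ((integ f).indicator measurableSet_Ioc) hPn
      filter_upwards [hind, hvanHg f hf, mu01_ae_ne 0] with x hx1 hx2 hx3 hmem
      by_cases hxα : x ≤ α
      · rcases eq_or_lt_of_le hmem.1 with h0 | h0
        · exact absurd h0.symm hx3
        · rwa [Set.indicator_of_mem (Set.mem_Ioc.mpr ⟨h0, hxα⟩)] at hx1
      · push_neg at hxα
        exact hx2 (hIoc_ne x ⟨hxα, hmem.2⟩)
    exact absurd (hmax x₀ (le_trans hs0 hx₀.1) hx₀.2 hvanx₀) (not_le.mpr hx₀s)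
  -- interval integrability of psi
  have hψint : ∀ a b : ℝ, IntervalIntegrable (psi g) volume a b :=
    fun a b => (integrable_psi g).intervalIntegrable
  -- Hg vanishes on [0,s]
  have hH0s : ∀ t ∈ Set.Icc (0:ℝ) s, Hg g t = 0 := by
    intro t htm
    have hsplit : (∫ x in t..s, psi g x) + ∫ x in s..(1:ℝ), psi g x
        = ∫ x in t..(1:ℝ), psi g x :=
      intervalIntegral.integral_add_adjacent_intervals (hψint t s) (hψint s 1)
    have hnull : volume ({x : ℝ | ¬(x ∈ Set.Icc (0:ℝ) s → g x = 0)} ∩ Set.Icc 0 1) = 0 := by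
      have h := hg0
      rw [ae_iff] at h
      exact mu01_null_to_volume h
    have hae : ∀ᵐ x ∂(volume.restrict (Set.Ioc t s)), psi g x = 0 := by
      rw [ae_iff, Measure.restrict_apply' measurableSet_Ioc]
      refine measure_mono_null (fun x hx => ?_) hnull
      obtain ⟨hx1, hx2⟩ := hx
      have hx01 : x ∈ Set.Icc (0:ℝ) 1 := ⟨le_trans htm.1 (le_of_lt hx2.1), le_trans hx2.2 hs1⟩
      refine ⟨fun hcon => hx1 ?_, hx01⟩
      show psi g x = 0
      rw [psi, hat, Set.indicator_of_mem hx01, hcon ⟨hx01.1, hx2.2⟩, map_zero]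
    have h1 : ∫ x in t..s, psi g x = 0 := by
      rw [intervalIntegral.integral_of_le htm.2]
      exact MeasureTheory.integral_eq_zero_of_ae hae
    have h2 := hsplit
    rw [h1, zero_add] at h2
    calc Hg g t = ∫ x in t..(1:ℝ), psi g x := rfl
      _ = ∫ x in s..(1:ℝ), psi g x := h2.symm
      _ = Hg g s := rfl
      _ = 0 := hHgs
  -- Hg vanishes everywhere
  have hH0 : ∀ t : ℝ, Hg g t = 0 := by
    intro t
    rcases le_or_gt t 0 with htneg | htpos
    · have hsplit : (∫ x in t..(0:ℝ), psi g x) + ∫ x in (0:ℝ)..1, psi g x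
          = ∫ x in t..(1:ℝ), psi g x :=
        intervalIntegral.integral_add_adjacent_intervals (hψint t 0) (hψint 0 1)
      have h1 : ∫ x in t..(0:ℝ), psi g x = 0 := by
        rw [intervalIntegral.integral_of_le htneg, integral_Ioc_eq_integral_Ioo]
        have hptw : ∀ x ∈ Set.Ioo t (0:ℝ), psi g x = 0 := fun x hx => by
          rw [psi, hat, Set.indicator_of_notMem
            (fun hc => absurd hc.1 (not_le.mpr hx.2)), map_zero]
        calc ∫ x in Set.Ioo t (0:ℝ), psi g x ∂volume
            = ∫ _x in Set.Ioo t (0:ℝ), (0:ℂ) ∂volume :=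
              setIntegral_congr_fun measurableSet_Ioo hptw
          _ = 0 := by simp
      have h2 : Hg g 0 = 0 := hH0s 0 ⟨le_refl 0, hs0⟩
      have h3 := hsplit
      rw [h1, zero_add] at h3
      calc Hg g t = ∫ x in t..(1:ℝ), psi g x := rfl
        _ = ∫ x in (0:ℝ)..1, psi g x := h3.symm
        _ = Hg g 0 := rfl
        _ = 0 := h2
    · rcases le_or_gt t s with hts | hts
      · exact hH0s t ⟨le_of_lt htpos, hts⟩
      · rcases le_or_gt t 1 with ht1 | ht1
        · exact hHs t ⟨le_of_lt hts, ht1⟩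
        · have : ∫ x in (1:ℝ)..t, psi g x = 0 := by
            rw [intervalIntegral.integral_of_le (le_of_lt ht1), integral_Ioc_eq_integral_Ioo]
            have hptw : ∀ x ∈ Set.Ioo (1:ℝ) t, psi g x = 0 := fun x hx => by
              rw [psi, hat, Set.indicator_of_notMem
                (fun hc => absurd hc.2 (not_le.mpr hx.1)), map_zero]
            calc ∫ x in Set.Ioo (1:ℝ) t, psi g x ∂volume
                = ∫ _x in Set.Ioo (1:ℝ) t, (0:ℂ) ∂volume :=
                  setIntegral_congr_fun measurableSet_Ioo hptw
              _ = 0 := by simp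
          calc Hg g t = ∫ x in t..(1:ℝ), psi g x := rfl
            _ = -∫ x in (1:ℝ)..t, psi g x := intervalIntegral.integral_symm 1 t
            _ = 0 := by rw [this, neg_zero]
  -- all interval integrals of psi vanish
  have hAll : ∀ a b : ℝ, ∫ x in a..b, psi g x = 0 := by
    intro a b
    have hsplit : (∫ x in a..(1:ℝ), psi g x) + ∫ x in (1:ℝ)..b, psi g x
        = ∫ x in a..b, psi g x :=
      intervalIntegral.integral_add_adjacent_intervals (hψint a 1) (hψint 1 b)
    rw [← hsplit]
    have h1 : ∫ x in a..(1:ℝ), psi g x = 0 := hH0 a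
    have h2 : ∫ x in (1:ℝ)..b, psi g x = 0 := by
      rw [intervalIntegral.integral_symm]
      rw [show (∫ x in b..(1:ℝ), psi g x) = Hg g b from rfl, hH0 b, neg_zero]
    rw [h1, h2, add_zero]
  have hψ0 := ae_zero_of_intervals (integrable_psi g) hAll
  rw [MeasureTheory.Lp.eq_zero_iff_ae_eq_zero]
  filter_upwards [mu01_ae_mem, ae_mu01_of_ae_volume hψ0] with x hx h1
  rw [psi, starRingEnd_apply, star_eq_zero, hat, Set.indicator_of_mem hx] at h1
  simpa using h1

end BBD

/-- **Baby Brodskii–Donoghue theorem.** Let `M` be a closed subspace of `L²[0,1]`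
that is invariant under the multiplication operator `M_x` (if `f ∈ M` and
`g ∈ L²[0,1]` represents `x ↦ x·f(x)` then `g ∈ M`) and under the Volterra
operator `V` (if `f ∈ M` and `g` represents `x ↦ ∫₀ˣ f(t) dt` then `g ∈ M`).
Then `M = L²[s,1]`, the set of functions vanishing a.e. on `[0,s]`, for some
`s ∈ [0,1]`. -/
theorem baby_brodskii_donoghue (M : Submodule ℂ (Lp ℂ 2 mu01))
    (hclosed : IsClosed (M : Set (Lp ℂ 2 mu01)))
    (hMx : ∀ f ∈ M, ∀ g : Lp ℂ 2 mu01,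
      ((g : ℝ → ℂ) =ᵐ[mu01] fun x => (x : ℂ) * f x) → g ∈ M)
    (hV : ∀ f ∈ M, ∀ g : Lp ℂ 2 mu01,
      ((g : ℝ → ℂ) =ᵐ[mu01] fun x => ∫ t in (0 : ℝ)..x, f t) → g ∈ M) :
    ∃ s ∈ Set.Icc (0 : ℝ) 1,
      (M : Set (Lp ℂ 2 mu01)) =
        {f : Lp ℂ 2 mu01 | ∀ᵐ x ∂mu01, x ∈ Set.Icc 0 s → f x = 0} := by
  classical
  set S : Set ℝ :=
    {t : ℝ | t ∈ Set.Icc (0:ℝ) 1 ∧ ∀ f ∈ M, ∀ᵐ x ∂mu01, x ∈ Set.Icc 0 t → f x = 0}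
    with hS
  have h0S : (0:ℝ) ∈ S := by
    refine ⟨⟨le_refl 0, zero_le_one⟩, fun f hf => ?_⟩
    rw [ae_iff]
    refine measure_mono_null (fun x hx => ?_) (BBD.mu01_null_singleton 0)
    have hx1 : x ∈ Set.Icc (0:ℝ) 0 := (_root_.not_imp.mp hx).1
    have : x = 0 := le_antisymm hx1.2 hx1.1
    simp [this]
  have hbdd : BddAbove S := ⟨1, fun t ht => ht.1.2⟩
  set s := sSup S with hsdef
  have hs0 : 0 ≤ s := le_csSup hbdd h0S
  have hs1 : s ≤ 1 := csSup_le ⟨0, h0S⟩ (fun t ht => ht.1.2)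
  have hvan : ∀ f ∈ M, ∀ᵐ x ∂mu01, x ∈ Set.Icc 0 s → f x = 0 := by
    intro f hf
    have hch : ∀ k : ℕ, ∃ t ∈ S, s - 1/((k:ℝ)+1) < t := by
      intro k
      refine exists_lt_of_lt_csSup ⟨0, h0S⟩ ?_
      have : 0 < 1/((k:ℝ)+1) := by positivity
      linarith
    choose tk htkS htk using hch
    filter_upwards [ae_all_iff.mpr (fun k => (htkS k).2 f hf), BBD.mu01_ae_ne s]
      with x hx hxs hmem
    rcases lt_or_eq_of_le hmem.2 with hlt | heq
    · obtain ⟨k, hk⟩ := exists_nat_one_div_lt (by linarith : 0 < s - x)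
      refine hx k ⟨hmem.1, ?_⟩
      have h2 := htk k
      linarith
    · exact absurd heq hxs
  have hmax : ∀ u : ℝ, 0 ≤ u → u ≤ 1 →
      (∀ f ∈ M, ∀ᵐ x ∂mu01, x ∈ Set.Icc 0 u → f x = 0) → u ≤ s :=
    fun u hu0 hu1 hvu => le_csSup hbdd ⟨⟨hu0, hu1⟩, hvu⟩
  refine ⟨s, ⟨hs0, hs1⟩, ?_⟩
  ext F
  simp only [Set.mem_setOf_eq, SetLike.mem_coe]
  constructor
  · exact fun hF => hvan F hF
  · intro hF
    haveI : CompleteSpace M := hclosed.completeSpace_coe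
    set w := Submodule.orthogonalProjection M F with hw
    have hwM : (w : Lp ℂ 2 mu01) ∈ M := SetLike.coe_mem w
    have hperp := Submodule.sub_starProjection_mem_orthogonal (K := M) F
    have hd0 : ∀ᵐ x ∂mu01, x ∈ Set.Icc 0 s → (F - (w : Lp ℂ 2 mu01)) x = 0 := by
      filter_upwards [hF, hvan _ hwM, MeasureTheory.Lp.coeFn_sub F (w : Lp ℂ 2 mu01)]
        with x h1 h2 h3 hmem
      rw [h3]
      simp [h1 hmem, h2 hmem]
    have hperp' : ∀ f ∈ M, (inner ℂ f (F - (w : Lp ℂ 2 mu01)) : ℂ) = 0 :=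
      fun f hf => (Submodule.mem_orthogonal M _).mp hperp f hf
    have hzero := BBD.crux M hMx hV hs0 hs1 hvan hmax (F - (w : Lp ℂ 2 mu01)) hperp' hd0
    have hFw : F = (w : Lp ℂ 2 mu01) := sub_eq_zero.mp hzero
    rw [hFw]
    exact hwM
end
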